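/- arXiv:math/9711222 — 7 statements merged into one kernel-verified Lean document; each statement's English description precedes it below -/
import Mathlib

section
/- κ* ≥ non(𝒮ℳ): the supremum over f of the dominating numbers of the infinitely-equal relations R^∃_f is at least the least cardinality of a subset of the Cantor space that is not strongly meager. -/
open Cardinal MeasureTheory Set Filter Pointwise

/-- The Cantor space `2^ω` as the additive group `ℕ → ZMod 2`
(coordinatewise addition modulo 2). -/
abbrev Cantor : Type := ℕ → ZMod 2

instance : TopologicalSpace (ZMod 2) := ⊥
instance : DiscreteTopology (ZMod 2) := ⟨rfl⟩
noncomputable instance : MeasurableSpace Cantor := borel _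
instance : BorelSpace Cantor := ⟨rfl⟩

/-- The uniform product probability measure on `2^ω`, i.e. the normalized Haar measure of the
compact group `ℕ → ZMod 2`. -/
noncomputable def cantorMeasure : Measure Cantor :=
  Measure.addHaarMeasure (⊤ : TopologicalSpace.PositiveCompacts Cantor)

/-- `X ⊆ 2^ω` is strongly meager iff `X + H ≠ 2^ω` for every measure-zero `H`. -/
def StronglyMeager (X : Set Cantor) : Prop :=
  ∀ H : Set Cantor, cantorMeasure H = 0 → X + H ≠ Set.univ

/-- `non(𝒮ℳ)`: the least cardinality of a subset of `2^ω` that is not strongly meager. -/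
noncomputable def nonSM : Cardinal :=
  sInf { c : Cardinal | ∃ X : Set Cantor, #X = c ∧ ¬ StronglyMeager X }

/-- The dominating number of a relation `R ⊆ A × B`. -/
noncomputable def dNumber {A B : Type} (R : A → B → Prop) : Cardinal :=
  sInf { c : Cardinal | ∃ Y : Set B, #Y = c ∧ ∀ x : A, ∃ y ∈ Y, R x y }

/-- The infinitely-equal relation `R^∃_f` on `S_f = ∏ n, f n`. -/
def REx (f : ℕ → ℕ) (η₀ η₁ : ∀ n, Fin (f n)) : Prop := {n | η₀ n = η₁ n}.Infinite

/-- `κ* = sup { 𝔡(R^∃_f) : f ∈ (ω \ {0})^ω }`. -/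
noncomputable def kappaStar : Cardinal :=
  ⨆ f : {f : ℕ → ℕ // ∀ n, 0 < f n}, dNumber (REx f.1)

/-! ### Auxiliary setup -/

instance : ContinuousAdd (ZMod 2) := ⟨continuous_of_discreteTopology⟩
instance : IsTopologicalAddGroup (ZMod 2) :=
  { continuous_neg := continuous_of_discreteTopology }

/-- The index type: a disjoint union of blocks, block `n` having size `n+1`. -/
abbrev KS.T : Type := Σ n : ℕ, Fin (n+1)

instance : Infinite KS.T := Infinite.of_injective (fun n => (⟨n, 0⟩ : KS.T))
  (fun _ _ h => congrArg Sigma.fst h)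

noncomputable instance : Denumerable KS.T := Denumerable.ofEncodableOfInfinite _

namespace KS

/-- An identification of the blocks with `ℕ`. -/
noncomputable def e : T ≃ ℕ := Denumerable.eqv T

def b2z : Fin 2 → ZMod 2 := fun b => b
def z2b : ZMod 2 → Fin 2 := fun z => z

lemma b2z_z2b (z : ZMod 2) : b2z (z2b z) = z := rfl

/-- Our fixed `f`: `f n = 2^(n+1)`. -/
def F : ℕ → ℕ := fun n => 2 ^ (n+1)

lemma F_pos (n : ℕ) : 0 < F n := Nat.pow_pos (by norm_num)

/-- Slice a Cantor point into blocks. -/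
noncomputable def pack (w : Cantor) : ∀ n, Fin (F n) :=
  fun n => finFunctionFinEquiv (fun j : Fin (n+1) => z2b (w (e ⟨n, j⟩)))

/-- Reassemble a sequence of blocks into a Cantor point. -/
noncomputable def unpack (y : ∀ n, Fin (F n)) : Cantor :=
  fun m => b2z ((finFunctionFinEquiv.symm (y (e.symm m).1)) (e.symm m).2)

lemma unpack_eq {y : ∀ n, Fin (F n)} {w : Cantor} {n : ℕ} (h : pack w n = y n)
    (j : Fin (n+1)) : unpack y (e ⟨n, j⟩) = w (e ⟨n, j⟩) := by
  unfold unpack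
  rw [Equiv.symm_apply_apply, ← h]
  unfold pack
  rw [Equiv.symm_apply_apply]
  rfl

/-- The basic null cylinders: all coordinates of block `n` vanish. -/
def C (n : ℕ) : Set Cantor := {z | ∀ j : Fin (n+1), z (e ⟨n, j⟩) = 0}

lemma isClosed_C (n : ℕ) : IsClosed (C n) := by
  have : C n = ⋂ j : Fin (n+1), (fun z : Cantor => z (e ⟨n, j⟩)) ⁻¹' {0} := by
    ext z; simp [C]
  rw [this]
  exact isClosed_iInter fun j => isClosed_singleton.preimage (continuous_apply _)

lemma cantorMeasure_univ : cantorMeasure (univ : Set Cantor) = 1 := by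
  rw [cantorMeasure, ← TopologicalSpace.PositiveCompacts.coe_top (α := Cantor)]
  exact MeasureTheory.Measure.addHaarMeasure_self

lemma zmod2_add_self : ∀ a : ZMod 2, a + a = 0 := by decide

lemma zmod2_add_eq_zero : ∀ {a b : ZMod 2}, a + b = 0 → b = a := by decide

/-- Translating points used to tile the whole space by copies of `C n`. -/
noncomputable def extFun (n : ℕ) (s : Fin (n+1) → ZMod 2) : Cantor := fun m =>
  ∑ j : Fin (n+1), if e ⟨n, j⟩ = m then s j else 0

lemma extFun_apply (n : ℕ) (s : Fin (n+1) → ZMod 2) (j : Fin (n+1)) :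
    extFun n s (e ⟨n, j⟩) = s j := by
  unfold extFun
  rw [Finset.sum_eq_single j]
  · rw [if_pos rfl]
  · intro j' _ hj'
    rw [if_neg]
    intro hc
    exact hj' (by simpa using e.injective hc)
  · intro hj
    exact absurd (Finset.mem_univ j) hj

instance : cantorMeasure.IsAddLeftInvariant := by
  unfold cantorMeasure
  infer_instance

lemma cantorMeasure_C (n : ℕ) : cantorMeasure (C n) = ((2:ENNReal) ^ (n+1))⁻¹ := by
  classical
  set Tr : (Fin (n+1) → ZMod 2) → Set Cantor :=
    fun s => (fun z => extFun n s + z) ⁻¹' C n with hTrdef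
  have hTr : ∀ s z, z ∈ Tr s ↔ ∀ j : Fin (n+1), z (e ⟨n, j⟩) = s j := by
    intro s z
    have hz : z ∈ Tr s ↔ ∀ j : Fin (n+1), extFun n s (e ⟨n, j⟩) + z (e ⟨n, j⟩) = 0 := Iff.rfl
    rw [hz]
    constructor
    · intro h j
      have := h j
      rw [extFun_apply] at this
      exact zmod2_add_eq_zero this
    · intro h j
      rw [extFun_apply, h j]
      exact zmod2_add_self _
  have hcov : ⋃ s, Tr s = (Set.univ : Set Cantor) := by
    apply eq_univ_of_forall
    intro z
    exact mem_iUnion.2 ⟨fun j => z (e ⟨n, j⟩), (hTr _ z).2 fun j => rfl⟩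
  have hdisj : Pairwise (Function.onFun Disjoint Tr) := by
    intro s s' hss
    show Disjoint (Tr s) (Tr s')
    rw [Set.disjoint_left]
    intro z hz hz'
    exact hss (funext fun j => ((hTr s z).1 hz j).symm.trans ((hTr s' z).1 hz' j))
  have hmeasTr : ∀ s, MeasurableSet (Tr s) := by
    intro s
    exact ((isClosed_C n).preimage (continuous_const.add continuous_id)).measurableSet
  have hinv : ∀ s, cantorMeasure (Tr s) = cantorMeasure (C n) := by
    intro s
    exact measure_preimage_add _ _ _
  have key : (1:ENNReal) = (2:ENNReal) ^ (n+1) * cantorMeasure (C n) := by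
    have := measure_iUnion (μ := cantorMeasure) hdisj hmeasTr
    rw [hcov, cantorMeasure_univ] at this
    rw [this, tsum_fintype]
    simp only [hinv]
    rw [Finset.sum_const, Finset.card_univ, nsmul_eq_mul]
    congr 1
    rw [Fintype.card_fun]
    push_cast
    norm_num
  have h2 : ((2:ENNReal) ^ (n+1)) ≠ 0 := by positivity
  have h2' : ((2:ENNReal) ^ (n+1)) ≠ ⊤ := by
    exact ENNReal.pow_ne_top (by norm_num)
  calc cantorMeasure (C n) = ((2:ENNReal)^(n+1))⁻¹ * ((2:ENNReal)^(n+1) * cantorMeasure (C n)) := by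
        rw [← mul_assoc, ENNReal.inv_mul_cancel h2 h2', one_mul]
    _ = ((2:ENNReal)^(n+1))⁻¹ := by rw [← key, mul_one]

/-- The null set `H`: points vanishing on infinitely many blocks. -/
noncomputable def H : Set Cantor := limsup C atTop

lemma cantorMeasure_H : cantorMeasure H = 0 := by
  apply measure_limsup_atTop_eq_zero
  have : ∑' n, cantorMeasure (C n) = ∑' n : ℕ, (2:ENNReal)⁻¹ ^ (n+1) := by
    congr 1; funext n; rw [cantorMeasure_C, ← ENNReal.inv_pow]
  rw [this, ENNReal.tsum_geometric_add_one]
  intro htop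
  exact (by norm_num : ((2:ENNReal))⁻¹ * (1 - 2⁻¹)⁻¹ ≠ ⊤) htop

lemma mem_H_of_infinite {z : Cantor} (h : {n | z ∈ C n}.Infinite) : z ∈ H := by
  rw [H, mem_limsup_iff_frequently_mem]
  exact Nat.frequently_atTop_iff_infinite.2 h

lemma unpack_add_mem_H {w : Cantor} {y : ∀ n, Fin (F n)} (h : {n | pack w n = y n}.Infinite) :
    w + unpack y ∈ H := by
  apply mem_H_of_infinite
  apply Set.Infinite.mono _ h
  intro n hn
  intro j
  show w (e ⟨n, j⟩) + unpack y (e ⟨n, j⟩) = 0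
  rw [unpack_eq hn j]
  exact zmod2_add_self _

end KS

/-- `κ* ≥ non(𝒮ℳ)`. -/
theorem kappaStar_ge_nonSM : nonSM ≤ kappaStar := by
  have key : nonSM ≤ dNumber (REx KS.F) := by
    apply le_csInf
    · -- the defining set of the dominating number is nonempty
      refine ⟨#(Set.univ : Set (∀ n, Fin (KS.F n))), Set.univ, rfl, fun x => ⟨x, Set.mem_univ x, ?_⟩⟩
      simpa [REx] using Set.infinite_univ (α := ℕ)
    · rintro c ⟨Y, hYcard, hdom⟩
      -- build a non-strongly-meager set of cardinality at most `c`
      set X : Set Cantor := KS.unpack '' Y with hX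
      have hXH : X + KS.H = (Set.univ : Set Cantor) := by
        apply eq_univ_of_forall
        intro w
        obtain ⟨y, hyY, hrel⟩ := hdom (KS.pack w)
        have hmem : w + KS.unpack y ∈ KS.H := KS.unpack_add_mem_H hrel
        have hsum : KS.unpack y + (w + KS.unpack y) = w := by
          funext m
          show KS.unpack y m + (w m + KS.unpack y m) = w m
          rw [add_comm (w m), ← add_assoc, KS.zmod2_add_self, zero_add]
        have := Set.add_mem_add (Set.mem_image_of_mem KS.unpack hyY) hmem
        rwa [hsum] at this
      have hnotSM : ¬ StronglyMeager X := fun hSM => hSM KS.H KS.cantorMeasure_H hXH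
      have h1 : nonSM ≤ #X := csInf_le (OrderBot.bddBelow _) ⟨X, rfl, hnotSM⟩
      exact h1.trans (hYcard ▸ Cardinal.mk_image_le)
  exact key.trans (le_ciSup (Cardinal.bddAbove_range _) (⟨KS.F, KS.F_pos⟩ :
    {f : ℕ → ℕ // ∀ n, 0 < f n}))
end

section
/- cov*(𝒩) ≤ non(ℳ). -/
open Cardinal MeasureTheory Set Filter Topology ENNReal

noncomputable section

namespace CovAux

/-- Codes for open rational rectangles. -/
abbrev RCode := ℚ × ℚ × ℚ × ℚ

/-- The open rectangle coded by `r`. -/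
def rect (r : RCode) : Set (ℝ × ℝ) :=
  Ioo (r.1 : ℝ) (r.2.1 : ℝ) ×ˢ Ioo (r.2.2.1 : ℝ) (r.2.2.2 : ℝ)

lemma isOpen_rect (r : RCode) : IsOpen (rect r) := isOpen_Ioo.prod isOpen_Ioo

/-- Finite union of rational rectangles. -/
def uOf (s : Finset RCode) : Set (ℝ × ℝ) := ⋃ r ∈ s, rect r

lemma isOpen_uOf (s : Finset RCode) : IsOpen (uOf s) :=
  isOpen_biUnion fun r _ => isOpen_rect r

/-- Decode a natural number to a finite set of rectangle codes. -/
def decodeC (k : ℕ) : Finset RCode := (Encodable.decode (α := Finset RCode) k).getD ∅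

lemma decodeC_encode (s : Finset RCode) : decodeC (Encodable.encode s) = s := by
  simp [decodeC, Encodable.encodek]

open Classical in
/-- The `k`-th candidate set at level `n`: a finite union of rational rectangles,
truncated to `∅` if its volume exceeds `2⁻¹ ^ n`. -/
def Sset (n k : ℕ) : Set (ℝ × ℝ) :=
  if volume (uOf (decodeC k)) ≤ 2⁻¹ ^ n then uOf (decodeC k) else ∅

lemma isOpen_Sset (n k : ℕ) : IsOpen (Sset n k) := by
  unfold Sset; split
  · exact isOpen_uOf _
  · exact isOpen_empty

lemma vol_Sset_le (n k : ℕ) : volume (Sset n k) ≤ 2⁻¹ ^ n := by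
  unfold Sset; split
  · assumption
  · simp

/-- The null set coded by a sequence of guesses `σ`. -/
def Hset (σ : ℕ → ℕ) : Set (ℝ × ℝ) :=
  ⋂ N : ℕ, ⋃ (n : ℕ) (_ : N ≤ n), Sset n (σ n)

lemma vol_Hset (σ : ℕ → ℕ) : volume (Hset σ) = 0 := by
  have key : ∀ N : ℕ, volume (Hset σ) ≤ 2⁻¹ ^ N * 2 := by
    intro N
    have h1 : Hset σ ⊆ ⋃ m : ℕ, Sset (N + m) (σ (N + m)) := by
      intro p hp
      have h2 := mem_iInter.1 hp N
      rcases mem_iUnion₂.1 h2 with ⟨n, hn, hpn⟩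
      exact mem_iUnion.2 ⟨n - N, by rwa [Nat.add_sub_cancel' hn]⟩
    calc volume (Hset σ) ≤ ∑' m : ℕ, volume (Sset (N + m) (σ (N + m))) :=
          (measure_mono h1).trans (measure_iUnion_le _)
      _ ≤ ∑' m : ℕ, 2⁻¹ ^ (N + m) := ENNReal.tsum_le_tsum fun m => vol_Sset_le _ _
      _ = 2⁻¹ ^ N * 2 := by
          simp_rw [pow_add]
          rw [ENNReal.tsum_mul_left, ENNReal.tsum_geometric, ENNReal.one_sub_inv_two, inv_inv]
  have T : Tendsto (fun N : ℕ => (2⁻¹ : ℝ≥0∞) ^ N * 2) atTop (𝓝 0) := by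
    have h := ENNReal.tendsto_pow_atTop_nhds_zero_of_lt_one
      (by norm_num : (2⁻¹ : ℝ≥0∞) < 1)
    simpa using ENNReal.Tendsto.mul_const h (Or.inr (by norm_num))
  exact le_antisymm (ge_of_tendsto' T key) (zero_le)

lemma exists_rect {U : Set (ℝ × ℝ)} (hU : IsOpen U) {p : ℝ × ℝ} (hp : p ∈ U) :
    ∃ r : RCode, p ∈ rect r ∧ rect r ⊆ U := by
  obtain ⟨u, v, hu, hv, hpu, hpv, huv⟩ := isOpen_prod_iff.1 hU p.1 p.2 (by simpa using hp)
  obtain ⟨δ, hδ, hball⟩ := Metric.isOpen_iff.1 hu p.1 hpu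
  obtain ⟨δ', hδ', hball'⟩ := Metric.isOpen_iff.1 hv p.2 hpv
  obtain ⟨a, ha1, ha2⟩ := exists_rat_btwn (show p.1 - δ < p.1 by linarith)
  obtain ⟨b, hb1, hb2⟩ := exists_rat_btwn (show p.1 < p.1 + δ by linarith)
  obtain ⟨c, hc1, hc2⟩ := exists_rat_btwn (show p.2 - δ' < p.2 by linarith)
  obtain ⟨d, hd1, hd2⟩ := exists_rat_btwn (show p.2 < p.2 + δ' by linarith)
  refine ⟨(a, b, c, d), ⟨⟨ha2, hb1⟩, ⟨hc2, hd1⟩⟩, ?_⟩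
  rintro ⟨x, y⟩ ⟨⟨hx1, hx2⟩, ⟨hy1, hy2⟩⟩
  apply huv
  constructor
  · apply hball; rw [Real.ball_eq_Ioo]
    exact ⟨by push_cast at hx1 ⊢; linarith, by push_cast at hx2 ⊢; linarith⟩
  · apply hball'; rw [Real.ball_eq_Ioo]
    exact ⟨by push_cast at hy1 ⊢; linarith, by push_cast at hy2 ⊢; linarith⟩

/-- Key guessing lemma: for any measurable `f` and `B` of positive finite measure,
at every level `n` some code catches more than half of `B`. -/
lemma exists_code {f : ℝ → ℝ} (hf : Measurable f) {B : Set ℝ} (hB : MeasurableSet B)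
    (h0 : volume B ≠ 0) (hfin : volume B ≠ ∞) (n : ℕ) :
    ∃ k : ℕ, volume B / 2 < volume {x | x ∈ B ∧ (x, f x) ∈ Sset n k} := by
  classical
  set Γ : Set (ℝ × ℝ) := (Prod.fst ⁻¹' B) ∩ {p : ℝ × ℝ | f p.1 = p.2} with hΓdef
  have hΓm : MeasurableSet Γ :=
    (measurable_fst hB).inter (measurableSet_eq_fun (hf.comp measurable_fst) measurable_snd)
  have hΓ0 : volume Γ = 0 := by
    rw [Measure.volume_eq_prod, Measure.measure_prod_null hΓm]
    refine ae_of_all _ fun x => ?_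
    refine measure_mono_null (fun y hy => ?_) (measure_singleton (f x))
    rcases hy with ⟨-, h2⟩
    exact h2.symm
  have hΓlt : volume Γ < 2⁻¹ ^ n := by
    rw [hΓ0]; exact ENNReal.pow_pos (by norm_num) n
  obtain ⟨U, hΓU, hUopen, hUvol⟩ := Set.exists_isOpen_lt_of_lt Γ _ hΓlt
  -- enumerate rectangles contained in U
  set g : ℕ → Set (ℝ × ℝ) := fun i =>
    if rect (Denumerable.ofNat RCode i) ⊆ U then rect (Denumerable.ofNat RCode i) else ∅
    with hgdef
  have hgU : (⋃ i, g i) = U := by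
    apply Subset.antisymm
    · refine iUnion_subset fun i => ?_
      simp only [hgdef]; split
      · assumption
      · exact empty_subset _
    · intro p hp
      obtain ⟨r, hpr, hrU⟩ := exists_rect hUopen hp
      obtain ⟨i, hi⟩ : ∃ i, Denumerable.ofNat RCode i = r := ⟨_, Denumerable.ofNat_encode r⟩
      refine mem_iUnion.2 ⟨i, ?_⟩
      have hg : g i = rect r := by
        simp only [hgdef]
        rw [hi, if_pos hrU]
      rw [hg]
      exact hpr
  -- monotone family of traces
  set F : ℕ → Set ℝ := fun K => {x | x ∈ B ∧ (x, f x) ∈ ⋃ i ∈ Finset.range K, g i} with hFdef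
  have hFmono : Monotone F := by
    intro K L hKL x hx
    refine ⟨hx.1, ?_⟩
    rcases mem_iUnion₂.1 hx.2 with ⟨i, hi, hxi⟩
    exact mem_iUnion₂.2 ⟨i, Finset.mem_range.2 ((Finset.mem_range.1 hi).trans_le hKL), hxi⟩
  have hFU : (⋃ K, F K) = B := by
    apply Subset.antisymm
    · exact iUnion_subset fun K x hx => hx.1
    · intro x hx
      have hxU : (x, f x) ∈ U := hΓU ⟨hx, rfl⟩
      rw [← hgU] at hxU
      rcases mem_iUnion.1 hxU with ⟨i, hi⟩
      exact mem_iUnion.2 ⟨i + 1, hx, mem_iUnion₂.2 ⟨i, Finset.mem_range.2 (Nat.lt_succ_self i), hi⟩⟩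
  have hsup : (⨆ K, volume (F K)) = volume B := by rw [← hFU, hFmono.measure_iUnion]
  have hhalf : volume B / 2 < ⨆ K, volume (F K) := by
    rw [hsup]; exact ENNReal.half_lt_self h0 hfin
  obtain ⟨K, hK⟩ := lt_iSup_iff.1 hhalf
  -- turn the partial union into a code
  set s : Finset RCode :=
    ((Finset.range K).image (Denumerable.ofNat RCode)).filter (fun r => rect r ⊆ U) with hsdef
  have hseq : uOf s = ⋃ i ∈ Finset.range K, g i := by
    ext p
    simp only [uOf, mem_iUnion, hsdef, Finset.mem_filter, Finset.mem_image, Finset.mem_range,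
      hgdef]
    constructor
    · rintro ⟨r, ⟨⟨i, hi, rfl⟩, hrU⟩, hpr⟩
      exact ⟨i, hi, by rwa [if_pos hrU]⟩
    · rintro ⟨i, hi, hpi⟩
      by_cases hrU : rect (Denumerable.ofNat RCode i) ⊆ U
      · exact ⟨Denumerable.ofNat RCode i, ⟨⟨i, hi, rfl⟩, hrU⟩, by rwa [if_pos hrU] at hpi⟩
      · rw [if_neg hrU] at hpi; exact absurd hpi (notMem_empty p)
  have hsub : uOf s ⊆ U := by
    rw [hseq]
    refine iUnion₂_subset fun i _ => ?_
    simp only [hgdef]; split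
    · assumption
    · exact empty_subset _
  have hvol : volume (uOf s) ≤ 2⁻¹ ^ n := (measure_mono hsub).trans hUvol.le
  refine ⟨Encodable.encode s, ?_⟩
  have hS : Sset n (Encodable.encode s) = uOf s := by
    rw [Sset, decodeC_encode, if_pos hvol]
  rw [hS, hseq]
  exact hK

/-! ### The guessing function `phi` -/

/-- Open sets on which `phi · n = k`. -/
def Wset (n k : ℕ) : Set ℝ :=
  ⋃ j : ℤ, Ioo (((j : ℝ) + (2 : ℝ)⁻¹ ^ (k + 1)) / 2 ^ n) (((j : ℝ) + (2 : ℝ)⁻¹ ^ k) / 2 ^ n)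

lemma isOpen_Wset (n k : ℕ) : IsOpen (Wset n k) := isOpen_iUnion fun _ => isOpen_Ioo

open Classical in
/-- The guessing function. -/
def phi (t : ℝ) (n : ℕ) : ℕ :=
  if h : ∃ k : ℕ, Int.fract (2 ^ n * t) ∈ Ioo ((2 : ℝ)⁻¹ ^ (k + 1)) ((2 : ℝ)⁻¹ ^ k) then
    h.choose else 0

lemma fract_mem_of_mem_Wset {t : ℝ} {n k : ℕ} (h : t ∈ Wset n k) :
    Int.fract (2 ^ n * t) ∈ Ioo ((2 : ℝ)⁻¹ ^ (k + 1)) ((2 : ℝ)⁻¹ ^ k) := by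
  rcases mem_iUnion.1 h with ⟨j, hj1, hj2⟩
  have hpow : (0 : ℝ) < 2 ^ n := by positivity
  have h1 : (j : ℝ) + (2 : ℝ)⁻¹ ^ (k + 1) < 2 ^ n * t := by
    rw [div_lt_iff₀ hpow] at hj1; linarith [hj1]
  have h2 : 2 ^ n * t < (j : ℝ) + (2 : ℝ)⁻¹ ^ k := by
    rw [lt_div_iff₀ hpow] at hj2; linarith [hj2]
  have hk1 : (0 : ℝ) < (2 : ℝ)⁻¹ ^ (k + 1) := by positivity
  have hk2 : (2 : ℝ)⁻¹ ^ k ≤ 1 := pow_le_one₀ (by norm_num) (by norm_num)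
  have hfr : Int.fract (2 ^ n * t) = 2 ^ n * t - j := by
    rw [← Int.fract_sub_intCast (2 ^ n * t) j]
    exact Int.fract_eq_self.2 ⟨by linarith, by linarith⟩
  rw [hfr]
  exact ⟨by linarith, by linarith⟩

lemma phi_eq_of_mem_Wset {t : ℝ} {n k : ℕ} (h : t ∈ Wset n k) : phi t n = k := by
  classical
  have hmem := fract_mem_of_mem_Wset h
  have hex : ∃ k : ℕ, Int.fract (2 ^ n * t) ∈ Ioo ((2 : ℝ)⁻¹ ^ (k + 1)) ((2 : ℝ)⁻¹ ^ k) :=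
    ⟨k, hmem⟩
  rw [phi, dif_pos hex]
  have hspec := hex.choose_spec
  set k' := hex.choose
  by_contra hne
  rcases lt_or_gt_of_ne hne with hlt | hlt
  · have : (2 : ℝ)⁻¹ ^ k ≤ (2 : ℝ)⁻¹ ^ (k' + 1) :=
      pow_le_pow_of_le_one (by norm_num) (by norm_num) hlt
    have := hmem.2.trans_le this
    exact absurd (this.trans hspec.1) (lt_irrefl _)
  · have : (2 : ℝ)⁻¹ ^ k' ≤ (2 : ℝ)⁻¹ ^ (k + 1) :=
      pow_le_pow_of_le_one (by norm_num) (by norm_num) hlt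
    have := hspec.2.trans_le this
    exact absurd (this.trans hmem.1) (lt_irrefl _)

lemma dense_union_Wset (N : ℕ) (k : ℕ → ℕ) :
    Dense (⋃ (n : ℕ) (_ : N ≤ n), Wset n (k n)) := by
  rw [dense_iff_exists_between]
  intro a b hab
  -- pick n ≥ N with 2 * (2 ^ n)⁻¹ < b - a
  obtain ⟨m, hm⟩ := exists_pow_lt_of_lt_one (show (0 : ℝ) < (b - a) / 4 by linarith)
    (show (2 : ℝ)⁻¹ < 1 by norm_num)
  set n := N + m with hndef
  have hpow : (0 : ℝ) < 2 ^ n := by positivity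
  have hle : (2 : ℝ)⁻¹ ^ n ≤ (2 : ℝ)⁻¹ ^ m :=
    pow_le_pow_of_le_one (by norm_num) (by norm_num) (Nat.le_add_left m N)
  have hsmall : ((2 : ℝ) ^ n)⁻¹ < (b - a) / 4 := by
    rw [← inv_pow]
    exact lt_of_le_of_lt hle hm
  set j : ℤ := ⌊a * 2 ^ n⌋ + 1 with hjdef
  have hj1 : a * 2 ^ n < (j : ℝ) := by
    push_cast [hjdef]
    exact Int.lt_floor_add_one _
  have hj2 : (j : ℝ) ≤ a * 2 ^ n + 1 := by
    push_cast [hjdef]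
    have := Int.floor_le (a * 2 ^ n)
    linarith
  set c : ℝ := (2 : ℝ)⁻¹ ^ ((k n) + 1) with hcdef
  set d : ℝ := (2 : ℝ)⁻¹ ^ (k n) with hddef
  have hcd : c < d := by
    rw [hcdef, hddef]
    exact pow_lt_pow_right_of_lt_one₀ (by norm_num) (by norm_num) (Nat.lt_succ_self _)
  have hc0 : 0 < c := by rw [hcdef]; positivity
  have hd1 : d ≤ 1 := pow_le_one₀ (by norm_num) (by norm_num)
  have h4 : 4 < (b - a) * 2 ^ n := by
    have h5 := mul_lt_mul_of_pos_right hsmall hpow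
    rw [inv_mul_cancel₀ (ne_of_gt hpow)] at h5
    nlinarith
  refine ⟨((j : ℝ) + (c + d) / 2) / 2 ^ n, ?_, ?_, ?_⟩
  · refine mem_iUnion₂.2 ⟨n, Nat.le_add_right N m, mem_iUnion.2 ⟨j, ?_, ?_⟩⟩
    · rw [div_lt_div_iff₀ hpow hpow]
      nlinarith
    · rw [div_lt_div_iff₀ hpow hpow]
      nlinarith
  · rw [lt_div_iff₀ hpow]
    linarith
  · rw [div_lt_iff₀ hpow]
    linarith

/-- The main residual lemma: for any sequence of nonempty sets of codes, the set of `t`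
whose guessing sequence hits them infinitely often is residual. -/
lemma residual_guess (P : ℕ → Set ℕ) (hP : ∀ n, (P n).Nonempty) :
    {t : ℝ | ∀ N : ℕ, ∃ n, N ≤ n ∧ phi t n ∈ P n} ∈ residual ℝ := by
  choose k hk using hP
  have hsub : (⋂ N : ℕ, ⋃ (n : ℕ) (_ : N ≤ n), Wset n (k n)) ⊆
      {t : ℝ | ∀ N : ℕ, ∃ n, N ≤ n ∧ phi t n ∈ P n} := by
    intro t ht N
    rcases mem_iUnion₂.1 (mem_iInter.1 ht N) with ⟨n, hn, htn⟩
    exact ⟨n, hn, by rw [phi_eq_of_mem_Wset htn]; exact hk n⟩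
  refine mem_of_superset (countable_iInter_mem.2 fun N => ?_) hsub
  exact residual_of_dense_open (isOpen_iUnion fun n => isOpen_iUnion fun _ => isOpen_Wset n (k n))
    (dense_union_Wset N k)

end CovAux

end

open Cardinal MeasureTheory Set Filter

/-- `cov*(𝒩)`: the least cardinality of a family `𝒜` of null subsets of the plane such that
for every Borel function `f : ℝ → ℝ` and every Borel set `B ⊆ ℝ` of positive Lebesgue measure
there is `H ∈ 𝒜` with `{x ∈ B : (x, f x) ∈ H}` not Lebesgue-null. -/
noncomputable def covStarN : Cardinal :=
  sInf { c : Cardinal | ∃ A : Set (Set (ℝ × ℝ)), #A = c ∧ (∀ H ∈ A, volume H = 0) ∧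
    ∀ f : ℝ → ℝ, Measurable f → ∀ B : Set ℝ, MeasurableSet B → 0 < volume B →
      ∃ H ∈ A, volume {x | x ∈ B ∧ (x, f x) ∈ H} ≠ 0 }

/-- `non(ℳ)`: the least cardinality of a non-meager subset of `ℝ`. -/
noncomputable def nonMeager : Cardinal :=
  sInf { c : Cardinal | ∃ X : Set ℝ, #X = c ∧ ¬ IsMeagre X }

/-- `cov*(𝒩) ≤ non(ℳ)`. -/
theorem covStarN_le_nonMeager : covStarN ≤ nonMeager := by
  have hne : { c : Cardinal | ∃ X : Set ℝ, #X = c ∧ ¬ IsMeagre X }.Nonempty := by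
    refine ⟨#(univ : Set ℝ), univ, rfl, fun h => ?_⟩
    rw [IsMeagre, compl_univ] at h
    simpa using (dense_of_mem_residual h).nonempty
  refine le_csInf hne ?_
  rintro c ⟨X, rfl, hX⟩
  refine le_trans (csInf_le' ?_)
    (Cardinal.mk_image_le (f := fun t => CovAux.Hset (CovAux.phi t)) (s := X))
  refine ⟨(fun t => CovAux.Hset (CovAux.phi t)) '' X, rfl, ?_, ?_⟩
  · rintro H ⟨t, -, rfl⟩
    exact CovAux.vol_Hset _
  intro f hf B hB hBpos
  -- find a bounded positive-measure piece of B
  have hmono : Monotone (fun R : ℕ => B ∩ Ioo (-(R : ℝ)) R) := by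
    intro i j hij
    refine inter_subset_inter_right _ (Ioo_subset_Ioo ?_ ?_)
    · exact neg_le_neg (by exact_mod_cast hij)
    · exact_mod_cast hij
  have hcover : (⋃ R : ℕ, B ∩ Ioo (-(R : ℝ)) R) = B := by
    apply Subset.antisymm (iUnion_subset fun R => inter_subset_left)
    intro x hx
    obtain ⟨R, hR⟩ := exists_nat_gt |x|
    rcases abs_lt.1 hR with ⟨h1, h2⟩
    exact mem_iUnion.2 ⟨R, hx, by constructor <;> [linarith; linarith]⟩
  have hsup : (⨆ R : ℕ, volume (B ∩ Ioo (-(R : ℝ)) R)) = volume B := by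
    rw [← hmono.measure_iUnion, hcover]
  obtain ⟨R, hR⟩ : ∃ R : ℕ, 0 < volume (B ∩ Ioo (-(R : ℝ)) R) := by
    rw [← hsup] at hBpos
    exact lt_iSup_iff.1 hBpos
  set B' : Set ℝ := B ∩ Ioo (-(R : ℝ)) R with hB'def
  have hB'm : MeasurableSet B' := hB.inter measurableSet_Ioo
  have h0 : volume B' ≠ 0 := hR.ne'
  have hfin : volume B' ≠ ∞ := by
    refine ne_of_lt (lt_of_le_of_lt (measure_mono inter_subset_right) ?_)
    rw [Real.volume_Ioo]
    exact ENNReal.ofReal_lt_top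
  -- sets of good guesses
  set P : ℕ → Set ℕ := fun n =>
    {k | volume B' / 2 < volume {x | x ∈ B' ∧ (x, f x) ∈ CovAux.Sset n k}} with hPdef
  have hP : ∀ n, (P n).Nonempty := fun n => CovAux.exists_code hf hB'm h0 hfin n
  have hres := CovAux.residual_guess P hP
  -- the non-meager set X must meet this residual set
  obtain ⟨t, htX, htP⟩ :
      ∃ t, t ∈ X ∧ ∀ N : ℕ, ∃ n, N ≤ n ∧ CovAux.phi t n ∈ P n := by
    by_contra hcon
    push_neg at hcon
    apply hX
    rw [IsMeagre]
    refine mem_of_superset hres fun t ht => ?_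
    intro htX
    obtain ⟨N, hN⟩ := hcon t htX
    obtain ⟨n, hn1, hn2⟩ := ht N
    exact (hN n hn1) hn2
  refine ⟨CovAux.Hset (CovAux.phi t), mem_image_of_mem _ htX, ?_⟩
  -- show the trace has measure at least `volume B' / 2`
  set σ := CovAux.phi t with hσdef
  set E : ℕ → Set ℝ := fun n => {x | x ∈ B' ∧ (x, f x) ∈ CovAux.Sset n (σ n)} with hEdef
  set G : ℕ → Set ℝ := fun N => ⋃ (n : ℕ) (_ : N ≤ n), E n with hGdef
  have hEm : ∀ n, MeasurableSet (E n) := by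
    intro n
    have : E n = B' ∩ ((fun x => (x, f x)) ⁻¹' CovAux.Sset n (σ n)) := rfl
    rw [this]
    exact hB'm.inter (((measurable_id.prodMk hf)) (CovAux.isOpen_Sset n (σ n)).measurableSet)
  have hGm : ∀ N, MeasurableSet (G N) := fun N =>
    MeasurableSet.iUnion fun n => MeasurableSet.iUnion fun _ => hEm n
  have hGanti : Antitone G := by
    intro N M hNM x hx
    rcases mem_iUnion₂.1 hx with ⟨n, hn, hxn⟩
    exact mem_iUnion₂.2 ⟨n, hNM.trans hn, hxn⟩
  have hGfin : ∃ N, volume (G N) ≠ ∞ := by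
    refine ⟨0, ne_of_lt (lt_of_le_of_lt (measure_mono ?_) hfin.lt_top)⟩
    exact iUnion₂_subset fun n _ x hx => hx.1
  have hGlow : ∀ N, volume B' / 2 ≤ volume (G N) := by
    intro N
    obtain ⟨n, hn1, hn2⟩ := htP N
    exact le_trans (le_of_lt hn2) (measure_mono (subset_iUnion₂ (s := fun n _ => E n) n hn1))
  have hInter : volume (⋂ N, G N) = ⨅ N, volume (G N) :=
    hGanti.measure_iInter (fun N => (hGm N).nullMeasurableSet) hGfin
  have hkey : volume B' / 2 ≤ volume (⋂ N, G N) := by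
    rw [hInter]
    exact le_iInf hGlow
  have hsubset : (⋂ N, G N) ⊆ {x | x ∈ B ∧ (x, f x) ∈ CovAux.Hset σ} := by
    intro x hx
    have hx0 := mem_iInter.1 hx 0
    rcases mem_iUnion₂.1 hx0 with ⟨n, -, hxn⟩
    refine ⟨hxn.1.1, ?_⟩
    rw [CovAux.Hset]
    refine mem_iInter.2 fun N => ?_
    rcases mem_iUnion₂.1 (mem_iInter.1 hx N) with ⟨m, hm, hxm⟩
    exact mem_iUnion₂.2 ⟨m, hm, hxm.2⟩
  intro hzero
  have : volume (⋂ N, G N) = 0 :=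
    le_antisymm (le_trans (measure_mono hsubset) (le_of_eq hzero)) (zero_le)
  rw [this] at hkey
  exact (ENNReal.half_pos h0).not_ge hkey
end

section
/- non*(𝒩) ≥ cov(ℳ). -/
open Cardinal MeasureTheory Set Filter
open scoped ENNReal

noncomputable section
namespace NonStarAux

def rect (q : ℚ × ℚ × ℚ × ℚ) : Set (ℝ × ℝ) :=
  Set.Ioo (q.1 : ℝ) (q.2.1 : ℝ) ×ˢ Set.Ioo (q.2.2.1 : ℝ) (q.2.2.2 : ℝ)

lemma isOpen_rect (q : ℚ × ℚ × ℚ × ℚ) : IsOpen (rect q) := isOpen_Ioo.prod isOpen_Ioo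

def EU (n : ℕ) : Set (ℝ × ℝ) :=
  ⋃ q ∈ (Denumerable.ofNat (List (ℚ × ℚ × ℚ × ℚ)) n), rect q

lemma isOpen_EU (n : ℕ) : IsOpen (EU n) := isOpen_biUnion (fun q _ => isOpen_rect q)

def Yk (k i : ℕ) : Set (ℝ × ℝ) := if volume (EU i) ≤ 2⁻¹ ^ k then EU i else ∅

lemma vol_Yk (k i : ℕ) : volume (Yk k i) ≤ 2⁻¹ ^ k := by
  unfold Yk; split
  · assumption
  · simp

lemma isOpen_Yk (k i : ℕ) : IsOpen (Yk k i) := by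
  unfold Yk; split
  · exact isOpen_EU i
  · exact isOpen_empty

def dig (m : ℕ) (z : ℝ) : ℤ := ⌊z * 2 ^ m⌋ % 2

def slot (k : ℕ) (z : ℝ) : ℕ := sInf {i | dig (k + i) z = 1}

def Hz (z : ℝ) : Set (ℝ × ℝ) := ⋂ n, ⋃ k, ⋃ (_ : n ≤ k), Yk k (slot k z)

lemma measurableSet_Hz (z : ℝ) : MeasurableSet (Hz z) :=
  MeasurableSet.iInter fun _ => MeasurableSet.iUnion fun k =>
    MeasurableSet.iUnion fun _ => (isOpen_Yk k _).measurableSet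

lemma vol_Hz (z : ℝ) : volume (Hz z) = 0 := by
  by_contra h
  obtain ⟨n, hn⟩ := ENNReal.exists_inv_two_pow_lt h
  have h1 : Hz z ⊆ ⋃ j : ℕ, Yk ((n+1) + j) (slot ((n+1) + j) z) := by
    intro x hx
    have := mem_iInter.1 hx (n+1)
    simp only [mem_iUnion] at this ⊢
    obtain ⟨k, hk, hxk⟩ := this
    exact ⟨k - (n+1), by rwa [Nat.add_sub_cancel' hk]⟩
  have h2 : volume (Hz z) ≤ ∑' j : ℕ, (2⁻¹ : ℝ≥0∞) ^ ((n+1) + j) :=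
    le_trans (measure_mono h1) (le_trans (measure_iUnion_le _)
      (ENNReal.tsum_le_tsum fun j => vol_Yk _ _))
  have h3 : ∑' j : ℕ, (2⁻¹ : ℝ≥0∞) ^ ((n+1) + j) = 2⁻¹ ^ (n+1) * 2 := by
    simp_rw [pow_add]
    rw [ENNReal.tsum_mul_left, ENNReal.tsum_geometric]
    congr 1
    simp [ENNReal.one_sub_inv_two]
  have h4 : (2⁻¹ : ℝ≥0∞) ^ (n+1) * 2 = 2⁻¹ ^ n := by
    rw [pow_succ, mul_assoc, ENNReal.inv_mul_cancel (by norm_num) (by norm_num), mul_one]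
  rw [h3, h4] at h2
  exact absurd (lt_of_le_of_lt h2 hn) (lt_irrefl _)

lemma floor_aux {p k i : ℕ} {a : ℤ} (hpk : p < k) {z : ℝ}
    (hz : z ∈ Ioo ((a:ℝ)/2^p + ((2:ℝ)^(k+i))⁻¹)
      ((a:ℝ)/2^p + ((2:ℝ)^(k+i))⁻¹ + ((2:ℝ)^(k+i+1))⁻¹))
    (t s : ℕ) (hts : t + s = i) :
    dig (k + t) z = if s = 0 then 1 else 0 := by
  have h2p : (0:ℝ) < 2 ^ p := by positivity
  have h2K : (0:ℝ) < (2:ℝ) ^ (k + t) := by positivity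
  have hc : (a:ℝ)/2^p * 2^(k+t) = ((a * 2^(k+t-p) : ℤ) : ℝ) := by
    have h1 : k + t - p + p = k + t := Nat.sub_add_cancel (hpk.le.trans (Nat.le_add_right k t))
    push_cast
    rw [div_mul_eq_mul_div, div_eq_iff (ne_of_gt h2p), mul_assoc, ← pow_add, h1]
  have hscale : ∀ s' : ℕ, ((2:ℝ)^(k+t+s'))⁻¹ * 2^(k+t) = ((2:ℝ)^s')⁻¹ := by
    intro s'
    rw [pow_add, mul_inv, mul_right_comm, inv_mul_cancel₀ (ne_of_gt h2K), one_mul]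
  have hki : k + i = k + t + s := by omega
  have hki1 : k + i + 1 = k + t + (s + 1) := by omega
  have hd1 : ((2:ℝ)^(k+i))⁻¹ < z - (a:ℝ)/2^p := by have := hz.1; linarith
  have hd2 : z - (a:ℝ)/2^p < ((2:ℝ)^(k+i))⁻¹ + ((2:ℝ)^(k+i+1))⁻¹ := by have := hz.2; linarith
  have hx1 : ((2:ℝ)^s)⁻¹ < (z - (a:ℝ)/2^p) * 2^(k+t) := by
    calc ((2:ℝ)^s)⁻¹ = ((2:ℝ)^(k+i))⁻¹ * 2^(k+t) := by rw [hki, hscale]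
    _ < _ := mul_lt_mul_of_pos_right hd1 h2K
  have hx2 : (z - (a:ℝ)/2^p) * 2^(k+t) < ((2:ℝ)^s)⁻¹ + ((2:ℝ)^(s+1))⁻¹ := by
    calc (z - (a:ℝ)/2^p) * 2^(k+t) < (((2:ℝ)^(k+i))⁻¹ + ((2:ℝ)^(k+i+1))⁻¹) * 2^(k+t) :=
          mul_lt_mul_of_pos_right hd2 h2K
    _ = ((2:ℝ)^s)⁻¹ + ((2:ℝ)^(s+1))⁻¹ := by rw [add_mul, hki1, hki, hscale, hscale]
  have key : z * 2^(k+t) = ((a * 2^(k+t-p) : ℤ) : ℝ) + (z - (a:ℝ)/2^p) * 2^(k+t) := by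
    rw [← hc]; ring
  have hdvd : (2:ℤ) ∣ a * 2^(k+t-p) := Dvd.dvd.mul_left (dvd_pow_self 2 (by omega)) a
  obtain ⟨c, hcc⟩ := hdvd
  rcases eq_or_ne s 0 with hs | hs
  · subst hs
    simp only [pow_zero, inv_one] at hx1 hx2
    have h12 : ((2:ℝ)^(0+1))⁻¹ ≤ 1 := by norm_num
    have hfl : ⌊(z - (a:ℝ)/2^p) * 2^(k+t)⌋ = 1 := by
      rw [Int.floor_eq_iff]
      constructor
      · push_cast; linarith
      · push_cast; linarith
    unfold dig
    rw [key, Int.floor_intCast_add, hfl, hcc]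
    simp only [if_pos rfl, if_true]
    omega
  · have h2s : (2:ℝ) ≤ 2^s := by
      calc (2:ℝ) = 2^1 := (pow_one 2).symm
      _ ≤ 2^s := pow_le_pow_right₀ one_le_two (Nat.one_le_iff_ne_zero.mpr hs)
    have h4s : (4:ℝ) ≤ 2^(s+1) := by
      calc (4:ℝ) = 2^2 := by norm_num
      _ ≤ 2^(s+1) := pow_le_pow_right₀ one_le_two (by omega)
    have hi1 : ((2:ℝ)^s)⁻¹ ≤ 1/2 := by
      rw [inv_le_comm₀ (by positivity) (by norm_num)]
      linarith
    have hi2 : ((2:ℝ)^(s+1))⁻¹ ≤ 1/4 := by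
      rw [inv_le_comm₀ (by positivity) (by norm_num)]
      linarith
    have hpos : (0:ℝ) < ((2:ℝ)^s)⁻¹ := by positivity
    have hfl : ⌊(z - (a:ℝ)/2^p) * 2^(k+t)⌋ = 0 := by
      rw [Int.floor_eq_zero_iff]
      exact ⟨le_of_lt (lt_trans hpos hx1), by linarith⟩
    unfold dig
    rw [key, Int.floor_intCast_add, hfl, hcc]
    simp only [if_neg hs]
    omega

lemma slot_eq {p k i : ℕ} {a : ℤ} (hpk : p < k) {z : ℝ}
    (hz : z ∈ Ioo ((a:ℝ)/2^p + ((2:ℝ)^(k+i))⁻¹)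
      ((a:ℝ)/2^p + ((2:ℝ)^(k+i))⁻¹ + ((2:ℝ)^(k+i+1))⁻¹)) :
    slot k z = i := by
  have hmem : i ∈ {j | dig (k + j) z = 1} := by
    have := floor_aux hpk hz i 0 (by omega)
    simpa using this
  refine le_antisymm (Nat.sInf_le hmem) (le_csInf ⟨i, hmem⟩ fun t ht => ?_)
  by_contra hlt
  push_neg at hlt
  have := floor_aux hpk hz t (i - t) (by omega)
  rw [if_neg (by omega)] at this
  rw [mem_setOf_eq, this] at ht
  exact absurd ht (by norm_num)

def cap (f : ℝ → ℝ) (m k : ℕ) (z : ℝ) : Set ℝ :=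
  {x | x ∈ Icc (-(m:ℝ)) m ∧ (x, f x) ∈ EU (slot k z)}

def D (f : ℝ → ℝ) (m N n : ℕ) : Set ℝ :=
  {z | ∃ k, n ≤ k ∧ volume (EU (slot k z)) ≤ 2⁻¹ ^ k ∧
    volume (Icc (-(m:ℝ)) m) ≤ volume (cap f m k z) + ((N : ℝ≥0∞) + 1)⁻¹}

lemma capture {f : ℝ → ℝ} (hf : Measurable f) {z : ℝ} (hz : ∀ m N n, z ∈ D f m N n) :
    volume {x : ℝ | (x, f x) ∉ Hz z} = 0 := by
  set T : ℕ → ℕ → Set ℝ := fun m n =>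
    Icc (-(m:ℝ)) m \ ⋃ k, ⋃ (_ : n ≤ k), {x : ℝ | (x, f x) ∈ Yk k (slot k z)} with hT
  have hTnull : ∀ m n, volume (T m n) = 0 := by
    intro m n
    by_contra h
    obtain ⟨N, hN⟩ := ENNReal.exists_inv_nat_lt h
    obtain ⟨k, hk, hvol, hcap⟩ := hz m N n
    have hSmeas : MeasurableSet (cap f m k z) := by
      have : cap f m k z = Icc (-(m:ℝ)) m ∩ (fun x => (x, f x)) ⁻¹' EU (slot k z) := rfl
      rw [this]
      exact measurableSet_Icc.inter
        ((isOpen_EU _).measurableSet.preimage (measurable_id.prodMk hf))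
    have hsub : T m n ⊆ Icc (-(m:ℝ)) m \ cap f m k z := by
      intro x hx
      refine ⟨hx.1, fun hxS => hx.2 ?_⟩
      simp only [mem_iUnion]
      exact ⟨k, hk, by simpa [Yk, if_pos hvol] using hxS.2⟩
    have hfin : volume (cap f m k z) ≠ ∞ := by
      have h1 : volume (cap f m k z) ≤ volume (Icc (-(m:ℝ)) m) :=
        measure_mono fun x hx => hx.1
      exact ne_top_of_le_ne_top (by simp) h1
    have hd : volume (Icc (-(m:ℝ)) m \ cap f m k z)
        = volume (Icc (-(m:ℝ)) m) - volume (cap f m k z) :=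
      measure_diff (fun x hx => hx.1) hSmeas.nullMeasurableSet hfin
    have h2 : volume (T m n) ≤ ((N : ℝ≥0∞) + 1)⁻¹ := by
      refine le_trans (measure_mono hsub) ?_
      rw [hd]
      exact tsub_le_iff_right.mpr (by rwa [add_comm] at hcap)
    have h3 : ((N : ℝ≥0∞) + 1)⁻¹ ≤ (N : ℝ≥0∞)⁻¹ :=
      ENNReal.inv_le_inv' (le_add_of_nonneg_right zero_le_one)
    exact absurd (lt_of_le_of_lt (h2.trans h3) hN) (lt_irrefl _)
  have hsub : {x : ℝ | (x, f x) ∉ Hz z} ⊆ ⋃ m, ⋃ n, T m n := by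
    intro x hx
    obtain ⟨m, hm⟩ := exists_nat_ge |x|
    have hxm : x ∈ Icc (-(m:ℝ)) m := abs_le.1 hm
    have : ∃ n, (x, f x) ∉ ⋃ k, ⋃ (_ : n ≤ k), Yk k (slot k z) := by
      by_contra hc
      push_neg at hc
      exact hx (mem_iInter.2 hc)
    obtain ⟨n, hn⟩ := this
    simp only [mem_iUnion]
    refine ⟨m, n, hxm, fun hmem => hn ?_⟩
    simp only [mem_iUnion] at hmem ⊢
    obtain ⟨k, hk, hxk⟩ := hmem
    exact ⟨k, hk, hxk⟩
  exact measure_mono_null hsub (measure_iUnion_null fun m => measure_iUnion_null fun n => hTnull m n)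

/-- every open set is the union of the rational rectangles it contains -/
lemma open_eq_biUnion_rect {W : Set (ℝ × ℝ)} (hW : IsOpen W) :
    W = ⋃ q ∈ {q : ℚ × ℚ × ℚ × ℚ | rect q ⊆ W}, rect q := by
  apply Subset.antisymm
  · rintro ⟨x, y⟩ hxy
    obtain ⟨u, v, hu, hv, hxu, hyv, huv⟩ := isOpen_prod_iff.1 hW x y hxy
    obtain ⟨l₁, r₁, hx1, hs1⟩ := mem_nhds_iff_exists_Ioo_subset.1 (hu.mem_nhds hxu)
    obtain ⟨l₂, r₂, hx2, hs2⟩ := mem_nhds_iff_exists_Ioo_subset.1 (hv.mem_nhds hyv)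
    obtain ⟨a, hal, hax⟩ := exists_rat_btwn hx1.1
    obtain ⟨b, hxb, hbr⟩ := exists_rat_btwn hx1.2
    obtain ⟨c, hcl, hcy⟩ := exists_rat_btwn hx2.1
    obtain ⟨d, hyd, hdr⟩ := exists_rat_btwn hx2.2
    refine mem_iUnion₂.2 ⟨(a, b, c, d), ?_, ?_⟩
    · intro ⟨x', y'⟩ hx'
      exact huv ⟨hs1 ⟨lt_trans hal hx'.1.1, lt_trans hx'.1.2 hbr⟩,
        hs2 ⟨lt_trans hcl hx'.2.1, lt_trans hx'.2.2 hdr⟩⟩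
    · exact ⟨⟨hax, hxb⟩, ⟨hcy, hyd⟩⟩
  · exact iUnion₂_subset fun q hq => hq

lemma graph_null {f : ℝ → ℝ} (hf : Measurable f) (m : ℕ) :
    MeasurableSet {q : ℝ × ℝ | q.1 ∈ Icc (-(m:ℝ)) m ∧ q.2 = f q.1} ∧
    volume {q : ℝ × ℝ | q.1 ∈ Icc (-(m:ℝ)) m ∧ q.2 = f q.1} = 0 := by
  have hmeas : MeasurableSet {q : ℝ × ℝ | q.1 ∈ Icc (-(m:ℝ)) m ∧ q.2 = f q.1} := by
    refine MeasurableSet.inter ?_ ?_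
    · exact measurable_fst measurableSet_Icc
    · exact measurableSet_eq_fun measurable_snd (hf.comp measurable_fst)
  refine ⟨hmeas, ?_⟩
  rw [show (volume : Measure (ℝ × ℝ)) = (volume : Measure ℝ).prod volume from
    Measure.volume_eq_prod ℝ ℝ]
  rw [Measure.measure_prod_null hmeas]
  refine ae_of_all _ fun x => ?_
  refine measure_mono_null (fun y hy => ?_) (measure_singleton (f x))
  exact hy.2

lemma exists_Ioo_subset_D {f : ℝ → ℝ} (hf : Measurable f) (m N n : ℕ)
    (z₀ ε : ℝ) (hε : 0 < ε) :
    ∃ α β : ℝ, α < β ∧ Ioo α β ⊆ Metric.ball z₀ ε ∧ Ioo α β ⊆ D f m N n := by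
  classical
  -- step 1 : dyadic interval inside the ball
  obtain ⟨p, hp⟩ := pow_unbounded_of_one_lt (2/ε) (by norm_num : (1:ℝ) < 2)
  have h2p : (0:ℝ) < 2^p := by positivity
  have hpe : ((2:ℝ)^p)⁻¹ < ε/2 := by
    have h := inv_strictAnti₀ (div_pos two_pos hε) hp
    rwa [inv_div] at h
  set a : ℤ := ⌊z₀ * 2^p⌋ with ha
  have hJball : Ioo ((a:ℝ)/2^p) (((a:ℝ)+1)/2^p) ⊆ Metric.ball z₀ ε := by
    intro z hz
    have h1 : (a:ℝ) ≤ z₀ * 2^p := Int.floor_le _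
    have h2 : z₀ * 2^p < (a:ℝ) + 1 := Int.lt_floor_add_one _
    have h3 : (a:ℝ)/2^p ≤ z₀ := by rw [div_le_iff₀ h2p]; linarith
    have h4 : z₀ < ((a:ℝ)+1)/2^p := by rw [lt_div_iff₀ h2p]; linarith
    have h5 : ((a:ℝ)+1)/2^p - (a:ℝ)/2^p = ((2:ℝ)^p)⁻¹ := by field_simp; ring
    rw [Metric.mem_ball, Real.dist_eq, abs_sub_lt_iff]
    have h6 : ((a:ℝ)+1)/2^p = (a:ℝ)/2^p + ((2:ℝ)^p)⁻¹ := by field_simp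
    have hz1 := hz.1
    have hz2 := hz.2
    constructor <;> linarith
  -- step 2
  set k : ℕ := max n (p+1) with hk
  have hpk : p < k := lt_of_lt_of_le (Nat.lt_succ_self p) (le_max_right _ _)
  have hnk : n ≤ k := le_max_left _ _
  -- step 3 : small open cover of the graph
  obtain ⟨hGmeas, hGnull⟩ := graph_null hf m
  have hlt : volume {q : ℝ × ℝ | q.1 ∈ Icc (-(m:ℝ)) m ∧ q.2 = f q.1} < 2⁻¹ ^ k := by
    rw [hGnull]; exact ENNReal.pow_pos (by norm_num) k
  obtain ⟨W, hWG, hWopen, hWvol⟩ := Set.exists_isOpen_lt_of_lt _ _ hlt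
  -- step 4 : increasing finite unions
  set L : ℕ → List (ℚ × ℚ × ℚ × ℚ) := fun t =>
    ((List.range (t+1)).map (Denumerable.ofNat (ℚ × ℚ × ℚ × ℚ))).filter
      (fun q => decide (rect q ⊆ W)) with hL
  set C : ℕ → Set (ℝ × ℝ) := fun t => ⋃ q ∈ L t, rect q with hC
  have hLmem : ∀ t q, q ∈ L t ↔
      ((∃ j < t + 1, Denumerable.ofNat (ℚ × ℚ × ℚ × ℚ) j = q) ∧ rect q ⊆ W) := by
    intro t q
    simp [hL, List.mem_filter, List.mem_map, List.mem_range]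
  have hEUC : ∀ t, ∃ nn, EU nn = C t := by
    intro t
    obtain ⟨nn, hnn⟩ : ∃ nn, Denumerable.ofNat (List (ℚ × ℚ × ℚ × ℚ)) nn = L t :=
      ⟨_, Denumerable.ofNat_encode _⟩
    refine ⟨nn, ?_⟩
    simp only [EU, hnn, hC]
  have hCW : ∀ t, C t ⊆ W := by
    intro t
    refine iUnion₂_subset fun q hq => ?_
    exact ((hLmem t q).1 hq).2
  have hCmono : Monotone C := by
    intro s t hst x hx
    obtain ⟨q, hq, hxq⟩ := mem_iUnion₂.1 hx
    obtain ⟨⟨j, hj, hjq⟩, hsub⟩ := (hLmem s q).1 hq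
    exact mem_iUnion₂.2 ⟨q, (hLmem t q).2 ⟨⟨j, by omega, hjq⟩, hsub⟩, hxq⟩
  set A : ℕ → Set ℝ := fun t => {x | x ∈ Icc (-(m:ℝ)) m ∧ (x, f x) ∈ C t} with hA
  have hAmono : Monotone A := fun s t hst x hx => ⟨hx.1, hCmono hst hx.2⟩
  have hAunion : ⋃ t, A t = Icc (-(m:ℝ)) m := by
    apply Subset.antisymm
    · exact iUnion_subset fun t x hx => hx.1
    · intro x hx
      have hxW : (x, f x) ∈ W := hWG ⟨hx, rfl⟩
      rw [open_eq_biUnion_rect hWopen] at hxW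
      obtain ⟨q, hq, hxq⟩ := mem_iUnion₂.1 hxW
      obtain ⟨j, hj⟩ : ∃ j, Denumerable.ofNat (ℚ × ℚ × ℚ × ℚ) j = q :=
        ⟨_, Denumerable.ofNat_encode q⟩
      refine mem_iUnion.2 ⟨j, hx, mem_iUnion₂.2 ⟨q, ?_, hxq⟩⟩
      exact (hLmem j q).2 ⟨⟨j, by omega, hj⟩, hq⟩
  -- step 5 : find t with almost full capture
  have hsup : volume (Icc (-(m:ℝ)) m) = ⨆ t, volume (A t) := by
    rw [← hAunion]
    exact hAmono.directed_le.measure_iUnion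
  have hfind : ∃ t, volume (Icc (-(m:ℝ)) m) ≤ volume (A t) + ((N : ℝ≥0∞) + 1)⁻¹ := by
    set r := volume (Icc (-(m:ℝ)) m) with hr
    set c : ℝ≥0∞ := ((N : ℝ≥0∞) + 1)⁻¹ with hcdef
    have hc0 : c ≠ 0 := by simp [hcdef]
    have hct : c ≠ ⊤ := by simp [hcdef]
    by_cases hrc : r ≤ c
    · exact ⟨0, le_trans hrc (le_add_left le_rfl)⟩
    · push_neg at hrc
      have hr0 : r ≠ 0 := by
        intro h
        rw [h] at hrc
        exact absurd hrc (by simp)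
      have hrt : r ≠ ⊤ := by simp [hr]
      have hself : r - c < r := ENNReal.sub_lt_self hrt hr0 hc0
      have h' : r - c < ⨆ t, volume (A t) := by rw [← hsup]; exact hself
      obtain ⟨t, ht⟩ := lt_iSup_iff.1 h'
      refine ⟨t, ?_⟩
      exact ((ENNReal.sub_lt_iff_lt_right hct hrc.le).1 ht).le
  obtain ⟨t, ht⟩ := hfind
  obtain ⟨i, hi⟩ := hEUC t
  -- step 6 : the subinterval
  set β : ℝ := (a:ℝ)/2^p + ((2:ℝ)^(k+i))⁻¹ with hβ
  set γ : ℝ := β + ((2:ℝ)^(k+i+1))⁻¹ with hγ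
  have h2ki : (0:ℝ) < 2^(k+i) := by positivity
  have h2ki1 : (0:ℝ) < 2^(k+i+1) := by positivity
  have hβγ : β < γ := lt_add_of_pos_right β (by positivity)
  have hslot : ∀ z ∈ Ioo β γ, slot k z = i := fun z hz => slot_eq hpk hz
  have hsubJ : Ioo β γ ⊆ Ioo ((a:ℝ)/2^p) (((a:ℝ)+1)/2^p) := by
    intro z hz
    have e1 : ((2:ℝ)^(k+i))⁻¹ ≤ ((2:ℝ)^(p+1))⁻¹ := by
      apply inv_anti₀ (by positivity)
      exact pow_le_pow_right₀ one_le_two (by omega)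
    have e2 : ((2:ℝ)^(k+i+1))⁻¹ ≤ ((2:ℝ)^(p+2))⁻¹ := by
      apply inv_anti₀ (by positivity)
      exact pow_le_pow_right₀ one_le_two (by omega)
    have e3 : ((2:ℝ)^(p+1))⁻¹ = ((2:ℝ)^p)⁻¹ / 2 := by
      rw [pow_succ]; field_simp
    have e4 : ((2:ℝ)^(p+2))⁻¹ = ((2:ℝ)^p)⁻¹ / 4 := by
      rw [show p + 2 = p + 1 + 1 from rfl, pow_succ, pow_succ]; field_simp; ring
    have e5 : (0:ℝ) < ((2:ℝ)^p)⁻¹ := by positivity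
    have h5 : ((a:ℝ)+1)/2^p = (a:ℝ)/2^p + ((2:ℝ)^p)⁻¹ := by field_simp
    have hz1 := hz.1
    have hz2 := hz.2
    rw [hβ] at hz1
    rw [hγ, hβ] at hz2
    constructor
    · have : (0:ℝ) < ((2:ℝ)^(k+i))⁻¹ := by positivity
      linarith
    · rw [h5]; linarith
  refine ⟨β, γ, hβγ, fun z hz => hJball (hsubJ hz), fun z hz => ?_⟩
  refine ⟨k, hnk, ?_, ?_⟩
  · rw [hslot z hz, hi]
    exact le_of_lt (lt_of_le_of_lt (measure_mono (hCW t)) hWvol)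
  · have hcapA : cap f m k z = A t := by
      rw [cap, hslot z hz, hi, hA]
    rw [hcapA]
    exact ht

lemma const_witness (H : Set (ℝ × ℝ)) (hH : volume H = 0) (B : Set ℝ)
    (hB : MeasurableSet B) (hBpos : 0 < volume B) :
    ∃ c : ℝ, volume {x | x ∈ B ∧ (x, c) ∉ H} ≠ 0 := by
  obtain ⟨H', hHH', hH'm, hH'0⟩ := exists_measurable_superset_of_null hH
  have hswapm : MeasurableSet (Prod.swap ⁻¹' H' : Set (ℝ × ℝ)) := hH'm.preimage measurable_swap
  have hswap0 : volume (Prod.swap ⁻¹' H' : Set (ℝ × ℝ)) = 0 := by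
    rw [show (volume : Measure (ℝ × ℝ)) = (volume : Measure ℝ).prod volume from
      Measure.volume_eq_prod ℝ ℝ]
    have h1 : ((volume : Measure ℝ).prod volume) (Prod.swap ⁻¹' H')
        = (((volume : Measure ℝ).prod volume).map Prod.swap) H' := by
      rw [Measure.map_apply measurable_swap hH'm]
    rw [h1, Measure.prod_swap]
    rw [show (volume : Measure ℝ).prod volume = (volume : Measure (ℝ × ℝ)) from
      (Measure.volume_eq_prod ℝ ℝ).symm]
    exact hH'0
  have hae := (Measure.measure_prod_null (μ := (volume : Measure ℝ)) (ν := volume) hswapm).1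
    (by rw [show (volume : Measure ℝ).prod volume = (volume : Measure (ℝ × ℝ)) from
          (Measure.volume_eq_prod ℝ ℝ).symm]
        exact hswap0)
  obtain ⟨c, hc⟩ := hae.exists
  refine ⟨c, fun h0 => ?_⟩
  have hsec : volume {x : ℝ | (x, c) ∈ H'} = 0 := by
    have : {x : ℝ | (x, c) ∈ H'} = Prod.mk c ⁻¹' (Prod.swap ⁻¹' H') := by
      ext x; simp [Prod.swap]
    rw [this]; exact hc
  have hsub : B ⊆ {x | x ∈ B ∧ (x, c) ∉ H} ∪ {x : ℝ | (x, c) ∈ H'} := by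
    intro x hx
    by_cases hxH : (x, c) ∈ H
    · exact Or.inr (hHH' hxH)
    · exact Or.inl ⟨hx, hxH⟩
  have : volume B = 0 :=
    measure_mono_null hsub (measure_union_null h0 hsec)
  exact absurd this (ne_of_gt hBpos)

def badSet (f : ℝ → ℝ) : Set ℝ := {z | volume {x | x ∈ (univ : Set ℝ) ∧ (x, f x) ∉ Hz z} ≠ 0}

lemma dense_interior_D {f : ℝ → ℝ} (hf : Measurable f) (m N n : ℕ) :
    Dense (interior (D f m N n)) := by
  rw [dense_iff_inter_open]
  rintro U hU ⟨z₀, hz₀⟩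
  obtain ⟨ε, hε, hball⟩ := Metric.isOpen_iff.1 hU z₀ hz₀
  obtain ⟨α, β, hαβ, hsub1, hsub2⟩ := exists_Ioo_subset_D hf m N n z₀ ε hε
  have hmid : (α + β)/2 ∈ Ioo α β := ⟨by linarith, by linarith⟩
  exact ⟨(α + β)/2, hball (hsub1 hmid),
    interior_maximal hsub2 isOpen_Ioo hmid⟩

lemma isMeagre_badSet {f : ℝ → ℝ} (hf : Measurable f) : IsMeagre (badSet f) := by
  have hsub : badSet f ⊆ ⋃ m : ℕ, ⋃ N : ℕ, ⋃ n : ℕ, (interior (D f m N n))ᶜ := by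
    intro z hz
    by_contra hc
    simp only [mem_iUnion, not_exists, mem_compl_iff, not_not] at hc
    have hcap : volume {x : ℝ | (x, f x) ∉ Hz z} = 0 :=
      capture hf fun m N n => interior_subset (hc m N n)
    apply hz
    have : {x | x ∈ (univ : Set ℝ) ∧ (x, f x) ∉ Hz z} = {x : ℝ | (x, f x) ∉ Hz z} := by
      ext x; simp
    rw [this, hcap]
  refine IsMeagre.mono hsub ?_
  refine isMeagre_iUnion fun m => isMeagre_iUnion fun N => isMeagre_iUnion fun n => ?_
  unfold IsMeagre
  rw [compl_compl]
  exact residual_of_dense_open isOpen_interior (dense_interior_D hf m N n)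



lemma covering (z : ℝ) {X : Set (ℝ → ℝ)}
    (hX : ∀ H : Set (ℝ × ℝ), volume H = 0 → ∀ B : Set ℝ, MeasurableSet B → 0 < volume B →
      ∃ f ∈ X, volume {x | x ∈ B ∧ (x, f x) ∉ H} ≠ 0) :
    ∃ f ∈ X, z ∈ badSet f := by
  obtain ⟨f, hfX, hf⟩ := hX (Hz z) (vol_Hz z) univ MeasurableSet.univ (by simp)
  exact ⟨f, hfX, hf⟩

end NonStarAux

end

/-- `non*(𝒩)`: the least cardinality of a family `X` of Borel functions `f : ℝ → ℝ` such that
for every null `H ⊆ ℝ × ℝ` and every Borel set `B ⊆ ℝ` of positive Lebesgue measure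
there is `f ∈ X` with `{x ∈ B : (x, f x) ∉ H}` not Lebesgue-null. -/
noncomputable def nonStarN : Cardinal :=
  sInf { c : Cardinal | ∃ X : Set (ℝ → ℝ), #X = c ∧ (∀ f ∈ X, Measurable f) ∧
    ∀ H : Set (ℝ × ℝ), volume H = 0 → ∀ B : Set ℝ, MeasurableSet B → 0 < volume B →
      ∃ f ∈ X, volume {x | x ∈ B ∧ (x, f x) ∉ H} ≠ 0 }

/-- `cov(ℳ)`: the least cardinality of a family of meager subsets of `ℝ` covering `ℝ`. -/
noncomputable def covMeager : Cardinal :=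
  sInf { c : Cardinal | ∃ F : Set (Set ℝ), #F = c ∧ (∀ A ∈ F, IsMeagre A) ∧ ⋃₀ F = Set.univ }

/-- `non*(𝒩) ≥ cov(ℳ)`. -/
theorem nonStarN_ge_covMeager : covMeager ≤ nonStarN := by
  have hne : { c : Cardinal | ∃ X : Set (ℝ → ℝ), #X = c ∧ (∀ f ∈ X, Measurable f) ∧
      ∀ H : Set (ℝ × ℝ), volume H = 0 → ∀ B : Set ℝ, MeasurableSet B → 0 < volume B →
        ∃ f ∈ X, volume {x | x ∈ B ∧ (x, f x) ∉ H} ≠ 0 }.Nonempty := by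
    refine ⟨#(Set.range (fun c : ℝ => (fun _ : ℝ => c))),
      Set.range (fun c : ℝ => (fun _ : ℝ => c)), rfl, ?_, ?_⟩
    · rintro f ⟨c, rfl⟩
      exact measurable_const
    · intro H hH B hB hBpos
      obtain ⟨c, hc⟩ := NonStarAux.const_witness H hH B hB hBpos
      exact ⟨fun _ => c, ⟨c, rfl⟩, hc⟩
  refine le_csInf hne ?_
  rintro c ⟨X, rfl, hXmeas, hXprop⟩
  have hcov : covMeager ≤ #(NonStarAux.badSet '' X) := by
    refine csInf_le' ?_
    refine ⟨NonStarAux.badSet '' X, rfl, ?_, ?_⟩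
    · rintro A ⟨f, hfX, rfl⟩
      exact NonStarAux.isMeagre_badSet (hXmeas f hfX)
    · apply Set.eq_univ_of_forall
      intro z
      obtain ⟨f, hfX, hzf⟩ := NonStarAux.covering z hXprop
      exact ⟨NonStarAux.badSet f, ⟨f, hfX, rfl⟩, hzf⟩
  exact hcov.trans (Cardinal.mk_image_le)
end

section
/- Let h ∈ ω^ω be strictly increasing with h(n) ≥ 1 for all n. Define n_0 = 0, n_{i+1} = n_i + ∏_{k ≤ n_i} h(k), and fix a bijection H from ⋃_{i<ω} ∏_{k ≤ n_i} h(k) onto ω such that H maps ∏_{k ≤ n_i} h(k) onto the interval [n_i, n_{i+1}) for each i. For f ∈ ω^ω define ρ_f ∈ ∏_{k<ω} h(k) by: ρ_f(k) = (H^{-1}(f(k)))(k) whenever n_i ≤ k < n_{i+1} and n_{i+1} ≤ f(k) (i being the unique index with n_i ≤ k < n_{i+1}), and ρ_f(k) = 0 otherwise. For η ∈ ∏_{k<ω} h(k) let X_η = {H(η↾{0,…,n_i}) : i < ω}. Then for every η ∈ ∏_{k<ω} h(k) and every f ∈ ω^ω satisfying n < f(n) for all n: if η(k) ≠ ρ_f(k)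 for all but finitely many k, then the set {m ∈ X_η : f(m) ∈ X_η} is finite. -/
open Set Filter

/-- Let `h ∈ ω^ω` be strictly increasing with `h n ≥ 1`.  Let `N 0 = 0` and
`N (i+1) = N i + ∏_{k ≤ N i} h k`.  Let `H` code a bijection of `⋃_i ∏_{k ≤ N i} h k`
with `ω` mapping the `i`-th block onto `[N i, N (i+1))`:  `H i τ` only depends on
`τ ↾ {0,…,N i}`, is injective on valid `τ`'s, and maps them onto `[N i, N (i+1))`.
For `f ∈ ω^ω`, `ρ` is the function `ρ_f`, i.e. `ρ k = (H⁻¹ (f k)) k` whenever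
`N i ≤ k < N (i+1) ≤ f k`, and `ρ k = 0` otherwise.  If `η ∈ ∏_k h k` and `f` satisfies
`n < f n` for all `n`, and `η k ≠ ρ k` for all but finitely many `k`, then
`{m ∈ X_η : f m ∈ X_η}` is finite, where `X_η = {H i η : i < ω}`. -/
theorem finite_selfmap_on_Xeta
    (h : ℕ → ℕ) (hmono : StrictMono h) (hpos : ∀ n, 1 ≤ h n)
    (N : ℕ → ℕ) (hN0 : N 0 = 0)
    (hNs : ∀ i, N (i + 1) = N i + ∏ k ∈ Finset.range (N i + 1), h k)
    (H : ℕ → (ℕ → ℕ) → ℕ)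
    (Hrange : ∀ i τ, (∀ k ≤ N i, τ k < h k) → N i ≤ H i τ ∧ H i τ < N (i + 1))
    (Hrestr : ∀ i τ τ', (∀ k ≤ N i, τ k = τ' k) → H i τ = H i τ')
    (Hinj : ∀ i τ τ', (∀ k ≤ N i, τ k < h k) → (∀ k ≤ N i, τ' k < h k) →
      H i τ = H i τ' → ∀ k ≤ N i, τ k = τ' k)
    (Hsurj : ∀ i m, N i ≤ m → m < N (i + 1) → ∃ τ, (∀ k ≤ N i, τ k < h k) ∧ H i τ = m)
    (η : ℕ → ℕ) (hη : ∀ k, η k < h k)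
    (f : ℕ → ℕ) (hf : ∀ n, n < f n)
    (ρ : ℕ → ℕ)
    (hρ1 : ∀ k i, N i ≤ k → k < N (i + 1) → N (i + 1) ≤ f k →
      ∀ j τ, (∀ l ≤ N j, τ l < h l) → H j τ = f k → ρ k = τ k)
    (hρ2 : ∀ k i, N i ≤ k → k < N (i + 1) → f k < N (i + 1) → ρ k = 0)
    (hne : ∀ᶠ k in atTop, η k ≠ ρ k) :
    {m ∈ Set.range fun i => H i η | f m ∈ Set.range fun i => H i η}.Finite := by
  obtain ⟨a, ha⟩ := eventually_atTop.mp hne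
  have hNmono : StrictMono N := strictMono_nat_of_lt_succ fun i => by
    have h1 : 1 ≤ ∏ k ∈ Finset.range (N i + 1), h k :=
      Finset.one_le_prod' fun k _ => hpos k
    have := hNs i; omega
  apply Set.Finite.subset (Set.finite_Iio a)
  intro m hm
  obtain ⟨⟨i, hi0⟩, ⟨j, hj0⟩⟩ := hm
  have hi : H i η = m := hi0
  have hj : H j η = f m := hj0
  by_contra hma
  have ham : a ≤ m := not_lt.mp hma
  obtain ⟨hmi1, hmi2⟩ := (hi ▸ Hrange i η (fun k _ => hη k))
  obtain ⟨hmj1, hmj2⟩ := (hj ▸ Hrange j η (fun k _ => hη k))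
  rcases le_or_gt (N (i + 1)) (f m) with hle | hlt
  · have := hρ1 m i hmi1 hmi2 hle j η (fun l _ => hη l) hj
    exact ha m ham this.symm
  · have hij : j = i := by
      rcases lt_trichotomy j i with hji | rfl | hji
      · have : N (j + 1) ≤ N i := hNmono.le_iff_le.mpr hji
        have := hf m; omega
      · rfl
      · have : N (i + 1) ≤ N j := hNmono.le_iff_le.mpr hji
        omega
    subst hij
    have : f m = m := hj.symm.trans hi
    have := hf m; omega
end

section
/- Let i ≤ j < ω, let k_0, …, k_j and m_i, …, m_j be positive integers, and let W ⊆ ∏_{ℓ=i}^j k_ℓ. Suppose that for every choice of sets X_ℓ ⊆ k_ℓ (i ≤ ℓ ≤ j) with |X_ℓ| ≤ m_ℓ·∏_{r<ℓ} k_r there exists τ ∈ W with τ(ℓ) ∉ X_ℓ for all ℓ ∈ [i,j]. Then there exists S ⊆ W such that for every τ₀ ∈ S and every ℓ ∈ [i,j], the set {τ(ℓ) : τ ∈ S and τ agrees with τ₀ on [i,ℓ)} has exactly m_ℓ elements. -/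
open Set

section Aux

open scoped Classical

/-- `GoodAux d σ` means the partial sequence `σ` (relevant on `[i, j-d]`) is "good":
at the bottom (`d = 0`, full sequences on `[i,j]`) it is realized by some `τ ∈ W`;
one level up, it has at least `m ℓ` good one-step extensions. -/
noncomputable def GoodAux (i j : ℕ) (k m : ℕ → ℕ) (W : Set (ℕ → ℕ)) : ℕ → (ℕ → ℕ) → Prop
  | 0, σ => ∃ τ ∈ W, ∀ l, i ≤ l → l ≤ j → τ l = σ l
  | (d+1), σ => m (j - d) ≤ ((Finset.range (k (j - d))).filter
      (fun v => GoodAux i j k m W d (Function.update σ (j - d) v))).card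

noncomputable def GoodSucc (i j : ℕ) (k m : ℕ → ℕ) (W : Set (ℕ → ℕ)) (ℓ : ℕ) (σ : ℕ → ℕ) :
    Finset ℕ :=
  (Finset.range (k ℓ)).filter (fun v => GoodAux i j k m W (j - ℓ) (Function.update σ ℓ v))

noncomputable def Seqs (k : ℕ → ℕ) (ℓ : ℕ) : Finset (ℕ → ℕ) :=
  ((Finset.range ℓ).pi (fun r => Finset.range (k r))).image
    (fun f l => if h : l ∈ Finset.range ℓ then f l h else 0)

noncomputable def Cho (i j : ℕ) (k m : ℕ → ℕ) (W : Set (ℕ → ℕ)) (ℓ : ℕ) (σ : ℕ → ℕ) :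
    Finset ℕ :=
  if h : m ℓ ≤ (GoodSucc i j k m W ℓ σ).card then
    (Finset.exists_subset_card_eq h).choose else ∅

noncomputable def BrTree (i j : ℕ) (k m : ℕ → ℕ) (W : Set (ℕ → ℕ)) : ℕ → Finset (ℕ → ℕ)
  | 0 => {fun _ => 0}
  | (n+1) => (BrTree i j k m W n).biUnion
      (fun σ => (Cho i j k m W (i+n) σ).image (fun v => Function.update σ (i+n) v))

variable {i j : ℕ} {k m : ℕ → ℕ} {W : Set (ℕ → ℕ)}

theorem goodAux_congr : ∀ d (σ σ' : ℕ → ℕ), (∀ l, l < j + 1 - d → σ l = σ' l) →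
    (GoodAux i j k m W d σ ↔ GoodAux i j k m W d σ') := by
  intro d
  induction d with
  | zero =>
    intro σ σ' h
    simp only [GoodAux]
    constructor <;> rintro ⟨τ, hτW, hτ⟩ <;> refine ⟨τ, hτW, fun l h1 h2 => ?_⟩
    · rw [hτ l h1 h2]; exact h l (by omega)
    · rw [hτ l h1 h2]; exact (h l (by omega)).symm
  | succ d ih =>
    intro σ σ' h
    simp only [GoodAux]
    have hset : (Finset.range (k (j - d))).filter
        (fun v => GoodAux i j k m W d (Function.update σ (j - d) v)) =
        (Finset.range (k (j - d))).filter
        (fun v => GoodAux i j k m W d (Function.update σ' (j - d) v)) := by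
      ext v
      simp only [Finset.mem_filter]
      refine and_congr_right fun _ => ih _ _ fun l hl => ?_
      rcases eq_or_ne l (j - d) with rfl | hne
      · simp
      · rw [Function.update_of_ne hne, Function.update_of_ne hne]
        exact h l (by omega)
    rw [hset]

theorem cho_spec (hℓj : ℓ ≤ j) (hgood : GoodAux i j k m W (j + 1 - ℓ) ρ) :
    Cho i j k m W ℓ ρ ⊆ GoodSucc i j k m W ℓ ρ ∧ (Cho i j k m W ℓ ρ).card = m ℓ := by
  have e : j + 1 - ℓ = (j - ℓ) + 1 := by omega
  rw [e] at hgood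
  have e2 : j - (j - ℓ) = ℓ := by omega
  simp only [GoodAux, e2] at hgood
  have hgood' : m ℓ ≤ (GoodSucc i j k m W ℓ ρ).card := hgood
  rw [Cho, dif_pos hgood']
  exact (Finset.exists_subset_card_eq hgood').choose_spec

theorem tree_zero : ∀ n, ∀ σ ∈ BrTree i j k m W n, ∀ l, (l < i ∨ i + n ≤ l) → σ l = 0 := by
  intro n
  induction n with
  | zero =>
    intro σ hσ l _
    simp only [BrTree, Finset.mem_singleton] at hσ
    subst hσ; rfl
  | succ n ih =>
    intro σ hσ l hl
    simp only [BrTree, Finset.mem_biUnion, Finset.mem_image] at hσ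
    obtain ⟨ρ, hρ, v, hv, rfl⟩ := hσ
    rw [Function.update_of_ne (by omega)]
    exact ih ρ hρ l (by omega)

theorem tree_good (hroot : GoodAux i j k m W (j + 1 - i) (fun _ => 0)) :
    ∀ n, i + n ≤ j + 1 → ∀ σ ∈ BrTree i j k m W n, GoodAux i j k m W (j + 1 - (i + n)) σ := by
  intro n
  induction n with
  | zero =>
    intro _ σ hσ
    simp only [BrTree, Finset.mem_singleton] at hσ
    subst hσ
    exact hroot
  | succ n ih =>
    intro hn σ hσ
    simp only [BrTree, Finset.mem_biUnion, Finset.mem_image] at hσ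
    obtain ⟨ρ, hρ, v, hv, rfl⟩ := hσ
    have hgood := ih (by omega) ρ hρ
    have hc := cho_spec (ℓ := i + n) (ρ := ρ) (by omega) hgood
    have hvg := hc.1 hv
    simp only [GoodSucc, Finset.mem_filter] at hvg
    have e : j + 1 - (i + (n + 1)) = j - (i + n) := by omega
    rw [e]
    exact hvg.2

theorem tree_extend (hroot : GoodAux i j k m W (j + 1 - i) (fun _ => 0))
    (hm : ∀ ℓ, i ≤ ℓ → ℓ ≤ j → 0 < m ℓ) :
    ∀ dn n, i + n + dn ≤ j + 1 → ∀ ρ ∈ BrTree i j k m W n,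
      ∃ σ ∈ BrTree i j k m W (n + dn), ∀ l, l < i + n → σ l = ρ l := by
  intro dn
  induction dn with
  | zero =>
    intro n _ ρ hρ
    exact ⟨ρ, hρ, fun l _ => rfl⟩
  | succ dn ih =>
    intro n hle ρ hρ
    have hgood := tree_good hroot n (by omega) ρ hρ
    have hc := cho_spec (ℓ := i + n) (ρ := ρ) (by omega) hgood
    have hne : (Cho i j k m W (i+n) ρ).Nonempty := by
      rw [← Finset.card_pos, hc.2]
      exact hm (i+n) (by omega) (by omega)
    obtain ⟨v, hv⟩ := hne
    have hσ' : Function.update ρ (i+n) v ∈ BrTree i j k m W (n+1) := by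
      simp only [BrTree, Finset.mem_biUnion, Finset.mem_image]
      exact ⟨ρ, hρ, v, hv, rfl⟩
    obtain ⟨σ, hσ, hagree⟩ := ih (n+1) (by omega) _ hσ'
    have e : n + (dn + 1) = (n + 1) + dn := by omega
    rw [e]
    refine ⟨σ, hσ, fun l hl => ?_⟩
    rw [hagree l (by omega), Function.update_of_ne (by omega)]

theorem tree_anc : ∀ dn n, ∀ σ ∈ BrTree i j k m W (n + dn),
    ∃ ρ ∈ BrTree i j k m W n, ∀ l, l < i + n → ρ l = σ l := by
  intro dn
  induction dn with
  | zero =>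
    intro n σ hσ
    exact ⟨σ, hσ, fun l _ => rfl⟩
  | succ dn ih =>
    intro n σ hσ
    simp only [BrTree, Finset.mem_biUnion, Finset.mem_image] at hσ
    obtain ⟨ρ', hρ', v, hv, rfl⟩ := hσ
    obtain ⟨ρ, hρ, hagree⟩ := ih n ρ' hρ'
    refine ⟨ρ, hρ, fun l hl => ?_⟩
    rw [hagree l hl]
    have hne : l ≠ i + Nat.add n dn := by simp only [Nat.add_eq]; omega
    exact (Function.update_of_ne hne _ _).symm

theorem tree_mem_cho {n : ℕ} {σ : ℕ → ℕ} (hσ : σ ∈ BrTree i j k m W (n + 1)) :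
    ∃ ρ ∈ BrTree i j k m W n, (∀ l, l < i + n → ρ l = σ l) ∧
      σ (i + n) ∈ Cho i j k m W (i + n) ρ := by
  simp only [BrTree, Finset.mem_biUnion, Finset.mem_image] at hσ
  obtain ⟨ρ, hρ, v, hv, rfl⟩ := hσ
  refine ⟨ρ, hρ, fun l hl => (Function.update_of_ne (by omega) _ _).symm, ?_⟩
  rw [Function.update_self]
  exact hv

theorem tree_ext {n : ℕ} {ρ ρ' : ℕ → ℕ} (hρ : ρ ∈ BrTree i j k m W n)
    (hρ' : ρ' ∈ BrTree i j k m W n) (h : ∀ l, i ≤ l → l < i + n → ρ l = ρ' l) : ρ = ρ' := by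
  funext l
  by_cases hl : i ≤ l ∧ l < i + n
  · exact h l hl.1 hl.2
  · rw [tree_zero n ρ hρ l (by omega), tree_zero n ρ' hρ' l (by omega)]

theorem root_good (i j : ℕ) (k m : ℕ → ℕ) (W : Set (ℕ → ℕ))
    (hk : ∀ ℓ, ℓ ≤ j → 0 < k ℓ)
    (hW : ∀ τ ∈ W, ∀ ℓ, i ≤ ℓ → ℓ ≤ j → τ ℓ < k ℓ)
    (hyp : ∀ X : ℕ → Finset ℕ,
      (∀ ℓ, i ≤ ℓ → ℓ ≤ j → X ℓ ⊆ Finset.range (k ℓ) ∧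
        (X ℓ).card ≤ m ℓ * ∏ r ∈ Finset.range ℓ, k r) →
      ∃ τ ∈ W, ∀ ℓ, i ≤ ℓ → ℓ ≤ j → τ ℓ ∉ X ℓ) :
    GoodAux i j k m W (j + 1 - i) (fun _ => 0) := by
  by_contra hbad
  set X : ℕ → Finset ℕ := fun ℓ => (Finset.range (k ℓ)).filter
    (fun v => ∃ σ ∈ Seqs k ℓ, ¬ GoodAux i j k m W (j + 1 - ℓ) σ ∧
      GoodAux i j k m W (j - ℓ) (Function.update σ ℓ v)) with hX
  have hXb : ∀ ℓ, i ≤ ℓ → ℓ ≤ j → X ℓ ⊆ Finset.range (k ℓ) ∧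
      (X ℓ).card ≤ m ℓ * ∏ r ∈ Finset.range ℓ, k r := by
    intro ℓ hiℓ hℓj
    refine ⟨Finset.filter_subset _ _, ?_⟩
    have hsub : X ℓ ⊆ (Seqs k ℓ).biUnion
        (fun σ => if GoodAux i j k m W (j + 1 - ℓ) σ then ∅ else GoodSucc i j k m W ℓ σ) := by
      intro v hv
      rw [hX] at hv
      simp only [Finset.mem_filter] at hv
      obtain ⟨hvk, σ, hσ, hbσ, hgσ⟩ := hv
      rw [Finset.mem_biUnion]
      refine ⟨σ, hσ, ?_⟩
      rw [if_neg hbσ]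
      simp only [GoodSucc, Finset.mem_filter]
      exact ⟨hvk, hgσ⟩
    calc (X ℓ).card ≤ _ := Finset.card_le_card hsub
      _ ≤ ∑ σ ∈ Seqs k ℓ, (if GoodAux i j k m W (j + 1 - ℓ) σ then (∅ : Finset ℕ)
            else GoodSucc i j k m W ℓ σ).card := Finset.card_biUnion_le
      _ ≤ ∑ σ ∈ Seqs k ℓ, m ℓ := by
          refine Finset.sum_le_sum fun σ _ => ?_
          by_cases hg : GoodAux i j k m W (j + 1 - ℓ) σ
          · rw [if_pos hg]; simp
          · rw [if_neg hg]
            have e : j + 1 - ℓ = (j - ℓ) + 1 := by omega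
            rw [e] at hg
            have e2 : j - (j - ℓ) = ℓ := by omega
            simp only [GoodAux, e2] at hg
            have hg' : ¬ m ℓ ≤ (GoodSucc i j k m W ℓ σ).card := hg
            omega
      _ = (Seqs k ℓ).card * m ℓ := by rw [Finset.sum_const, smul_eq_mul]
      _ ≤ (∏ r ∈ Finset.range ℓ, k r) * m ℓ := by
          refine Nat.mul_le_mul_right _ ?_
          calc (Seqs k ℓ).card ≤ ((Finset.range ℓ).pi (fun r => Finset.range (k r))).card :=
              Finset.card_image_le
            _ = ∏ r ∈ Finset.range ℓ, k r := by
              rw [Finset.card_pi]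
              exact Finset.prod_congr rfl fun r _ => Finset.card_range _
      _ = m ℓ * ∏ r ∈ Finset.range ℓ, k r := Nat.mul_comm _ _
  obtain ⟨τ, hτW, hτav⟩ := hyp X hXb
  have key : ∀ n, n ≤ j + 1 - i →
      ¬ GoodAux i j k m W (j + 1 - (i + n)) (fun l => if i ≤ l ∧ l < i + n then τ l else 0) := by
    intro n
    induction n with
    | zero =>
      intro _
      have e : (fun l => if i ≤ l ∧ l < i + 0 then τ l else 0) = (fun _ => 0 : ℕ → ℕ) :=
        funext fun l => if_neg (by omega)
      rw [e]
      exact hbad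
    | succ n ih =>
      intro hn hgood
      have hnj : i + n ≤ j := by omega
      set σn : ℕ → ℕ := fun l => if i ≤ l ∧ l < i + n then τ l else 0 with hσn
      have hupd : (fun l => if i ≤ l ∧ l < i + (n+1) then τ l else 0) =
          Function.update σn (i+n) (τ (i+n)) := by
        funext l
        by_cases hl : l = i + n
        · subst hl
          rw [Function.update_self, if_pos ⟨by omega, by omega⟩]
        · rw [Function.update_of_ne hl]
          simp only [hσn]
          by_cases h2 : i ≤ l ∧ l < i + n
          · rw [if_pos ⟨h2.1, by omega⟩, if_pos h2]
          · rw [if_neg (by omega), if_neg h2]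
      rw [hupd] at hgood
      have e : j + 1 - (i + (n + 1)) = j - (i + n) := by omega
      rw [e] at hgood
      have hmem : σn ∈ Seqs k (i + n) := by
        simp only [Seqs, Finset.mem_image]
        refine ⟨fun l _ => σn l, ?_, ?_⟩
        · rw [Finset.mem_pi]
          intro l hl
          rw [Finset.mem_range] at hl ⊢
          simp only [hσn]
          by_cases h2 : i ≤ l ∧ l < i + n
          · rw [if_pos h2]; exact hW τ hτW l h2.1 (by omega)
          · rw [if_neg h2]; exact hk l (by omega)
        · funext l
          by_cases hl : l ∈ Finset.range (i + n)
          · rw [dif_pos hl]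
          · rw [dif_neg hl]
            simp only [hσn]
            rw [Finset.mem_range] at hl
            exact (if_neg (by omega)).symm
      have hXmem : τ (i + n) ∈ X (i + n) := by
        rw [hX]
        simp only [Finset.mem_filter]
        exact ⟨Finset.mem_range.2 (hW τ hτW _ (by omega) hnj), σn, hmem, ih (by omega), hgood⟩
      exact hτav (i + n) (by omega) hnj hXmem
  have hfin := key (j + 1 - i) le_rfl
  apply hfin
  have e : j + 1 - (i + (j + 1 - i)) = 0 := by omega
  rw [e]
  simp only [GoodAux]
  refine ⟨τ, hτW, fun l h1 h2 => (if_pos ⟨h1, by omega⟩).symm⟩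

end Aux

/-- Members of `∏_{ℓ=i}^j k ℓ` are coded as functions `τ : ℕ → ℕ` with
`τ ℓ < k ℓ` for `ℓ ∈ [i,j]` (only the values on `[i,j]` matter).  If for every choice of
sets `X ℓ ⊆ k ℓ` (`i ≤ ℓ ≤ j`) with `|X ℓ| ≤ m ℓ · ∏_{r<ℓ} k r` some `τ ∈ W` avoids all
of them, then there is a nonempty `S ⊆ W` that is an `(m_i, …, m_j)`-branching "tree":
for every `τ₀ ∈ S` and `ℓ ∈ [i,j]`, the set of values `τ ℓ` over `τ ∈ S` agreeing with
`τ₀` on `[i,ℓ)` has exactly `m ℓ` elements. -/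
theorem exists_branching_subfamily
    (i j : ℕ) (hij : i ≤ j) (k m : ℕ → ℕ)
    (hk : ∀ ℓ, ℓ ≤ j → 0 < k ℓ) (hm : ∀ ℓ, i ≤ ℓ → ℓ ≤ j → 0 < m ℓ)
    (W : Set (ℕ → ℕ)) (hW : ∀ τ ∈ W, ∀ ℓ, i ≤ ℓ → ℓ ≤ j → τ ℓ < k ℓ)
    (hyp : ∀ X : ℕ → Finset ℕ,
      (∀ ℓ, i ≤ ℓ → ℓ ≤ j → X ℓ ⊆ Finset.range (k ℓ) ∧
        (X ℓ).card ≤ m ℓ * ∏ r ∈ Finset.range ℓ, k r) →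
      ∃ τ ∈ W, ∀ ℓ, i ≤ ℓ → ℓ ≤ j → τ ℓ ∉ X ℓ) :
    ∃ S : Set (ℕ → ℕ), S.Nonempty ∧ S ⊆ W ∧
      ∀ τ₀ ∈ S, ∀ ℓ, i ≤ ℓ → ℓ ≤ j →
        {v : ℕ | ∃ τ ∈ S, (∀ l, i ≤ l → l < ℓ → τ l = τ₀ l) ∧ τ ℓ = v}.ncard = m ℓ := by
  classical
  have hroot := root_good i j k m W hk hW hyp
  set N := j + 1 - i with hN
  set pk : (ℕ → ℕ) → (ℕ → ℕ) := fun σ =>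
    if h : ∃ τ ∈ W, ∀ l, i ≤ l → l ≤ j → τ l = σ l then h.choose else σ with hpkdef
  have hpk : ∀ σ ∈ BrTree i j k m W N, pk σ ∈ W ∧ ∀ l, i ≤ l → l ≤ j → pk σ l = σ l := by
    intro σ hσ
    have hg : GoodAux i j k m W (j + 1 - (i + N)) σ :=
      tree_good hroot N (by omega) σ hσ
    have e : j + 1 - (i + N) = 0 := by omega
    rw [e] at hg
    simp only [GoodAux] at hg
    have : pk σ = hg.choose := by rw [hpkdef]; exact dif_pos hg
    rw [this]
    exact ⟨hg.choose_spec.1, hg.choose_spec.2⟩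
  refine ⟨pk '' (BrTree i j k m W N : Set (ℕ → ℕ)), ?_, ?_, ?_⟩
  · -- nonempty
    have h0 : (fun _ => 0 : ℕ → ℕ) ∈ BrTree i j k m W 0 := by
      simp [BrTree]
    obtain ⟨σ, hσ, -⟩ := tree_extend hroot hm N 0 (by omega) _ h0
    rw [Nat.zero_add] at hσ
    exact ⟨pk σ, ⟨σ, hσ, rfl⟩⟩
  · rintro τ ⟨σ, hσ, rfl⟩
    exact (hpk σ hσ).1
  · rintro τ₀ ⟨σ₀, hσ₀, rfl⟩ ℓ hiℓ hℓj
    -- the ancestor of σ₀ at level ℓ+1 and its parent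
    have eN : N = ((ℓ - i) + 1) + (j - ℓ) := by omega
    have hσ₀' : σ₀ ∈ BrTree i j k m W (((ℓ - i) + 1) + (j - ℓ)) := by rw [← eN]; exact hσ₀
    obtain ⟨σ₁, hσ₁T, hσ₁a⟩ := tree_anc (j - ℓ) ((ℓ - i) + 1) σ₀ hσ₀'
    obtain ⟨ρ, hρT, hρa, hρc⟩ := tree_mem_cho hσ₁T
    have eℓ : i + (ℓ - i) = ℓ := by omega
    rw [eℓ] at hρa hρc
    have heq : {v : ℕ | ∃ τ ∈ pk '' (BrTree i j k m W N : Set (ℕ → ℕ)),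
        (∀ l, i ≤ l → l < ℓ → τ l = pk σ₀ l) ∧ τ ℓ = v} = ↑(Cho i j k m W ℓ ρ) := by
      ext v
      simp only [Set.mem_setOf_eq, Finset.coe_sort_coe, Finset.mem_coe]
      constructor
      · rintro ⟨τ, ⟨σ, hσT, rfl⟩, hagree, rfl⟩
        have hσT' : σ ∈ BrTree i j k m W (((ℓ - i) + 1) + (j - ℓ)) := by rw [← eN]; exact hσT
        obtain ⟨σ₁', hσ₁'T, hσ₁'a⟩ := tree_anc (j - ℓ) ((ℓ - i) + 1) σ hσT'
        obtain ⟨ρ', hρ'T, hρ'a, hρ'c⟩ := tree_mem_cho hσ₁'T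
        rw [eℓ] at hρ'a hρ'c
        -- σ agrees with σ₀ on [i, ℓ)
        have hagree' : ∀ l, i ≤ l → l < ℓ → σ l = σ₀ l := by
          intro l h1 h2
          have e1 := (hpk σ hσT).2 l h1 (by omega)
          have e2 := (hpk σ₀ hσ₀).2 l h1 (by omega)
          rw [← e1, ← e2]
          exact hagree l h1 h2
        have hρρ' : ρ' = ρ := by
          refine tree_ext hρ'T hρT fun l h1 h2 => ?_
          rw [eℓ] at h2
          rw [hρ'a l h2, hρa l h2, hσ₁'a l (by omega), hσ₁a l (by omega)]
          exact hagree' l h1 h2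
        have hvℓ : pk σ ℓ = σ ℓ := (hpk σ hσT).2 ℓ hiℓ hℓj
        rw [hvℓ, ← hσ₁'a ℓ (by omega), ← hρρ']
        exact hρ'c
      · intro hv
        have hσ'T : Function.update ρ ℓ v ∈ BrTree i j k m W ((ℓ - i) + 1) := by
          simp only [BrTree, Finset.mem_biUnion, Finset.mem_image]
          exact ⟨ρ, hρT, v, by rw [eℓ]; exact hv, by rw [eℓ]⟩
        obtain ⟨σ, hσT, hσa⟩ := tree_extend hroot hm (j - ℓ) ((ℓ - i) + 1) (by omega) _ hσ'T
        have hσTN : σ ∈ BrTree i j k m W N := by rw [eN]; exact hσT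
        refine ⟨pk σ, ⟨σ, hσTN, rfl⟩, ?_, ?_⟩
        · intro l h1 h2
          have e1 := (hpk σ hσTN).2 l h1 (by omega)
          have e2 := (hpk σ₀ hσ₀).2 l h1 (by omega)
          rw [e1, e2, hσa l (by omega), Function.update_of_ne (by omega),
            hρa l h2, hσ₁a l (by omega)]
        · have e1 := (hpk σ hσTN).2 ℓ hiℓ hℓj
          rw [e1, hσa ℓ (by omega), Function.update_self]
    rw [heq, Set.ncard_coe_finset]
    have hgood := tree_good hroot (ℓ - i) (by omega) ρ hρT
    rw [eℓ] at hgood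
    exact (cho_spec hℓj hgood).2
end

section
/- Let Φ ∈ ω^ω be strictly increasing, let ⟨n_i, m_i, k_i : i < ω⟩ be the Φ-constructor, and let functions f^r_ℓ (ℓ < k_r, r < ω) with the uniform-fiber property be given. Suppose 0 < i ≤ j < ω and ∅ ≠ S ⊆ ∏_{r=i}^j k_r is such that for each η ∈ S and r ∈ [i,j], |{τ(r) : τ ∈ S and τ agrees with η on [i,r)}| = m_r. Then the number of ρ ∈ 2^{[n_i, n_{j+1})} for which there exists σ ∈ 2^{[n_{i−1}, n_j)} with |{τ ∈ S : f^{i,j}_τ(ρ) = σ}| / |S| > 7 / 2^{n_j − n_{i−1}} is strictly less than (1/2)·2^{n_{j+1} − n_i}. -/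
open Set Filter

namespace C25

attribute [local instance] Classical.propDecidable

/-- binary strings supported on `[a,b)` -/
def BS (a b : ℕ) : Type := {f : ℕ → Bool // ∀ x ∉ Set.Ico a b, f x = false}

def bsEquiv (a b : ℕ) : BS a b ≃ ({x // x ∈ Finset.Ico a b} → Bool) where
  toFun f x := f.1 x.1
  invFun g := ⟨fun x => if h : x ∈ Finset.Ico a b then g ⟨x, h⟩ else false, by
    intro x hx
    have : x ∉ Finset.Ico a b := by
      simpa [Finset.mem_Ico, Set.mem_Ico] using hx
    simp [this]⟩
  left_inv f := by
    apply Subtype.ext; funext x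
    by_cases h : x ∈ Finset.Ico a b
    · simp [h]
    · simp only [h, dif_neg, not_false_iff]
      exact (f.2 x (by simpa [Finset.mem_Ico, Set.mem_Ico] using h)).symm
  right_inv g := by funext x; simp [x.2]

noncomputable instance (a b : ℕ) : Fintype (BS a b) :=
  Fintype.ofEquiv _ (bsEquiv a b).symm

lemma card_BS (a b : ℕ) : Fintype.card (BS a b) = 2 ^ (b - a) := by
  rw [Fintype.card_congr (bsEquiv a b), Fintype.card_fun]
  simp [Fintype.card_coe]

lemma natCard_BS (a b : ℕ) : Nat.card (BS a b) = 2 ^ (b - a) := by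
  rw [Nat.card_eq_fintype_card, card_BS]

/-- restriction of a function to `[a,b)` -/
def res (a b : ℕ) (f : ℕ → Bool) : BS a b :=
  ⟨fun x => if a ≤ x ∧ x < b then f x else false, by
    intro x hx
    have : ¬(a ≤ x ∧ x < b) := by simpa [Set.mem_Ico] using hx
    simp [this]⟩

lemma res_agree (a b : ℕ) (f : ℕ → Bool) : ∀ x ∈ Set.Ico a b, f x = (res a b f).1 x := by
  intro x hx
  have : a ≤ x ∧ x < b := by simpa [Set.mem_Ico] using hx
  simp [res, this]

def flat (a b : ℕ) (P : (ℕ → Bool) → Prop) :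
    {ρ : ℕ → Bool // (∀ x ∉ Set.Ico a b, ρ x = false) ∧ P ρ} ≃ {x : BS a b // P x.1} where
  toFun := fun x => ⟨⟨x.1, x.2.1⟩, x.2.2⟩
  invFun := fun x => ⟨x.1.1, x.1.2, x.2⟩
  left_inv := fun _ => rfl
  right_inv := fun _ => rfl

/-- three way split -/
def triple (a b c d : ℕ) (hab : a ≤ b) (hbc : b ≤ c) (hcd : c ≤ d) :
    BS a d ≃ BS a b × BS b c × BS c d where
  toFun f := (res a b f.1, res b c f.1, res c d f.1)
  invFun p := ⟨fun x => p.1.1 x || p.2.1.1 x || p.2.2.1 x, by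
    intro x hx
    have hx' : ¬(a ≤ x ∧ x < d) := by simpa [Set.mem_Ico] using hx
    have h1 : p.1.1 x = false := p.1.2 x (by simp [Set.mem_Ico]; omega)
    have h2 : p.2.1.1 x = false := p.2.1.2 x (by simp [Set.mem_Ico]; omega)
    have h3 : p.2.2.1 x = false := p.2.2.2 x (by simp [Set.mem_Ico]; omega)
    simp [h1, h2, h3]⟩
  left_inv f := by
    apply Subtype.ext; funext x
    simp only [res]
    by_cases h1 : a ≤ x ∧ x < b
    · have c2 : ¬(b ≤ x ∧ x < c) := by omega
      have c3 : ¬(c ≤ x ∧ x < d) := by omega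
      simp [h1, c2, c3]
    · by_cases h2 : b ≤ x ∧ x < c
      · have c3 : ¬(c ≤ x ∧ x < d) := by omega
        simp [h1, h2, c3]
      · by_cases h3 : c ≤ x ∧ x < d
        · simp [h1, h2, h3]
        · have hf : f.1 x = false := f.2 x (by simp [Set.mem_Ico]; omega)
          simp [h1, h2, h3, hf]
  right_inv p := by
    obtain ⟨u, v, w⟩ := p
    refine Prod.ext ?_ (Prod.ext ?_ ?_) <;> apply Subtype.ext <;> funext x <;>
      simp only [res]
    · by_cases h1 : a ≤ x ∧ x < b
      · have hv : v.1 x = false := v.2 x (by simp [Set.mem_Ico]; omega)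
        have hw : w.1 x = false := w.2 x (by simp [Set.mem_Ico]; omega)
        simp [h1, hv, hw]
      · simp only [h1, if_neg, not_false_iff]
        exact (u.2 x (by simpa [Set.mem_Ico] using h1)).symm
    · by_cases h2 : b ≤ x ∧ x < c
      · have hu : u.1 x = false := u.2 x (by simp [Set.mem_Ico]; omega)
        have hw : w.1 x = false := w.2 x (by simp [Set.mem_Ico]; omega)
        simp [h2, hu, hw]
      · simp only [h2, if_neg, not_false_iff]
        exact (v.2 x (by simpa [Set.mem_Ico] using h2)).symm
    · by_cases h3 : c ≤ x ∧ x < d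
      · have hu : u.1 x = false := u.2 x (by simp [Set.mem_Ico]; omega)
        have hv : v.1 x = false := v.2 x (by simp [Set.mem_Ico]; omega)
        simp [h3, hu, hv]
      · simp only [h3, if_neg, not_false_iff]
        exact (w.2 x (by simpa [Set.mem_Ico] using h3)).symm

def prodmid {α β γ : Type*} (Q : β → Prop) :
    {x : α × β × γ // Q x.2.1} ≃ α × {y : β // Q y} × γ where
  toFun := fun x => (x.1.1, ⟨x.1.2.1, x.2⟩, x.1.2.2)
  invFun := fun y => ⟨(y.1, y.2.1.1, y.2.2), y.2.1.2⟩
  left_inv := fun _ => rfl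
  right_inv := fun _ => rfl

/-- counting a predicate that only depends on the middle part -/
lemma card_midPred (a b c d : ℕ) (hab : a ≤ b) (hbc : b ≤ c) (hcd : c ≤ d)
    (Q : BS b c → Prop) :
    Nat.card {f : BS a d // Q (res b c f.1)} =
      2 ^ (b - a) * Nat.card {g : BS b c // Q g} * 2 ^ (d - c) := by
  have e1 : {f : BS a d // Q (res b c f.1)} ≃ {x : BS a b × BS b c × BS c d // Q x.2.1} :=
    (triple a b c d hab hbc hcd).subtypeEquiv (fun f => by rfl)
  have e2 := prodmid (α := BS a b) (γ := BS c d) Q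
  rw [Nat.card_congr (e1.trans e2)]
  rw [Nat.card_prod, Nat.card_prod, natCard_BS, natCard_BS]
  have : Nat.card {y : BS b c // Q y} = Nat.card {g : BS b c // Q g} := rfl
  ring


section Fiber

variable (n k : ℕ → ℕ) (F : ℕ → ℕ → (ℕ → Bool) → (ℕ → Bool))

lemma fiber_count
    (hFsupp : ∀ r, 1 ≤ r → ∀ ℓ < k r, ∀ ρ : ℕ → Bool,
      ∀ x ∉ Set.Ico (n (r - 1)) (n r), F r ℓ ρ x = false)
    (hFfib : ∀ r, 1 ≤ r → ∀ ν : ℕ → ℕ → Bool,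
      (∀ ℓ < k r, ∀ x ∉ Set.Ico (n (r - 1)) (n r), ν ℓ x = false) →
      Nat.card {ρ : ℕ → Bool // (∀ x ∉ Set.Ico (n r) (n (r + 1)), ρ x = false) ∧
        ∀ ℓ < k r, F r ℓ ρ = ν ℓ} = 2 ^ (k r * n (r - 1)))
    (r : ℕ) (hr : 1 ≤ r) :
    ∀ M (C : Finset ℕ), (∀ v ∈ C, v < k r) → C.card + M = k r →
      ∀ (a : ℕ → ℕ → Bool), (∀ v ∈ C, ∀ x ∉ Set.Ico (n (r-1)) (n r), a v x = false) →
      Nat.card {ρ : BS (n r) (n (r+1)) // ∀ v ∈ C, F r v ρ.1 = a v}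
        = 2 ^ (k r * n (r-1)) * (2 ^ (n r - n (r-1))) ^ M := by
  intro M
  induction M with
  | zero =>
    intro C hCk hM a ha
    have hC : C = Finset.range (k r) := by
      apply Finset.eq_of_subset_of_card_le
      · intro v hv; simpa using hCk v hv
      · simp; omega
    subst hC
    set ν : ℕ → ℕ → Bool := fun ℓ => if ℓ ∈ Finset.range (k r) then a ℓ else (fun _ => false)
      with hν
    have hνs : ∀ ℓ < k r, ∀ x ∉ Set.Ico (n (r-1)) (n r), ν ℓ x = false := by
      intro ℓ hℓ x hx
      have hm : ℓ ∈ Finset.range (k r) := by simpa using hℓ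
      simp only [hν, if_pos hm]
      exact ha ℓ hm x hx
    have hfib := hFfib r hr ν hνs
    rw [pow_zero, mul_one, ← hfib]
    apply Nat.card_congr
    refine (Equiv.subtypeEquivRight ?_).trans (flat _ _ _).symm
    intro x
    constructor
    · intro h ℓ hℓ
      have hm : ℓ ∈ Finset.range (k r) := by simpa using hℓ
      simp only [hν, if_pos hm]
      exact h ℓ hm
    · intro h v hv
      have hv' : v < k r := by simpa using hv
      have := h v hv'
      simpa only [hν, if_pos hv] using this
  | succ M ih =>
    intro C hCk hM a ha
    -- pick a fresh coordinate
    have hne : (Finset.range (k r) \ C).Nonempty := by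
      rw [← Finset.card_pos, Finset.card_sdiff_of_subset (by intro v hv; simpa using hCk v hv)]
      simp; omega
    obtain ⟨v0, hv0⟩ := hne
    have hv0k : v0 < k r := by simp at hv0; exact hv0.1
    have hv0C : v0 ∉ C := by simp at hv0; exact hv0.2
    set φ : {ρ : BS (n r) (n (r+1)) // ∀ v ∈ C, F r v ρ.1 = a v} → BS (n (r-1)) (n r) :=
      fun x => ⟨F r v0 x.1.1, fun y hy => hFsupp r hr v0 hv0k x.1.1 y hy⟩ with hφ
    have key : ∀ w : BS (n (r-1)) (n r), Nat.card {x // φ x = w}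
        = 2 ^ (k r * n (r-1)) * (2 ^ (n r - n (r-1))) ^ M := by
      intro w
      have e1 : {x // φ x = w} ≃
          {x : {ρ : BS (n r) (n (r+1)) // ∀ v ∈ C, F r v ρ.1 = a v} // F r v0 x.1.1 = w.1} :=
        Equiv.subtypeEquivRight (fun x => by
          constructor
          · intro h; rw [← h]
          · intro h; apply Subtype.ext; exact h)
      have e2 := Equiv.subtypeSubtypeEquivSubtypeInter
        (fun ρ : BS (n r) (n (r+1)) => ∀ v ∈ C, F r v ρ.1 = a v)
        (fun ρ : BS (n r) (n (r+1)) => F r v0 ρ.1 = w.1)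
      have e3 : {ρ : BS (n r) (n (r+1)) // (∀ v ∈ C, F r v ρ.1 = a v) ∧ F r v0 ρ.1 = w.1} ≃
          {ρ : BS (n r) (n (r+1)) // ∀ v ∈ insert v0 C,
            F r v ρ.1 = (Function.update a v0 w.1) v} :=
        Equiv.subtypeEquivRight (fun ρ => by
          constructor
          · intro h v hv
            rcases Finset.mem_insert.1 hv with hv | hv
            · subst hv; rw [Function.update_self]; exact h.2
            · rw [Function.update_of_ne (by intro hvv; exact hv0C (hvv ▸ hv))]; exact h.1 v hv
          · intro h
            constructor
            · intro v hv
              have := h v (Finset.mem_insert_of_mem hv)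
              rwa [Function.update_of_ne (by intro hvv; exact hv0C (hvv ▸ hv))] at this
            · have := h v0 (Finset.mem_insert_self v0 C)
              rwa [Function.update_self] at this)
      rw [Nat.card_congr ((e1.trans e2).trans e3)]
      refine ih (insert v0 C) ?_ ?_ _ ?_
      · intro v hv
        rcases Finset.mem_insert.1 hv with hv | hv
        · subst hv; exact hv0k
        · exact hCk v hv
      · rw [Finset.card_insert_of_notMem hv0C]; omega
      · intro v hv x hx
        rcases Finset.mem_insert.1 hv with hv | hv
        · subst hv; rw [Function.update_self]; exact w.2 x hx
        · rw [Function.update_of_ne (by intro hvv; exact hv0C (hvv ▸ hv))]; exact ha v hv x hx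
    have hdecomp : Nat.card {ρ : BS (n r) (n (r+1)) // ∀ v ∈ C, F r v ρ.1 = a v}
        = ∑ w : BS (n (r-1)) (n r), Nat.card {x // φ x = w} := by
      rw [Nat.card_congr (Equiv.sigmaFiberEquiv φ).symm, Nat.card_eq_fintype_card,
        Fintype.card_sigma]
      congr 1; funext w; rw [Nat.card_eq_fintype_card]
    rw [hdecomp]
    simp only [key]
    rw [Finset.sum_const, Finset.card_univ, card_BS]
    ring

end Fiber

/-- prefix restriction -/
def rp (i l : ℕ) (τ : ℕ → ℕ) : ℕ → ℕ := fun r => if i ≤ r ∧ r < l then τ r else 0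

def PmD (m : ℕ → ℕ) (l : ℕ) : ℕ := ∏ r ∈ Finset.range l, m r
def muD (n m : ℕ → ℕ) (l : ℕ) : ℕ := PmD m l * 2 ^ (2 * n l + n (l-1) + 3*l)
def dD (n m : ℕ → ℕ) (l : ℕ) : ℕ := PmD m l * 2 ^ (2 * n l + 2*l)
def tD (n m : ℕ → ℕ) (l : ℕ) : ℕ := muD n m l + dD n m l

end C25

open C25

attribute [local instance] Classical.propDecidable

set_option maxHeartbeats 4000000 in
/-- Claim 2.5 of the paper.  Binary strings in `2^{[a,b)}` are coded as
functions `ℕ → Bool` vanishing (`= false`) outside `[a,b)`; members of `∏_{r=i}^j k r` are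
coded as functions `τ : ℕ → ℕ` with `τ r < k r` on `[i,j]` and `τ r = 0` off `[i,j]`.
`n, m, k` form the `Φ`-constructor, `F r ℓ` are the functions
`f^r_ℓ : 2^{[n_r, n_{r+1})} → 2^{[n_{r-1}, n_r)}` with the uniform-fiber property, and
`f^{i,j}_τ ρ = fun x => (Finset.Icc i j).sup fun r => F r (τ r) ρ x` is their union.
If `0 < i ≤ j` and `∅ ≠ S ⊆ ∏_{r=i}^j k r` is `m_r`-branching, then the number of
`ρ ∈ 2^{[n_i, n_{j+1})}` admitting `σ ∈ 2^{[n_{i-1}, n_j)}` with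
`|{τ ∈ S : f^{i,j}_τ ρ = σ}| / |S| > 7 / 2^{n_j - n_{i-1}}` is `< (1/2)·2^{n_{j+1} - n_i}`. -/
theorem card_bad_rho_lt
    (Φ : ℕ → ℕ) (hΦ : StrictMono Φ)
    (n m k : ℕ → ℕ)
    (hn0 : n 0 = 2)
    (hm : ∀ i, m i = (∏ j ∈ Finset.range i, m j) * 2 ^ (3 * (n i + i)))
    (hk : ∀ i, k i = (m i * ∏ j ∈ Finset.range i, k j) *
      Φ (m i * ∏ j ∈ Finset.range i, k j))
    (hn : ∀ i, n (i + 1) = n i * (k i + 1))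
    (F : ℕ → ℕ → (ℕ → Bool) → (ℕ → Bool))
    (hFsupp : ∀ r, 1 ≤ r → ∀ ℓ < k r, ∀ ρ : ℕ → Bool,
      ∀ x ∉ Set.Ico (n (r - 1)) (n r), F r ℓ ρ x = false)
    (hFloc : ∀ r, 1 ≤ r → ∀ ℓ < k r, ∀ ρ ρ' : ℕ → Bool,
      (∀ x ∈ Set.Ico (n r) (n (r + 1)), ρ x = ρ' x) → F r ℓ ρ = F r ℓ ρ')
    (hFfib : ∀ r, 1 ≤ r → ∀ ν : ℕ → ℕ → Bool,
      (∀ ℓ < k r, ∀ x ∉ Set.Ico (n (r - 1)) (n r), ν ℓ x = false) →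
      Nat.card {ρ : ℕ → Bool // (∀ x ∉ Set.Ico (n r) (n (r + 1)), ρ x = false) ∧
        ∀ ℓ < k r, F r ℓ ρ = ν ℓ} = 2 ^ (k r * n (r - 1)))
    (i j : ℕ) (hi : 0 < i) (hij : i ≤ j)
    (S : Set (ℕ → ℕ)) (hSne : S.Nonempty)
    (hSmem : ∀ τ ∈ S, (∀ r, i ≤ r → r ≤ j → τ r < k r) ∧ ∀ r, r ∉ Set.Icc i j → τ r = 0)
    (hSbranch : ∀ η ∈ S, ∀ r, i ≤ r → r ≤ j →
      {v : ℕ | ∃ τ ∈ S, (∀ l, i ≤ l → l < r → τ l = η l) ∧ τ r = v}.ncard = m r) :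
    2 * Nat.card {ρ : ℕ → Bool //
        (∀ x ∉ Set.Ico (n i) (n (j + 1)), ρ x = false) ∧
        ∃ σ : ℕ → Bool, (∀ x ∉ Set.Ico (n (i - 1)) (n j), σ x = false) ∧
          7 * Nat.card S <
            2 ^ (n j - n (i - 1)) *
              Nat.card {τ : ℕ → ℕ // τ ∈ S ∧
                (fun x => (Finset.Icc i j).sup fun r => F r (τ r) ρ x) = σ}}
      < 2 ^ (n (j + 1) - n i) := by
  classical
  -- ## basic growth facts
  have hΦge : ∀ x : ℕ, x ≤ Φ x := fun x => hΦ.le_apply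
  have hnstep : ∀ l, n l ≤ n (l+1) := by
    intro l; rw [hn l]; exact Nat.le_mul_of_pos_right _ (by omega)
  have hnmono : ∀ a b, a ≤ b → n a ≤ n b := fun a b hab =>
    monotone_nat_of_le_succ hnstep hab
  have hn2 : ∀ l, 2 ≤ n l := by
    intro l; have := hnmono 0 l (Nat.zero_le _); omega
  have hmpos : ∀ l, 1 ≤ m l := by
    intro l
    induction l using Nat.strong_induction_on with
    | _ l ih =>
      rw [hm l]
      have h1 : 1 ≤ ∏ r ∈ Finset.range l, m r :=
        Finset.one_le_prod' (fun r hr => ih r (Finset.mem_range.1 hr))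
      have h2 : 1 ≤ 2 ^ (3 * (n l + l)) := Nat.one_le_two_pow
      exact Nat.one_le_iff_ne_zero.2 (by positivity)
  have hPmpos : ∀ l, 1 ≤ PmD m l := by
    intro l; exact Finset.one_le_prod' (fun r _ => hmpos r)
  have hm2 : ∀ l, 2 ≤ m l := by
    intro l
    rw [hm l]
    have h1 : 1 ≤ ∏ r ∈ Finset.range l, m r :=
      Finset.one_le_prod' (fun r _ => hmpos r)
    have h2 : 2 ≤ 2 ^ (3 * (n l + l)) := by
      calc 2 = 2^1 := rfl
      _ ≤ 2 ^ (3 * (n l + l)) := Nat.pow_le_pow_right (by omega) (by have := hn2 l; omega)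
    calc 2 = 1 * 2 := rfl
    _ ≤ (∏ r ∈ Finset.range l, m r) * 2 ^ (3 * (n l + l)) := Nat.mul_le_mul h1 h2
  have hkpos : ∀ l, 1 ≤ k l := by
    intro l
    induction l using Nat.strong_induction_on with
    | _ l ih =>
      rw [hk l]
      have h1 : 1 ≤ m l * ∏ r ∈ Finset.range l, k r := by
        have := hmpos l
        have h2 : 1 ≤ ∏ r ∈ Finset.range l, k r :=
          Finset.one_le_prod' (fun r hr => ih r (Finset.mem_range.1 hr))
        exact Nat.one_le_iff_ne_zero.2 (by positivity)
      have h3 : 1 ≤ Φ (m l * ∏ r ∈ Finset.range l, k r) := le_trans h1 (hΦge _)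
      exact Nat.one_le_iff_ne_zero.2 (by positivity)
  have hk2 : ∀ l, 2 ≤ k l := by
    intro l
    rw [hk l]
    have h2 : 1 ≤ ∏ r ∈ Finset.range l, k r :=
      Finset.one_le_prod' (fun r _ => hkpos r)
    have h1 : 2 ≤ m l * ∏ r ∈ Finset.range l, k r := by
      calc 2 = 2 * 1 := rfl
      _ ≤ m l * ∏ r ∈ Finset.range l, k r := Nat.mul_le_mul (hm2 l) h2
    have h3 : 2 ≤ Φ (m l * ∏ r ∈ Finset.range l, k r) := le_trans h1 (hΦge _)
    calc 2 = 2 * 1 := rfl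
    _ ≤ (m l * ∏ r ∈ Finset.range l, k r) * Φ (m l * ∏ r ∈ Finset.range l, k r) :=
      Nat.mul_le_mul h1 (le_trans one_le_two h3)
  -- key arithmetic identities
  have hmuexp : ∀ l, muD n m l * 2 ^ (n l - n (l-1)) = m l := by
    intro l
    have hle : n (l-1) ≤ n l := hnmono _ _ (by omega)
    rw [muD, mul_assoc, ← pow_add, hm l]
    have : 2 * n l + n (l-1) + 3*l + (n l - n (l-1)) = 3 * (n l + l) := by omega
    rw [this]; rfl
  have hdDpos : ∀ l, 1 ≤ dD n m l := by
    intro l; rw [dD]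
    exact Nat.mul_pos (hPmpos l) (Nat.two_pow_pos _)
  have hE0 : ∀ l, 2 ^ (k l * n (l-1)) * (2 ^ (n l - n (l-1))) ^ (k l) = 2 ^ (n (l+1) - n l) := by
    intro l
    have hle : n (l-1) ≤ n l := hnmono _ _ (by omega)
    rw [← pow_mul, ← pow_add]
    congr 1
    have h1 : n (l+1) = n l + n l * k l := by rw [hn l]; ring
    have h2 : k l * n (l-1) + (n l - n (l-1)) * k l = n l * k l := by
      have h3 : k l * n (l-1) + (n l - n (l-1)) * k l = (n (l-1) + (n l - n (l-1))) * k l := by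
        ring
      rw [h3]; congr 1; omega
    omega
  -- ## finiteness of S, child sets, prefix sets
  have hSfin : S.Finite := by
    have hinj : Set.InjOn (fun τ => fun r : (Finset.Icc i j : Finset ℕ) =>
        if h : τ r.1 < k r.1 then (⟨τ r.1, h⟩ : Fin (k r.1)) else ⟨0, by have := hkpos r.1; omega⟩) S := by
      intro τ hτ τ' hτ' h
      funext r
      by_cases hr : r ∈ Set.Icc i j
      · have hr' : i ≤ r ∧ r ≤ j := by simpa [Set.mem_Icc] using hr
        have hrF : r ∈ Finset.Icc i j := by simpa [Finset.mem_Icc] using hr'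
        have h1 : τ r < k r := (hSmem τ hτ).1 r hr'.1 hr'.2
        have h2 : τ' r < k r := (hSmem τ' hτ').1 r hr'.1 hr'.2
        have := congrFun h ⟨r, hrF⟩
        simp only [dif_pos h1, dif_pos h2] at this
        exact congrArg Fin.val this
      · rw [(hSmem τ hτ).2 r hr, (hSmem τ' hτ').2 r hr]
    exact Set.Finite.of_finite_image (Set.toFinite _) hinj
  have hfinC : ∀ (l : ℕ) (p : ℕ → ℕ), ({v | ∃ τ ∈ S, rp i l τ = p ∧ τ l = v}).Finite := by
    intro l p
    apply Set.Finite.subset (hSfin.image (fun τ => τ l))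
    rintro v ⟨τ, hτ, _, hv⟩
    exact ⟨τ, hτ, hv⟩
  have hrpiff : ∀ (l : ℕ) (τ η : ℕ → ℕ), rp i l τ = rp i l η ↔
      (∀ l', i ≤ l' → l' < l → τ l' = η l') := by
    intro l τ η
    constructor
    · intro h l' h1 h2
      have := congrFun h l'
      simpa [rp, h1, h2] using this
    · intro h; funext r
      by_cases hr : i ≤ r ∧ r < l
      · simp only [rp, if_pos hr]; exact h r hr.1 hr.2
      · simp only [rp, if_neg hr]
  have hCFmem : ∀ l p v, v ∈ (hfinC l p).toFinset ↔ ∃ τ ∈ S, rp i l τ = p ∧ τ l = v := by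
    intro l p v; exact Set.Finite.mem_toFinset _
  have hCFcard : ∀ l, i ≤ l → l ≤ j → ∀ η ∈ S, ((hfinC l (rp i l η)).toFinset).card = m l := by
    intro l hil hlj η hη
    have hseteq : {v | ∃ τ ∈ S, rp i l τ = rp i l η ∧ τ l = v} =
        {v | ∃ τ ∈ S, (∀ l', i ≤ l' → l' < l → τ l' = η l') ∧ τ l = v} := by
      ext v; constructor
      · rintro ⟨τ, hτ, he, hv⟩; exact ⟨τ, hτ, (hrpiff l τ η).1 he, hv⟩
      · rintro ⟨τ, hτ, he, hv⟩; exact ⟨τ, hτ, (hrpiff l τ η).2 he, hv⟩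
    rw [← Set.ncard_eq_toFinset_card _ (hfinC l (rp i l η)), hseteq]
    exact hSbranch η hη l hil hlj
  have hCFlt : ∀ l, i ≤ l → l ≤ j → ∀ p, ∀ v ∈ (hfinC l p).toFinset, v < k l := by
    intro l hil hlj p v hv
    obtain ⟨τ, hτ, _, hv⟩ := (hCFmem l p v).1 hv
    rw [← hv]
    exact (hSmem τ hτ).1 l hil hlj
  have hPffin : ∀ l : ℕ, ((rp i l) '' S).Finite := fun l => hSfin.image _
  have hPfmem : ∀ l p, p ∈ (hPffin l).toFinset ↔ ∃ η ∈ S, rp i l η = p := by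
    intro l p
    rw [Set.Finite.mem_toFinset]
    simp [Set.mem_image]
  have hPfcard : ∀ l (hil : i ≤ l), l ≤ j + 1 →
      ((hPffin l).toFinset).card ≤ ∏ r ∈ Finset.Ico i l, m r := by
    intro l hil
    induction l, hil using Nat.le_induction with
    | base =>
      intro _
      have hall : ∀ p ∈ (hPffin i).toFinset, p = (fun _ => (0:ℕ)) := by
        intro p hp
        obtain ⟨η, hη, hp⟩ := (hPfmem i p).1 hp
        rw [← hp]; funext r
        have : ¬(i ≤ r ∧ r < i) := by omega
        simp [rp, this]
      rw [Finset.Ico_self, Finset.prod_empty]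
      exact Finset.card_le_one.2 (fun a ha b hb => (hall a ha).trans (hall b hb).symm)
    | succ l hil ih =>
      intro hl1
      have hlj : l ≤ j := by omega
      have hsub : (hPffin (l+1)).toFinset ⊆ (hPffin l).toFinset.biUnion
          (fun p => ((hfinC l p).toFinset).image (fun v => Function.update p l v)) := by
        intro q hq
        obtain ⟨η, hη, hq⟩ := (hPfmem (l+1) q).1 hq
        refine Finset.mem_biUnion.2 ⟨rp i l η, (hPfmem l _).2 ⟨η, hη, rfl⟩,
          Finset.mem_image.2 ⟨η l, (hCFmem l _ (η l)).2 ⟨η, hη, rfl, rfl⟩, ?_⟩⟩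
        rw [← hq]; funext r
        by_cases hr : r = l
        · subst hr
          rw [Function.update_self]
          have : i ≤ r ∧ r < r + 1 := by omega
          simp [rp, this]
        · rw [Function.update_of_ne hr]
          by_cases hr2 : i ≤ r ∧ r < l
          · have hr3 : i ≤ r ∧ r < l + 1 := by omega
            simp [rp, hr2, hr3]
          · have hr3 : ¬(i ≤ r ∧ r < l + 1) := by omega
            simp [rp, hr2, hr3]; intro h1 h2; omega
      calc ((hPffin (l+1)).toFinset).card
          ≤ _ := Finset.card_le_card hsub
        _ ≤ ∑ p ∈ (hPffin l).toFinset, (((hfinC l p).toFinset).image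
              (fun v => Function.update p l v)).card := Finset.card_biUnion_le
        _ ≤ ∑ p ∈ (hPffin l).toFinset, m l := by
            apply Finset.sum_le_sum
            intro p hp
            obtain ⟨η, hη, hp⟩ := (hPfmem l p).1 hp
            calc (((hfinC l p).toFinset).image (fun v => Function.update p l v)).card
                ≤ ((hfinC l p).toFinset).card := Finset.card_image_le
              _ = m l := by rw [← hp]; exact hCFcard l hil hlj η hη
        _ = ((hPffin l).toFinset).card * m l := by rw [Finset.sum_const, smul_eq_mul]
        _ ≤ (∏ r ∈ Finset.Ico i l, m r) * m l := by
            exact Nat.mul_le_mul_right _ (ih (by omega))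
        _ = ∏ r ∈ Finset.Ico i (l+1), m r := (Finset.prod_Ico_succ_top hil m).symm
  -- ## fiber count corollaries
  have hl1 : ∀ l, i ≤ l → 1 ≤ l := fun l h => le_trans hi h
  have hsingle : ∀ l, i ≤ l → ∀ v, v < k l → ∀ s : BS (n (l-1)) (n l),
      (Finset.univ.filter (fun g : BS (n l) (n (l+1)) => F l v g.1 = s.1)).card
        = 2 ^ (k l * n (l-1)) * (2 ^ (n l - n (l-1))) ^ (k l - 1) := by
    intro l hil v hv s
    have hfc := fiber_count n k F hFsupp hFfib l (hl1 l hil) (k l - 1) {v}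
      (by intro w hw; simp only [Finset.mem_singleton] at hw; subst hw; exact hv)
      (by simp only [Finset.card_singleton]; have := hkpos l; omega)
      (fun _ => s.1) (by intro w _; exact s.2)
    rw [← hfc, Nat.card_eq_fintype_card, Fintype.card_subtype]
    congr 1
    apply Finset.filter_congr
    intro g _
    simp
  have hpair : ∀ l, i ≤ l → ∀ v w, v < k l → w < k l → v ≠ w →
      ∀ s : BS (n (l-1)) (n l),
      (Finset.univ.filter (fun g : BS (n l) (n (l+1)) =>
          F l v g.1 = s.1 ∧ F l w g.1 = s.1)).card
        = 2 ^ (k l * n (l-1)) * (2 ^ (n l - n (l-1))) ^ (k l - 2) := by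
    intro l hil v w hv hw hvw s
    have hfc := fiber_count n k F hFsupp hFfib l (hl1 l hil) (k l - 2) {v, w}
      (by intro u hu; simp only [Finset.mem_insert, Finset.mem_singleton] at hu
          rcases hu with h | h <;> subst h <;> assumption)
      (by rw [Finset.card_insert_of_notMem (by simpa using hvw), Finset.card_singleton]
          have := hk2 l; omega)
      (fun _ => s.1) (by intro u _; exact s.2)
    rw [← hfc, Nat.card_eq_fintype_card, Fintype.card_subtype]
    congr 1
    apply Finset.filter_congr
    intro g _
    constructor
    · intro h; intro u hu
      simp only [Finset.mem_insert, Finset.mem_singleton] at hu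
      rcases hu with h' | h' <;> subst h'
      · exact h.1
      · exact h.2
    · intro h
      exact ⟨h v (by simp), h w (by simp)⟩
  -- ## first and second moments
  have hmom1 : ∀ l, i ≤ l → l ≤ j → ∀ η ∈ S, ∀ s : BS (n (l-1)) (n l),
      (∑ g : BS (n l) (n (l+1)),
          (((hfinC l (rp i l η)).toFinset).filter (fun v => F l v g.1 = s.1)).card)
        = m l * (2 ^ (k l * n (l-1)) * (2 ^ (n l - n (l-1))) ^ (k l - 1)) := by
    intro l hil hlj η hη s
    have hswap : (∑ g : BS (n l) (n (l+1)),
          (((hfinC l (rp i l η)).toFinset).filter (fun v => F l v g.1 = s.1)).card)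
        = ∑ v ∈ (hfinC l (rp i l η)).toFinset,
            (Finset.univ.filter (fun g : BS (n l) (n (l+1)) => F l v g.1 = s.1)).card := by
      simp only [Finset.card_filter]
      rw [Finset.sum_comm]
    rw [hswap]
    rw [Finset.sum_congr rfl (fun v hv => hsingle l hil v
      (hCFlt l hil hlj _ v hv) s)]
    rw [Finset.sum_const, smul_eq_mul, hCFcard l hil hlj η hη]
  have hmom2 : ∀ l, i ≤ l → l ≤ j → ∀ η ∈ S, ∀ s : BS (n (l-1)) (n l),
      (∑ g : BS (n l) (n (l+1)),
          (((hfinC l (rp i l η)).toFinset).filter (fun v => F l v g.1 = s.1)).card ^ 2)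
        ≤ m l * (2 ^ (k l * n (l-1)) * (2 ^ (n l - n (l-1))) ^ (k l - 1))
          + (m l * m l) * (2 ^ (k l * n (l-1)) * (2 ^ (n l - n (l-1))) ^ (k l - 2)) := by
    intro l hil hlj η hη s
    set C := (hfinC l (rp i l η)).toFinset with hC
    have hite : ∀ (g : BS (n l) (n (l+1))) v w,
        (if F l v g.1 = s.1 then (1:ℕ) else 0) * (if F l w g.1 = s.1 then (1:ℕ) else 0)
          = if (F l v g.1 = s.1 ∧ F l w g.1 = s.1) then (1:ℕ) else 0 := by
      intro g v w
      by_cases h1 : F l v g.1 = s.1 <;> by_cases h2 : F l w g.1 = s.1 <;>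
        simp [h1, h2]
    have hexp : ∀ g : BS (n l) (n (l+1)),
        ((C.filter (fun v => F l v g.1 = s.1)).card : ℕ) ^ 2
          = ∑ v ∈ C, ∑ w ∈ C, (if (F l v g.1 = s.1 ∧ F l w g.1 = s.1) then (1:ℕ) else 0) := by
      intro g
      rw [Finset.card_filter, sq, Finset.sum_mul_sum]
      exact Finset.sum_congr rfl (fun v _ => Finset.sum_congr rfl (fun w _ => hite g v w))
    rw [Finset.sum_congr rfl (fun g _ => hexp g)]
    rw [Finset.sum_comm]
    have hswap2 : (∑ v ∈ C, ∑ g : BS (n l) (n (l+1)), ∑ w ∈ C,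
          (if (F l v g.1 = s.1 ∧ F l w g.1 = s.1) then (1:ℕ) else 0))
        = ∑ v ∈ C, ∑ w ∈ C, (Finset.univ.filter
            (fun g : BS (n l) (n (l+1)) => F l v g.1 = s.1 ∧ F l w g.1 = s.1)).card := by
      apply Finset.sum_congr rfl
      intro v _
      rw [Finset.sum_comm]
      simp only [Finset.card_filter]
    rw [hswap2]
    have hub : ∀ v ∈ C, (∑ w ∈ C, (Finset.univ.filter
          (fun g : BS (n l) (n (l+1)) => F l v g.1 = s.1 ∧ F l w g.1 = s.1)).card)
        ≤ (2 ^ (k l * n (l-1)) * (2 ^ (n l - n (l-1))) ^ (k l - 1))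
          + m l * (2 ^ (k l * n (l-1)) * (2 ^ (n l - n (l-1))) ^ (k l - 2)) := by
      intro v hv
      rw [← Finset.add_sum_erase C _ hv]
      apply Nat.add_le_add
      · have : (Finset.univ.filter
            (fun g : BS (n l) (n (l+1)) => F l v g.1 = s.1 ∧ F l v g.1 = s.1)).card
            = (Finset.univ.filter (fun g : BS (n l) (n (l+1)) => F l v g.1 = s.1)).card := by
          congr 1; apply Finset.filter_congr; intro g _; simp
        rw [this, hsingle l hil v (hCFlt l hil hlj _ v hv) s]
      · calc (∑ w ∈ C.erase v, (Finset.univ.filter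
              (fun g : BS (n l) (n (l+1)) => F l v g.1 = s.1 ∧ F l w g.1 = s.1)).card)
            = ∑ w ∈ C.erase v,
                (2 ^ (k l * n (l-1)) * (2 ^ (n l - n (l-1))) ^ (k l - 2)) := by
              apply Finset.sum_congr rfl
              intro w hw
              have hwC := Finset.mem_of_mem_erase hw
              have hne : v ≠ w := fun h => (Finset.ne_of_mem_erase hw) h.symm
              exact hpair l hil v w (hCFlt l hil hlj _ v hv) (hCFlt l hil hlj _ w hwC) hne s
          _ = (C.erase v).card * (2 ^ (k l * n (l-1)) * (2 ^ (n l - n (l-1))) ^ (k l - 2)) := by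
              rw [Finset.sum_const, smul_eq_mul]
          _ ≤ m l * (2 ^ (k l * n (l-1)) * (2 ^ (n l - n (l-1))) ^ (k l - 2)) := by
              apply Nat.mul_le_mul_right
              calc (C.erase v).card ≤ C.card := Finset.card_erase_le
                _ = m l := hCFcard l hil hlj η hη
    calc (∑ v ∈ C, ∑ w ∈ C, (Finset.univ.filter
          (fun g : BS (n l) (n (l+1)) => F l v g.1 = s.1 ∧ F l w g.1 = s.1)).card)
        ≤ ∑ v ∈ C, ((2 ^ (k l * n (l-1)) * (2 ^ (n l - n (l-1))) ^ (k l - 1))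
            + m l * (2 ^ (k l * n (l-1)) * (2 ^ (n l - n (l-1))) ^ (k l - 2))) :=
          Finset.sum_le_sum hub
      _ = m l * (2 ^ (k l * n (l-1)) * (2 ^ (n l - n (l-1))) ^ (k l - 1))
          + (m l * m l) * (2 ^ (k l * n (l-1)) * (2 ^ (n l - n (l-1))) ^ (k l - 2)) := by
          rw [Finset.sum_const, smul_eq_mul, hCFcard l hil hlj η hη]
          ring
  -- ## Chebyshev bound per (level, prefix, target)
  have hcheb : ∀ l, i ≤ l → l ≤ j → ∀ η ∈ S, ∀ s : BS (n (l-1)) (n l),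
      (Finset.univ.filter (fun g : BS (n l) (n (l+1)) =>
          tD n m l < (((hfinC l (rp i l η)).toFinset).filter
            (fun v => F l v g.1 = s.1)).card)).card * (dD n m l)^2
        ≤ m l * (2 ^ (k l * n (l-1)) * (2 ^ (n l - n (l-1))) ^ (k l - 1)) := by
    intro l hil hlj η hη s
    obtain ⟨K, hK⟩ : ∃ K, k l = K + 2 := ⟨k l - 2, by have := hk2 l; omega⟩
    set A := 2 ^ (k l * n (l-1)) with hA
    set P := 2 ^ (n l - n (l-1)) with hP
    set X : BS (n l) (n (l+1)) → ℕ := fun g =>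
      (((hfinC l (rp i l η)).toFinset).filter (fun v => F l v g.1 = s.1)).card with hX
    set badF := Finset.univ.filter (fun g : BS (n l) (n (l+1)) => tD n m l < X g) with hbadF
    have e1 : k l - 1 = K + 1 := by omega
    have e2 : k l - 2 = K := by omega
    have hS1 : (∑ g : BS (n l) (n (l+1)), X g) = m l * (A * P ^ (K+1)) := by
      have := hmom1 l hil hlj η hη s
      rw [e1] at this
      exact this
    have hS2 : (∑ g : BS (n l) (n (l+1)), (X g)^2) ≤ m l * (A * P ^ (K+1))
        + (m l * m l) * (A * P ^ K) := by
      have := hmom2 l hil hlj η hη s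
      rw [e1, e2] at this
      exact this
    have hcardU : (Finset.univ : Finset (BS (n l) (n (l+1)))).card = A * P ^ (K+2) := by
      rw [hA, hP, Finset.card_univ, card_BS, ← hK, hE0 l]
    have hμP : muD n m l * P = m l := hmuexp l
    -- pointwise bound
    have hpt : ∀ g ∈ badF, ((dD n m l : ℤ))^2 ≤ ((X g : ℤ) - muD n m l)^2 := by
      intro g hg
      have h0 : tD n m l < X g := (Finset.mem_filter.1 hg).2
      have h1 : (muD n m l : ℤ) + dD n m l < (X g : ℤ) := by
        have : muD n m l + dD n m l < X g := by rw [← tD]; exact h0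
        exact_mod_cast this
      nlinarith [sq_nonneg ((X g : ℤ) - muD n m l - dD n m l)]
    have h1 : (badF.card : ℤ) * ((dD n m l : ℤ))^2
        ≤ ∑ g : BS (n l) (n (l+1)), ((X g : ℤ) - muD n m l)^2 := by
      calc (badF.card : ℤ) * ((dD n m l : ℤ))^2
          = ∑ _g ∈ badF, ((dD n m l : ℤ))^2 := by rw [Finset.sum_const]; ring
        _ ≤ ∑ g ∈ badF, ((X g : ℤ) - muD n m l)^2 := Finset.sum_le_sum hpt
        _ ≤ ∑ g : BS (n l) (n (l+1)), ((X g : ℤ) - muD n m l)^2 :=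
            Finset.sum_le_sum_of_subset_of_nonneg (Finset.filter_subset _ _)
              (fun g _ _ => sq_nonneg _)
    have h2 : ∑ g : BS (n l) (n (l+1)), ((X g : ℤ) - muD n m l)^2
        = (∑ g : BS (n l) (n (l+1)), (X g : ℤ)^2)
          - 2 * (muD n m l) * (∑ g : BS (n l) (n (l+1)), (X g : ℤ))
          + ((Finset.univ : Finset (BS (n l) (n (l+1)))).card : ℤ) * (muD n m l : ℤ)^2 := by
      have hpw : ∀ g : BS (n l) (n (l+1)), ((X g : ℤ) - muD n m l)^2
          = (X g : ℤ)^2 - 2 * (muD n m l) * (X g : ℤ) + (muD n m l : ℤ)^2 := fun g => by ring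
      rw [Finset.sum_congr rfl (fun g _ => hpw g)]
      rw [Finset.sum_add_distrib, Finset.sum_sub_distrib, ← Finset.mul_sum, Finset.sum_const]
      ring
    have hZ1 : (∑ g : BS (n l) (n (l+1)), (X g : ℤ)) = (m l : ℤ) * ((A:ℤ) * (P:ℤ) ^ (K+1)) := by
      exact_mod_cast congrArg (Nat.cast : ℕ → ℤ) hS1
    have hZ2 : (∑ g : BS (n l) (n (l+1)), (X g : ℤ)^2) ≤ (m l : ℤ) * ((A:ℤ) * (P:ℤ) ^ (K+1))
        + ((m l : ℤ) * (m l : ℤ)) * ((A:ℤ) * (P:ℤ) ^ K) := by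
      exact_mod_cast hS2
    have hZμ : (muD n m l : ℤ) * (P : ℤ) = (m l : ℤ) := by exact_mod_cast hμP
    have key : ((m l : ℤ) * (m l : ℤ)) * ((A:ℤ) * (P:ℤ) ^ K)
        + ((A:ℤ) * (P:ℤ) ^ (K+2)) * (muD n m l : ℤ)^2
        = 2 * (muD n m l : ℤ) * ((m l : ℤ) * ((A:ℤ) * (P:ℤ) ^ (K+1))) := by
      have lhs2 : ((A:ℤ) * (P:ℤ) ^ (K+2)) * (muD n m l : ℤ)^2
          = (((muD n m l : ℤ)) * (P:ℤ)) * (((muD n m l : ℤ)) * (P:ℤ)) * ((A:ℤ) * (P:ℤ)^K) := by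
        ring
      have rhs2 : 2 * (muD n m l : ℤ) * ((m l : ℤ) * ((A:ℤ) * (P:ℤ) ^ (K+1)))
          = 2 * ((muD n m l : ℤ) * (P:ℤ)) * ((m l : ℤ) * ((A:ℤ) * (P:ℤ)^K)) := by
        ring
      rw [lhs2, rhs2, hZμ]
      ring
    have hfinal : (badF.card : ℤ) * ((dD n m l : ℤ))^2
        ≤ (m l : ℤ) * ((A:ℤ) * (P:ℤ) ^ (K+1)) := by
      have hc : ((Finset.univ : Finset (BS (n l) (n (l+1)))).card : ℤ)
          = (A:ℤ) * (P:ℤ) ^ (K+2) := by exact_mod_cast hcardU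
      rw [h2, hc, hZ1] at h1
      linarith [hZ2, key, h1]
    have : (badF.card) * (dD n m l)^2 ≤ m l * (A * P ^ (K+1)) := by
      exact_mod_cast hfinal
    rw [e1]
    exact this
  -- ## per-level bad set bound
  have hE01 : ∀ l, 2^(n (l+1) - n l)
      = 2^(n l - n (l-1)) * (2^(k l * n (l-1)) * (2^(n l - n (l-1)))^(k l - 1)) := by
    intro l
    calc 2^(n (l+1) - n l) = 2^(k l * n (l-1)) * (2^(n l - n (l-1)))^(k l) := (hE0 l).symm
      _ = 2^(k l * n (l-1)) * (2^(n l - n (l-1)))^((k l - 1)+1) := by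
          have hh : (k l - 1) + 1 = k l := by have := hkpos l; omega
          rw [hh]
      _ = 2^(n l - n (l-1)) * (2^(k l * n (l-1)) * (2^(n l - n (l-1)))^(k l - 1)) := by
          rw [pow_succ]; ring
  have hmExp : ∀ l, m l = PmD m l * 2^(3*(n l + l)) := by
    intro l; rw [PmD]; exact hm l
  have hbadlevel : ∀ l, i ≤ l → l ≤ j →
      (Finset.univ.filter (fun ρ : BS (n i) (n (j+1)) =>
        ∃ η ∈ S, ∃ s : BS (n (l-1)) (n l),
          tD n m l < (((hfinC l (rp i l η)).toFinset).filter
            (fun v => F l v (res (n l) (n (l+1)) ρ.1).1 = s.1)).card)).card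
        * 2 ^ (n l + l)
      ≤ 2 ^ (n (j+1) - n i) := by
    intro l hil hlj
    set Q : BS (n l) (n (l+1)) → Prop := fun g => ∃ η ∈ S, ∃ s : BS (n (l-1)) (n l),
      tD n m l < (((hfinC l (rp i l η)).toFinset).filter
        (fun v => F l v g.1 = s.1)).card with hQ
    have hBL1 : (Finset.univ.filter (fun ρ : BS (n i) (n (j+1)) =>
          Q (res (n l) (n (l+1)) ρ.1))).card
        = 2^(n l - n i) * (Finset.univ.filter Q).card * 2^(n (j+1) - n (l+1)) := by
      have h1 : (Finset.univ.filter (fun ρ : BS (n i) (n (j+1)) =>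
            Q (res (n l) (n (l+1)) ρ.1))).card
          = Nat.card {ρ : BS (n i) (n (j+1)) // Q (res (n l) (n (l+1)) ρ.1)} := by
        rw [Nat.card_eq_fintype_card, Fintype.card_subtype]
      have h2 := card_midPred (n i) (n l) (n (l+1)) (n (j+1)) (hnmono _ _ hil)
        (hnstep l) (hnmono _ _ (by omega)) Q
      rw [h1, h2, Nat.card_eq_fintype_card, Fintype.card_subtype]
    have hsub : Finset.univ.filter Q ⊆ ((hPffin l).toFinset).biUnion (fun p =>
        (Finset.univ : Finset (BS (n (l-1)) (n l))).biUnion (fun s =>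
          Finset.univ.filter (fun g : BS (n l) (n (l+1)) =>
            tD n m l < (((hfinC l p).toFinset).filter (fun v => F l v g.1 = s.1)).card))) := by
      intro g hg
      obtain ⟨η, hη, s, hs⟩ := (Finset.mem_filter.1 hg).2
      exact Finset.mem_biUnion.2 ⟨rp i l η, (hPfmem l _).2 ⟨η, hη, rfl⟩,
        Finset.mem_biUnion.2 ⟨s, Finset.mem_univ s,
          Finset.mem_filter.2 ⟨Finset.mem_univ g, hs⟩⟩⟩
    have hcard1 : (Finset.univ.filter Q).card
        ≤ ∑ p ∈ (hPffin l).toFinset, ∑ s : BS (n (l-1)) (n l),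
            (Finset.univ.filter (fun g : BS (n l) (n (l+1)) =>
              tD n m l < (((hfinC l p).toFinset).filter
                (fun v => F l v g.1 = s.1)).card)).card :=
      le_trans (Finset.card_le_card hsub) (le_trans Finset.card_biUnion_le
        (Finset.sum_le_sum (fun p _ => Finset.card_biUnion_le)))
    have hBL2 : (Finset.univ.filter Q).card * (dD n m l)^2
        ≤ ((hPffin l).toFinset).card * 2^(n l - n (l-1))
          * (m l * (2^(k l * n (l-1)) * (2^(n l - n (l-1)))^(k l - 1))) := by
      calc (Finset.univ.filter Q).card * (dD n m l)^2
          ≤ (∑ p ∈ (hPffin l).toFinset, ∑ s : BS (n (l-1)) (n l),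
              (Finset.univ.filter (fun g : BS (n l) (n (l+1)) =>
                tD n m l < (((hfinC l p).toFinset).filter
                  (fun v => F l v g.1 = s.1)).card)).card) * (dD n m l)^2 :=
            Nat.mul_le_mul_right _ hcard1
        _ = ∑ p ∈ (hPffin l).toFinset, ∑ s : BS (n (l-1)) (n l),
              ((Finset.univ.filter (fun g : BS (n l) (n (l+1)) =>
                tD n m l < (((hfinC l p).toFinset).filter
                  (fun v => F l v g.1 = s.1)).card)).card * (dD n m l)^2) := by
            rw [Finset.sum_mul]
            exact Finset.sum_congr rfl (fun p _ => by rw [Finset.sum_mul])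
        _ ≤ ∑ p ∈ (hPffin l).toFinset, ∑ _s : BS (n (l-1)) (n l),
              (m l * (2^(k l * n (l-1)) * (2^(n l - n (l-1)))^(k l - 1))) := by
            apply Finset.sum_le_sum
            intro p hp
            apply Finset.sum_le_sum
            intro s _
            obtain ⟨η, hη, hpη⟩ := (hPfmem l p).1 hp
            rw [← hpη]
            exact hcheb l hil hlj η hη s
        _ = ((hPffin l).toFinset).card * 2^(n l - n (l-1))
              * (m l * (2^(k l * n (l-1)) * (2^(n l - n (l-1)))^(k l - 1))) := by
            rw [Finset.sum_const, Finset.sum_const, Finset.card_univ, card_BS, smul_eq_mul,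
              smul_eq_mul]
            ring
    have hPMD : ((hPffin l).toFinset).card * m l * 2^(n l + l) ≤ (dD n m l)^2 := by
      have hIR : ((hPffin l).toFinset).card ≤ PmD m l := by
        calc ((hPffin l).toFinset).card ≤ ∏ r ∈ Finset.Ico i l, m r :=
            hPfcard l hil (by omega)
          _ ≤ PmD m l := by
            rw [PmD]
            apply Finset.prod_le_prod_of_subset_of_one_le'
            · intro r hr
              simp only [Finset.mem_Ico] at hr
              simp only [Finset.mem_range]
              omega
            · intro r _ _
              exact hmpos r
      calc ((hPffin l).toFinset).card * m l * 2^(n l + l)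
          ≤ PmD m l * (PmD m l * 2^(3*(n l + l))) * 2^(n l + l) := by
            apply Nat.mul_le_mul_right
            exact Nat.mul_le_mul hIR (le_of_eq (hmExp l))
        _ = PmD m l * PmD m l * (2^(3*(n l + l)) * 2^(n l + l)) := by ring
        _ = PmD m l * PmD m l * (2^(2*n l + 2*l)) ^ 2 := by
            rw [← pow_mul, ← pow_add,
              show 3*(n l + l) + (n l + l) = (2*n l + 2*l)*2 from by ring]
        _ = (dD n m l)^2 := by rw [dD]; ring
    have hnum : ((hPffin l).toFinset).card * 2^(n l - n (l-1))
          * (m l * (2^(k l * n (l-1)) * (2^(n l - n (l-1)))^(k l - 1))) * 2^(n l + l)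
        ≤ 2^(n (l+1) - n l) * (dD n m l)^2 := by
      calc ((hPffin l).toFinset).card * 2^(n l - n (l-1))
            * (m l * (2^(k l * n (l-1)) * (2^(n l - n (l-1)))^(k l - 1))) * 2^(n l + l)
          = (((hPffin l).toFinset).card * m l * 2^(n l + l))
            * (2^(n l - n (l-1)) * (2^(k l * n (l-1)) * (2^(n l - n (l-1)))^(k l - 1))) := by
            ring
        _ ≤ (dD n m l)^2
            * (2^(n l - n (l-1)) * (2^(k l * n (l-1)) * (2^(n l - n (l-1)))^(k l - 1))) :=
            Nat.mul_le_mul_right _ hPMD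
        _ = 2^(n (l+1) - n l) * (dD n m l)^2 := by rw [hE01 l]; ring
    -- assemble
    have hmain : (Finset.univ.filter (fun ρ : BS (n i) (n (j+1)) =>
          Q (res (n l) (n (l+1)) ρ.1))).card * 2 ^ (n l + l) * (dD n m l)^2
        ≤ 2 ^ (n (j+1) - n i) * (dD n m l)^2 := by
      calc (Finset.univ.filter (fun ρ : BS (n i) (n (j+1)) =>
            Q (res (n l) (n (l+1)) ρ.1))).card * 2 ^ (n l + l) * (dD n m l)^2
          = 2^(n l - n i) * 2^(n (j+1) - n (l+1))
            * ((Finset.univ.filter Q).card * (dD n m l)^2) * 2^(n l + l) := by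
            rw [hBL1]; ring
        _ ≤ 2^(n l - n i) * 2^(n (j+1) - n (l+1))
            * (((hPffin l).toFinset).card * 2^(n l - n (l-1))
              * (m l * (2^(k l * n (l-1)) * (2^(n l - n (l-1)))^(k l - 1)))) * 2^(n l + l) := by
            apply Nat.mul_le_mul_right
            exact Nat.mul_le_mul_left _ hBL2
        _ = 2^(n l - n i) * 2^(n (j+1) - n (l+1))
            * (((hPffin l).toFinset).card * 2^(n l - n (l-1))
              * (m l * (2^(k l * n (l-1)) * (2^(n l - n (l-1)))^(k l - 1))) * 2^(n l + l)) := by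
            ring
        _ ≤ 2^(n l - n i) * 2^(n (j+1) - n (l+1)) * (2^(n (l+1) - n l) * (dD n m l)^2) :=
            Nat.mul_le_mul_left _ hnum
        _ = (2^(n l - n i) * 2^(n (l+1) - n l) * 2^(n (j+1) - n (l+1))) * (dD n m l)^2 := by
            ring
        _ = 2 ^ (n (j+1) - n i) * (dD n m l)^2 := by
            rw [← pow_add, ← pow_add]
            congr 2
            have h1 : n i ≤ n l := hnmono _ _ hil
            have h2 : n l ≤ n (l+1) := hnstep l
            have h3 : n (l+1) ≤ n (j+1) := hnmono _ _ (by omega)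
            omega
    have hpos : 0 < (dD n m l)^2 := by
      have := hdDpos l
      positivity
    exact Nat.le_of_mul_le_mul_right hmain hpos
  -- ## lower bound on |S| (tree induction upward)
  have TU : ∀ dlt s, s + dlt = j + 1 → i ≤ s → ∀ η ∈ S,
      (∏ l ∈ Finset.Icc s j, m l) ≤ ((hSfin.toFinset).filter
        (fun τ => ∀ l, i ≤ l → l < s → τ l = η l)).card := by
    intro dlt
    induction dlt with
    | zero =>
      intro s hs his η hη
      have hs' : s = j + 1 := by omega
      subst hs'
      rw [Finset.Icc_eq_empty (by omega), Finset.prod_empty]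
      exact Finset.card_pos.2
        ⟨η, Finset.mem_filter.2 ⟨hSfin.mem_toFinset.2 hη, fun l _ _ => rfl⟩⟩
    | succ dlt ih =>
      intro s hs his η hη
      have hsj : s ≤ j := by omega
      set C := (hfinC s (rp i s η)).toFinset with hC
      have hCcard : C.card = m s := hCFcard s his hsj η hη
      have hwit : ∀ v ∈ C, ∃ τ ∈ S, rp i s τ = rp i s η ∧ τ s = v := by
        intro v hv
        exact (hCFmem s _ v).1 hv
      choose τw hτwS hτwrp hτwv using hwit
      have hdisj : ∀ x ∈ C.attach, ∀ y ∈ C.attach, x ≠ y →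
          Disjoint ((hSfin.toFinset).filter
              (fun τ => ∀ l, i ≤ l → l < s+1 → τ l = τw x.1 x.2 l))
            ((hSfin.toFinset).filter
              (fun τ => ∀ l, i ≤ l → l < s+1 → τ l = τw y.1 y.2 l)) := by
        intro x _ y _ hxy
        rw [Finset.disjoint_left]
        intro τ hτx hτy
        have h1 := (Finset.mem_filter.1 hτx).2 s his (by omega)
        have h2 := (Finset.mem_filter.1 hτy).2 s his (by omega)
        rw [hτwv x.1 x.2] at h1
        rw [hτwv y.1 y.2] at h2
        exact hxy (Subtype.ext (h1 ▸ h2 ▸ rfl))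
      have hsubB : (C.attach).biUnion (fun x => (hSfin.toFinset).filter
            (fun τ => ∀ l, i ≤ l → l < s+1 → τ l = τw x.1 x.2 l))
          ⊆ (hSfin.toFinset).filter (fun τ => ∀ l, i ≤ l → l < s → τ l = η l) := by
        intro τ hτ
        obtain ⟨x, _, hτx⟩ := Finset.mem_biUnion.1 hτ
        obtain ⟨hτm, hagree⟩ := Finset.mem_filter.1 hτx
        refine Finset.mem_filter.2 ⟨hτm, ?_⟩
        intro l h1 h2
        rw [hagree l h1 (by omega)]
        exact (hrpiff s (τw x.1 x.2) η).1 (hτwrp x.1 x.2) l h1 h2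
      calc (∏ l ∈ Finset.Icc s j, m l)
          = m s * ∏ l ∈ Finset.Icc (s+1) j, m l := by
            have hins : Finset.Icc s j = insert s (Finset.Icc (s+1) j) := by
              ext r; simp only [Finset.mem_Icc, Finset.mem_insert]; omega
            rw [hins, Finset.prod_insert (by simp only [Finset.mem_Icc]; omega)]
        _ = ∑ _x ∈ C.attach, ∏ l ∈ Finset.Icc (s+1) j, m l := by
            rw [Finset.sum_const, Finset.card_attach, hCcard, smul_eq_mul]
        _ ≤ ∑ x ∈ C.attach, ((hSfin.toFinset).filter
              (fun τ => ∀ l, i ≤ l → l < s+1 → τ l = τw x.1 x.2 l)).card := by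
            apply Finset.sum_le_sum
            intro x _
            exact ih (s+1) (by omega) (by omega) (τw x.1 x.2) (hτwS x.1 x.2)
        _ = ((C.attach).biUnion (fun x => (hSfin.toFinset).filter
              (fun τ => ∀ l, i ≤ l → l < s+1 → τ l = τw x.1 x.2 l))).card :=
            (Finset.card_biUnion hdisj).symm
        _ ≤ ((hSfin.toFinset).filter (fun τ => ∀ l, i ≤ l → l < s → τ l = η l)).card :=
            Finset.card_le_card hsubB
  -- ## product estimate
  have PI : ∀ dlt s, s + dlt = j + 1 → i ≤ s →
      (∏ l ∈ Finset.Icc s j, (2^(n (l-1) + l) + 1)) * 2^s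
        ≤ (2^s + 1) * ∏ l ∈ Finset.Icc s j, 2^(n (l-1) + l) := by
    intro dlt
    induction dlt with
    | zero =>
      intro s hs _
      have hs' : s = j + 1 := by omega
      subst hs'
      rw [Finset.Icc_eq_empty (by omega)]
      simp only [Finset.prod_empty, one_mul, mul_one]
      omega
    | succ dlt ih =>
      intro s hs his
      have hsj : s ≤ j := by omega
      have hins : Finset.Icc s j = insert s (Finset.Icc (s+1) j) := by
        ext r; simp only [Finset.mem_Icc, Finset.mem_insert]; omega
      have hnotin : s ∉ Finset.Icc (s+1) j := by simp only [Finset.mem_Icc]; omega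
      have hihs := ih (s+1) (by omega) (by omega)
      set X := ∏ l ∈ Finset.Icc (s+1) j, (2^(n (l-1) + l) + 1) with hX
      set Y := ∏ l ∈ Finset.Icc (s+1) j, 2^(n (l-1) + l) with hY
      set E := 2^(n (s-1) + s) with hE
      have hE4 : 4 * 2^s ≤ E := by
        rw [hE]
        calc 4 * 2^s = 2^(s+2) := by rw [pow_add]; ring
          _ ≤ 2^(n (s-1) + s) := Nat.pow_le_pow_right (by omega) (by have := hn2 (s-1); omega)
      have hcoef : (E + 1) * (2^(s+1) + 1) ≤ 2 * (2^s + 1) * E := by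
        have h2s : 2^(s+1) = 2 * 2^s := by rw [pow_succ]; ring
        have hW : 1 ≤ 2^s := Nat.one_le_two_pow
        nlinarith [hE4, hW]
      have hmain2 : ((E + 1) * X) * 2^s * 2 ≤ ((2^s + 1) * (E * Y)) * 2 := by
        calc ((E + 1) * X) * 2^s * 2 = (E + 1) * (X * 2^(s+1)) := by rw [pow_succ]; ring
          _ ≤ (E + 1) * ((2^(s+1) + 1) * Y) := Nat.mul_le_mul_left _ hihs
          _ = ((E + 1) * (2^(s+1) + 1)) * Y := by ring
          _ ≤ (2 * (2^s + 1) * E) * Y := Nat.mul_le_mul_right _ hcoef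
          _ = ((2^s + 1) * (E * Y)) * 2 := by ring
      have hmain : ((E + 1) * X) * 2^s ≤ (2^s + 1) * (E * Y) :=
        Nat.le_of_mul_le_mul_right hmain2 (by norm_num)
      rw [hins, Finset.prod_insert hnotin, Finset.prod_insert hnotin]
      exact hmain
  -- ## telescoping of output lengths
  have htel : ∀ J (hiJ : i ≤ J), (∑ l ∈ Finset.Icc i J, (n l - n (l-1))) = n J - n (i-1) := by
    intro J hiJ
    induction J, hiJ using Nat.le_induction with
    | base =>
      rw [Finset.Icc_self, Finset.sum_singleton]
    | succ J hiJ ih =>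
      rw [Finset.sum_Icc_succ_top (by omega), ih]
      have h1 : n (i-1) ≤ n J := hnmono _ _ (by omega)
      have h2 : n J ≤ n (J+1) := hnstep J
      have h3 : (J + 1) - 1 = J := by omega
      rw [h3]
      omega
  -- ## good strings admit no heavy σ
  have hgood : ∀ ρ : BS (n i) (n (j+1)),
      (∀ l, i ≤ l → l ≤ j → ¬ (∃ η ∈ S, ∃ s : BS (n (l-1)) (n l),
          tD n m l < (((hfinC l (rp i l η)).toFinset).filter
            (fun v => F l v (res (n l) (n (l+1)) ρ.1).1 = s.1)).card)) →
      ∀ σ : ℕ → Bool, (∀ x ∉ Set.Ico (n (i-1)) (n j), σ x = false) →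
        ¬ (7 * Nat.card S < 2 ^ (n j - n (i-1)) *
            Nat.card {τ : ℕ → ℕ // τ ∈ S ∧
              (fun x => (Finset.Icc i j).sup fun r => F r (τ r) ρ.1 x) = σ}) := by
    intro ρ hgd σ hσ
    have hFres : ∀ l, i ≤ l → ∀ v, v < k l →
        F l v ρ.1 = F l v (res (n l) (n (l+1)) ρ.1).1 := by
      intro l hil v hv
      exact hFloc l (hl1 l hil) v hv ρ.1 _ (res_agree (n l) (n (l+1)) ρ.1)
    have hgd2 : ∀ l, i ≤ l → l ≤ j → ∀ η ∈ S, ∀ s : BS (n (l-1)) (n l),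
        (((hfinC l (rp i l η)).toFinset).filter
          (fun v => F l v ρ.1 = s.1)).card ≤ tD n m l := by
      intro l hil hlj η hη s
      have hnot := hgd l hil hlj
      push_neg at hnot
      have := hnot η hη s
      have heq : ((hfinC l (rp i l η)).toFinset).filter (fun v => F l v ρ.1 = s.1)
          = ((hfinC l (rp i l η)).toFinset).filter
            (fun v => F l v (res (n l) (n (l+1)) ρ.1).1 = s.1) := by
        apply Finset.filter_congr
        intro v hv
        rw [hFres l hil v (hCFlt l hil hlj _ v hv)]
      rw [heq]
      exact this
    have hsupdec : ∀ τ, τ ∈ S →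
        ((fun x => (Finset.Icc i j).sup fun r => F r (τ r) ρ.1 x) = σ) →
        ∀ l, i ≤ l → l ≤ j → F l (τ l) ρ.1 = (res (n (l-1)) (n l) σ).1 := by
      intro τ hτ hsup l hil hlj
      funext x
      by_cases hx : n (l-1) ≤ x ∧ x < n l
      · have hres : (res (n (l-1)) (n l) σ).1 x = σ x :=
          (res_agree (n (l-1)) (n l) σ x (Set.mem_Ico.2 hx)).symm
        rw [hres]
        have hx2 : (Finset.Icc i j).sup (fun r => F r (τ r) ρ.1 x) = σ x := congrFun hsup x
        rw [← hx2]
        refine le_antisymm (Finset.le_sup (f := fun r => F r (τ r) ρ.1 x) (b := l)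
          (Finset.mem_Icc.2 ⟨hil, hlj⟩)) (Finset.sup_le ?_)
        · intro r hr
          rcases eq_or_ne r l with hrl | hrl
          · subst hrl; exact le_rfl
          · have hrm : i ≤ r ∧ r ≤ j := by simpa [Finset.mem_Icc] using hr
            have hzero : F r (τ r) ρ.1 x = false := by
              apply hFsupp r (by omega) (τ r) ((hSmem τ hτ).1 r hrm.1 hrm.2) ρ.1 x
              simp only [Set.mem_Ico, not_and, not_lt]
              intro hge
              rcases lt_or_gt_of_ne hrl with h | h
              · have : n r ≤ n (l-1) := hnmono _ _ (by omega)
                omega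
              · have : n l ≤ n (r-1) := hnmono _ _ (by omega)
                omega
            rw [hzero]
            exact Bool.false_le _
      · rw [(res (n (l-1)) (n l) σ).2 x (by simpa [Set.mem_Ico] using hx)]
        exact hFsupp l (by omega) (τ l) ((hSmem τ hτ).1 l hil hlj) ρ.1 x
          (by simpa [Set.mem_Ico] using hx)
    -- downward tree induction
    have TD : ∀ dlt s, s + dlt = j + 1 → i ≤ s → ∀ η, η ∈ S →
        ((hSfin.toFinset).filter (fun τ => (∀ l, i ≤ l → l < s → τ l = η l) ∧
          (∀ l, s ≤ l → l ≤ j → F l (τ l) ρ.1 = (res (n (l-1)) (n l) σ).1))).card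
        ≤ ∏ l ∈ Finset.Icc s j, tD n m l := by
      intro dlt
      induction dlt with
      | zero =>
        intro s hs his η hη
        have hs' : s = j + 1 := by omega
        subst hs'
        rw [Finset.Icc_eq_empty (by omega), Finset.prod_empty]
        rw [Finset.card_le_one]
        intro τ1 hτ1 τ2 hτ2
        have hm1 := (Finset.mem_filter.1 hτ1).1
        have ha1 := (Finset.mem_filter.1 hτ1).2.1
        have hm2 := (Finset.mem_filter.1 hτ2).1
        have ha2 := (Finset.mem_filter.1 hτ2).2.1
        funext r
        by_cases hr : i ≤ r ∧ r ≤ j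
        · rw [ha1 r hr.1 (by omega), ha2 r hr.1 (by omega)]
        · rw [(hSmem τ1 (hSfin.mem_toFinset.1 hm1)).2 r (by simp only [Set.mem_Icc]; omega),
            (hSmem τ2 (hSfin.mem_toFinset.1 hm2)).2 r (by simp only [Set.mem_Icc]; omega)]
      | succ dlt ih =>
        intro s hs his η hη
        have hsj : s ≤ j := by omega
        set H := ((hfinC s (rp i s η)).toFinset).filter
          (fun v => F s v ρ.1 = (res (n (s-1)) (n s) σ).1) with hH
        have hHcard : H.card ≤ tD n m s := hgd2 s his hsj η hη _
        have hwit : ∀ v ∈ H, ∃ τ ∈ S, rp i s τ = rp i s η ∧ τ s = v := by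
          intro v hv
          exact (hCFmem s _ v).1 (Finset.mem_of_mem_filter v hv)
        choose τw hτwS hτwrp hτwv using hwit
        have hsubU : ((hSfin.toFinset).filter (fun τ => (∀ l, i ≤ l → l < s → τ l = η l) ∧
            (∀ l, s ≤ l → l ≤ j → F l (τ l) ρ.1 = (res (n (l-1)) (n l) σ).1)))
            ⊆ H.attach.biUnion (fun x => (hSfin.toFinset).filter (fun τ =>
                (∀ l, i ≤ l → l < s+1 → τ l = τw x.1 x.2 l) ∧
                (∀ l, s+1 ≤ l → l ≤ j → F l (τ l) ρ.1 = (res (n (l-1)) (n l) σ).1))) := by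
          intro τ hτ
          have hτm := (Finset.mem_filter.1 hτ).1
          have hagree := (Finset.mem_filter.1 hτ).2.1
          have hlev := (Finset.mem_filter.1 hτ).2.2
          have hτS : τ ∈ S := hSfin.mem_toFinset.1 hτm
          have hvH : τ s ∈ H := by
            apply Finset.mem_filter.2
            constructor
            · exact (hCFmem s _ (τ s)).2 ⟨τ, hτS, (hrpiff s τ η).2
                (fun l' h1 h2 => hagree l' h1 h2), rfl⟩
            · exact hlev s le_rfl hsj
          refine Finset.mem_biUnion.2 ⟨⟨τ s, hvH⟩, Finset.mem_attach _ _,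
            Finset.mem_filter.2 ⟨hτm, ?_, ?_⟩⟩
          · intro l h1 h2
            by_cases hls : l < s
            · rw [hagree l h1 hls]
              exact ((hrpiff s (τw (τ s) hvH) η).1 (hτwrp (τ s) hvH) l h1 hls).symm
            · have hls' : l = s := by omega
              subst hls'
              exact (hτwv _ hvH).symm
          · intro l h1 h2
            exact hlev l (by omega) h2
        calc ((hSfin.toFinset).filter (fun τ => (∀ l, i ≤ l → l < s → τ l = η l) ∧
              (∀ l, s ≤ l → l ≤ j → F l (τ l) ρ.1 = (res (n (l-1)) (n l) σ).1))).card
            ≤ ∑ x ∈ H.attach, ((hSfin.toFinset).filter (fun τ =>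
                (∀ l, i ≤ l → l < s+1 → τ l = τw x.1 x.2 l) ∧
                (∀ l, s+1 ≤ l → l ≤ j → F l (τ l) ρ.1 = (res (n (l-1)) (n l) σ).1))).card :=
              le_trans (Finset.card_le_card hsubU) Finset.card_biUnion_le
          _ ≤ ∑ _x ∈ H.attach, ∏ l ∈ Finset.Icc (s+1) j, tD n m l := by
              apply Finset.sum_le_sum
              intro x _
              exact ih (s+1) (by omega) (by omega) (τw x.1 x.2) (hτwS x.1 x.2)
          _ = H.card * ∏ l ∈ Finset.Icc (s+1) j, tD n m l := by
              rw [Finset.sum_const, Finset.card_attach, smul_eq_mul]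
          _ ≤ tD n m s * ∏ l ∈ Finset.Icc (s+1) j, tD n m l :=
              Nat.mul_le_mul_right _ hHcard
          _ = ∏ l ∈ Finset.Icc s j, tD n m l := by
              have hins : Finset.Icc s j = insert s (Finset.Icc (s+1) j) := by
                ext r; simp only [Finset.mem_Icc, Finset.mem_insert]; omega
              rw [hins, Finset.prod_insert (by simp only [Finset.mem_Icc]; omega)]
    -- counting link
    obtain ⟨η0, hη0⟩ := hSne
    -- |S| from below
    have hScard : Nat.card S = (hSfin.toFinset).card := by
      rw [Nat.card_coe_set_eq, Set.ncard_eq_toFinset_card S hSfin]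
    have hSlow : (∏ l ∈ Finset.Icc i j, m l) ≤ Nat.card S := by
      rw [hScard]
      calc (∏ l ∈ Finset.Icc i j, m l)
          ≤ ((hSfin.toFinset).filter (fun τ => ∀ l, i ≤ l → l < i → τ l = η0 l)).card :=
            TU (j + 1 - i) i (by omega) le_rfl η0 hη0
        _ ≤ (hSfin.toFinset).card := Finset.card_le_card (Finset.filter_subset _ _)
    -- product chain
    have h2d : (2:ℕ)^(n j - n (i-1)) = ∏ l ∈ Finset.Icc i j, 2^(n l - n (l-1)) := by
      rw [Finset.prod_pow_eq_pow_sum, htel j hij]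
    have hprodkey : ∀ l, (2^(n l - n (l-1)) * tD n m l) * 2^(n (l-1) + l)
        = m l * (2^(n (l-1) + l) + 1) := by
      intro l
      have hΔe : dD n m l * 2^(n (l-1) + l) = muD n m l := by
        rw [dD, muD, mul_assoc, ← pow_add,
          show 2*n l + 2*l + (n (l-1) + l) = 2*n l + n (l-1) + 3*l from by ring]
      calc (2^(n l - n (l-1)) * tD n m l) * 2^(n (l-1) + l)
          = (muD n m l * 2^(n l - n (l-1))) * 2^(n (l-1) + l)
            + (dD n m l * 2^(n (l-1) + l)) * 2^(n l - n (l-1)) := by rw [tD]; ring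
        _ = m l * 2^(n (l-1) + l) + m l := by rw [hmuexp l, hΔe, hmuexp l]
        _ = m l * (2^(n (l-1) + l) + 1) := by ring
    have hprodpos : 0 < ∏ l ∈ Finset.Icc i j, 2^(n (l-1) + l) :=
      Finset.prod_pos (fun l _ => Nat.two_pow_pos _)
    have hPIl : (∏ l ∈ Finset.Icc i j, (2^(n (l-1) + l) + 1))
        ≤ 2 * ∏ l ∈ Finset.Icc i j, 2^(n (l-1) + l) := by
      have hPIi := PI (j + 1 - i) i (by omega) le_rfl
      have h1 : (∏ l ∈ Finset.Icc i j, (2^(n (l-1) + l) + 1)) * 2^i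
          ≤ (2 * ∏ l ∈ Finset.Icc i j, 2^(n (l-1) + l)) * 2^i := by
        calc (∏ l ∈ Finset.Icc i j, (2^(n (l-1) + l) + 1)) * 2^i
            ≤ (2^i + 1) * ∏ l ∈ Finset.Icc i j, 2^(n (l-1) + l) := hPIi
          _ ≤ (2 * 2^i) * ∏ l ∈ Finset.Icc i j, 2^(n (l-1) + l) := by
              apply Nat.mul_le_mul_right
              have : 1 ≤ 2^i := Nat.one_le_two_pow
              omega
          _ = (2 * ∏ l ∈ Finset.Icc i j, 2^(n (l-1) + l)) * 2^i := by ring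
      exact Nat.le_of_mul_le_mul_right h1 (Nat.two_pow_pos _)
    have hchain : 2^(n j - n (i-1)) * (∏ l ∈ Finset.Icc i j, tD n m l)
        ≤ 2 * ∏ l ∈ Finset.Icc i j, m l := by
      have hA : 2^(n j - n (i-1)) * (∏ l ∈ Finset.Icc i j, tD n m l)
          = ∏ l ∈ Finset.Icc i j, (2^(n l - n (l-1)) * tD n m l) := by
        rw [h2d, ← Finset.prod_mul_distrib]
      have hB : (∏ l ∈ Finset.Icc i j, (2^(n l - n (l-1)) * tD n m l))
            * (∏ l ∈ Finset.Icc i j, 2^(n (l-1) + l))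
          = (∏ l ∈ Finset.Icc i j, m l)
            * (∏ l ∈ Finset.Icc i j, (2^(n (l-1) + l) + 1)) := by
        rw [← Finset.prod_mul_distrib, ← Finset.prod_mul_distrib]
        exact Finset.prod_congr rfl (fun l _ => hprodkey l)
      have hD : (∏ l ∈ Finset.Icc i j, (2^(n l - n (l-1)) * tD n m l))
            * (∏ l ∈ Finset.Icc i j, 2^(n (l-1) + l))
          ≤ (2 * ∏ l ∈ Finset.Icc i j, m l) * (∏ l ∈ Finset.Icc i j, 2^(n (l-1) + l)) := by
        rw [hB]
        calc (∏ l ∈ Finset.Icc i j, m l) * (∏ l ∈ Finset.Icc i j, (2^(n (l-1) + l) + 1))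
            ≤ (∏ l ∈ Finset.Icc i j, m l) * (2 * ∏ l ∈ Finset.Icc i j, 2^(n (l-1) + l)) :=
              Nat.mul_le_mul_left _ hPIl
          _ = (2 * ∏ l ∈ Finset.Icc i j, m l) * (∏ l ∈ Finset.Icc i j, 2^(n (l-1) + l)) := by
              ring
      rw [hA]
      exact Nat.le_of_mul_le_mul_right hD hprodpos
    have hNle : Nat.card {τ : ℕ → ℕ // τ ∈ S ∧
        (fun x => (Finset.Icc i j).sup fun r => F r (τ r) ρ.1 x) = σ}
        ≤ ∏ l ∈ Finset.Icc i j, tD n m l := by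
      set G := (hSfin.toFinset).filter (fun τ => (∀ l, i ≤ l → l < i → τ l = η0 l) ∧
        (∀ l, i ≤ l → l ≤ j → F l (τ l) ρ.1 = (res (n (l-1)) (n l) σ).1)) with hG
      have hsubset : {τ : ℕ → ℕ | τ ∈ S ∧
          (fun x => (Finset.Icc i j).sup fun r => F r (τ r) ρ.1 x) = σ} ⊆ ↑G := by
        rintro τ ⟨hτ, hsup⟩
        apply Finset.mem_coe.2
        refine Finset.mem_filter.2 ⟨hSfin.mem_toFinset.2 hτ, ?_, ?_⟩
        · intro l h1 h2
          omega
        · intro l h1 h2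
          exact hsupdec τ hτ hsup l h1 h2
      calc Nat.card {τ : ℕ → ℕ // τ ∈ S ∧
            (fun x => (Finset.Icc i j).sup fun r => F r (τ r) ρ.1 x) = σ}
          = Set.ncard {τ : ℕ → ℕ | τ ∈ S ∧
            (fun x => (Finset.Icc i j).sup fun r => F r (τ r) ρ.1 x) = σ} :=
            Nat.card_coe_set_eq _
        _ ≤ Set.ncard (↑G : Set (ℕ → ℕ)) :=
            Set.ncard_le_ncard hsubset (G.finite_toSet)
        _ = G.card := Set.ncard_coe_finset G
        _ ≤ ∏ l ∈ Finset.Icc i j, tD n m l := TD (j + 1 - i) i (by omega) le_rfl η0 hη0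
    -- conclude
    intro hlt
    have hfin : 2^(n j - n (i-1)) * Nat.card {τ : ℕ → ℕ // τ ∈ S ∧
        (fun x => (Finset.Icc i j).sup fun r => F r (τ r) ρ.1 x) = σ} ≤ 7 * Nat.card S := by
      calc 2^(n j - n (i-1)) * Nat.card {τ : ℕ → ℕ // τ ∈ S ∧
            (fun x => (Finset.Icc i j).sup fun r => F r (τ r) ρ.1 x) = σ}
          ≤ 2^(n j - n (i-1)) * (∏ l ∈ Finset.Icc i j, tD n m l) :=
            Nat.mul_le_mul_left _ hNle
        _ ≤ 2 * ∏ l ∈ Finset.Icc i j, m l := hchain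
        _ ≤ 2 * Nat.card S := Nat.mul_le_mul_left _ hSlow
        _ ≤ 7 * Nat.card S := Nat.mul_le_mul_right _ (by norm_num)
    exact absurd hlt (not_lt.2 hfin)
  -- ## final assembly
  have hgeo : ∀ N : ℕ, (∑ l ∈ Finset.range N, 2^l) = 2^N - 1 := by
    intro N
    induction N with
    | zero => simp
    | succ N ih =>
      rw [Finset.sum_range_succ, ih]
      have h1 : 1 ≤ 2^N := Nat.one_le_two_pow
      have h2 : 2^(N+1) = 2^N * 2 := pow_succ 2 N
      omega
  have hsum : (∑ l ∈ Finset.Icc i j, 2^(j - l)) ≤ 2^(j+1) - 1 := by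
    calc (∑ l ∈ Finset.Icc i j, 2^(j - l))
        ≤ ∑ l ∈ Finset.Icc 0 j, 2^(j - l) :=
          Finset.sum_le_sum_of_subset (Finset.Icc_subset_Icc (Nat.zero_le i) le_rfl)
      _ = ∑ l ∈ Finset.range (j+1), 2^(j - l) := by
          congr 1
          ext r
          simp only [Finset.mem_Icc, Finset.mem_range]
          omega
      _ = ∑ l ∈ Finset.range (j+1), 2^l := by
          simpa using Finset.sum_range_reflect (fun l => 2^l) (j+1)
      _ = 2^(j+1) - 1 := hgeo (j+1)
  have hlev2 : ∀ l, i ≤ l → l ≤ j →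
      2^(l+2) * (Finset.univ.filter (fun ρ : BS (n i) (n (j+1)) =>
        ∃ η ∈ S, ∃ s : BS (n (l-1)) (n l),
          tD n m l < (((hfinC l (rp i l η)).toFinset).filter
            (fun v => F l v (res (n l) (n (l+1)) ρ.1).1 = s.1)).card)).card
      ≤ 2 ^ (n (j+1) - n i) := by
    intro l hil hlj
    rw [mul_comm]
    calc (Finset.univ.filter (fun ρ : BS (n i) (n (j+1)) =>
          ∃ η ∈ S, ∃ s : BS (n (l-1)) (n l),
            tD n m l < (((hfinC l (rp i l η)).toFinset).filter
              (fun v => F l v (res (n l) (n (l+1)) ρ.1).1 = s.1)).card)).card * 2^(l+2)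
        ≤ (Finset.univ.filter (fun ρ : BS (n i) (n (j+1)) =>
          ∃ η ∈ S, ∃ s : BS (n (l-1)) (n l),
            tD n m l < (((hfinC l (rp i l η)).toFinset).filter
              (fun v => F l v (res (n l) (n (l+1)) ρ.1).1 = s.1)).card)).card * 2^(n l + l) :=
          Nat.mul_le_mul_left _ (Nat.pow_le_pow_right (by norm_num)
            (by have := hn2 l; omega))
      _ ≤ 2 ^ (n (j+1) - n i) := hbadlevel l hil hlj
  have hps : ∀ l, i ≤ l → l ≤ j → (2:ℕ)^(j+2) = 2^(j-l) * 2^(l+2) := by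
    intro l hil hlj
    rw [← pow_add]
    congr 1
    omega
  have h5 : 2 * ((2^(j+1) - 1) * 2 ^ (n (j+1) - n i))
      = (2^(j+2) - 2) * 2 ^ (n (j+1) - n i) := by
    have h6 : (2:ℕ)^(j+2) = 2^(j+1) * 2 := pow_succ 2 (j+1)
    have h7 : 1 ≤ (2:ℕ)^(j+1) := Nat.one_le_two_pow
    obtain ⟨c, hc⟩ := Nat.exists_eq_add_of_le h7
    rw [hc] at h6 ⊢
    rw [h6, show 1 + c - 1 = c from by omega, show (1+c)*2 - 2 = 2*c from by omega]
    ring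
  have h8 : (2:ℕ)^(j+2) - 2 < 2^(j+2) := by
    have := Nat.two_pow_pos (j+2)
    omega
  -- big set identification
  have hcardBad : Nat.card {ρ : ℕ → Bool //
      (∀ x ∉ Set.Ico (n i) (n (j + 1)), ρ x = false) ∧
      ∃ σ : ℕ → Bool, (∀ x ∉ Set.Ico (n (i - 1)) (n j), σ x = false) ∧
        7 * Nat.card S <
          2 ^ (n j - n (i - 1)) *
            Nat.card {τ : ℕ → ℕ // τ ∈ S ∧
              (fun x => (Finset.Icc i j).sup fun r => F r (τ r) ρ x) = σ}}
      = (Finset.univ.filter (fun ρ : BS (n i) (n (j+1)) =>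
          ∃ σ : ℕ → Bool, (∀ x ∉ Set.Ico (n (i - 1)) (n j), σ x = false) ∧
            7 * Nat.card S <
              2 ^ (n j - n (i - 1)) *
                Nat.card {τ : ℕ → ℕ // τ ∈ S ∧
                  (fun x => (Finset.Icc i j).sup fun r => F r (τ r) ρ.1 x) = σ})).card := by
    rw [Nat.card_congr (flat (n i) (n (j+1)) (fun ρf =>
      ∃ σ : ℕ → Bool, (∀ x ∉ Set.Ico (n (i - 1)) (n j), σ x = false) ∧
        7 * Nat.card S <
          2 ^ (n j - n (i - 1)) *
            Nat.card {τ : ℕ → ℕ // τ ∈ S ∧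
              (fun x => (Finset.Icc i j).sup fun r => F r (τ r) ρf x) = σ})),
      Nat.card_eq_fintype_card, Fintype.card_subtype]
  have hcover : (Finset.univ.filter (fun ρ : BS (n i) (n (j+1)) =>
        ∃ σ : ℕ → Bool, (∀ x ∉ Set.Ico (n (i - 1)) (n j), σ x = false) ∧
          7 * Nat.card S <
            2 ^ (n j - n (i - 1)) *
              Nat.card {τ : ℕ → ℕ // τ ∈ S ∧
                (fun x => (Finset.Icc i j).sup fun r => F r (τ r) ρ.1 x) = σ}))
      ⊆ (Finset.Icc i j).biUnion (fun l => Finset.univ.filter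
          (fun ρ : BS (n i) (n (j+1)) => ∃ η ∈ S, ∃ s : BS (n (l-1)) (n l),
            tD n m l < (((hfinC l (rp i l η)).toFinset).filter
              (fun v => F l v (res (n l) (n (l+1)) ρ.1).1 = s.1)).card)) := by
    intro ρ hρ
    obtain ⟨σ, hσ, hlt⟩ := (Finset.mem_filter.1 hρ).2
    by_contra hno
    have hgd : ∀ l, i ≤ l → l ≤ j → ¬ (∃ η ∈ S, ∃ s : BS (n (l-1)) (n l),
        tD n m l < (((hfinC l (rp i l η)).toFinset).filter
          (fun v => F l v (res (n l) (n (l+1)) ρ.1).1 = s.1)).card) := by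
      intro l hil hlj hex
      exact hno (Finset.mem_biUnion.2 ⟨l, Finset.mem_Icc.2 ⟨hil, hlj⟩,
        Finset.mem_filter.2 ⟨Finset.mem_univ ρ, hex⟩⟩)
    exact hgood ρ hgd σ hσ hlt
  rw [hcardBad]
  have h1 : (Finset.univ.filter (fun ρ : BS (n i) (n (j+1)) =>
        ∃ σ : ℕ → Bool, (∀ x ∉ Set.Ico (n (i - 1)) (n j), σ x = false) ∧
          7 * Nat.card S <
            2 ^ (n j - n (i - 1)) *
              Nat.card {τ : ℕ → ℕ // τ ∈ S ∧
                (fun x => (Finset.Icc i j).sup fun r => F r (τ r) ρ.1 x) = σ})).card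
      ≤ ∑ l ∈ Finset.Icc i j, (Finset.univ.filter
          (fun ρ : BS (n i) (n (j+1)) => ∃ η ∈ S, ∃ s : BS (n (l-1)) (n l),
            tD n m l < (((hfinC l (rp i l η)).toFinset).filter
              (fun v => F l v (res (n l) (n (l+1)) ρ.1).1 = s.1)).card)).card :=
    le_trans (Finset.card_le_card hcover) Finset.card_biUnion_le
  have h2 : 2^(j+2) * (Finset.univ.filter (fun ρ : BS (n i) (n (j+1)) =>
        ∃ σ : ℕ → Bool, (∀ x ∉ Set.Ico (n (i - 1)) (n j), σ x = false) ∧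
          7 * Nat.card S <
            2 ^ (n j - n (i - 1)) *
              Nat.card {τ : ℕ → ℕ // τ ∈ S ∧
                (fun x => (Finset.Icc i j).sup fun r => F r (τ r) ρ.1 x) = σ})).card
      ≤ (2^(j+1) - 1) * 2 ^ (n (j+1) - n i) := by
    calc 2^(j+2) * (Finset.univ.filter (fun ρ : BS (n i) (n (j+1)) =>
          ∃ σ : ℕ → Bool, (∀ x ∉ Set.Ico (n (i - 1)) (n j), σ x = false) ∧
            7 * Nat.card S <
              2 ^ (n j - n (i - 1)) *
                Nat.card {τ : ℕ → ℕ // τ ∈ S ∧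
                  (fun x => (Finset.Icc i j).sup fun r => F r (τ r) ρ.1 x) = σ})).card
        ≤ 2^(j+2) * ∑ l ∈ Finset.Icc i j, (Finset.univ.filter
            (fun ρ : BS (n i) (n (j+1)) => ∃ η ∈ S, ∃ s : BS (n (l-1)) (n l),
              tD n m l < (((hfinC l (rp i l η)).toFinset).filter
                (fun v => F l v (res (n l) (n (l+1)) ρ.1).1 = s.1)).card)).card :=
          Nat.mul_le_mul_left _ h1
      _ = ∑ l ∈ Finset.Icc i j, 2^(j+2) * (Finset.univ.filter
            (fun ρ : BS (n i) (n (j+1)) => ∃ η ∈ S, ∃ s : BS (n (l-1)) (n l),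
              tD n m l < (((hfinC l (rp i l η)).toFinset).filter
                (fun v => F l v (res (n l) (n (l+1)) ρ.1).1 = s.1)).card)).card :=
          Finset.mul_sum _ _ _
      _ ≤ ∑ l ∈ Finset.Icc i j, 2^(j-l) * 2 ^ (n (j+1) - n i) := by
          apply Finset.sum_le_sum
          intro l hl
          have hlm : i ≤ l ∧ l ≤ j := by simpa [Finset.mem_Icc] using hl
          rw [hps l hlm.1 hlm.2, mul_assoc]
          exact Nat.mul_le_mul_left _ (hlev2 l hlm.1 hlm.2)
      _ = (∑ l ∈ Finset.Icc i j, 2^(j-l)) * 2 ^ (n (j+1) - n i) := by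
          rw [Finset.sum_mul]
      _ ≤ (2^(j+1) - 1) * 2 ^ (n (j+1) - n i) :=
          Nat.mul_le_mul_right _ hsum
  have h3 : 2^(j+2) * (2 * (Finset.univ.filter (fun ρ : BS (n i) (n (j+1)) =>
        ∃ σ : ℕ → Bool, (∀ x ∉ Set.Ico (n (i - 1)) (n j), σ x = false) ∧
          7 * Nat.card S <
            2 ^ (n j - n (i - 1)) *
              Nat.card {τ : ℕ → ℕ // τ ∈ S ∧
                (fun x => (Finset.Icc i j).sup fun r => F r (τ r) ρ.1 x) = σ})).card)
      < 2^(j+2) * 2 ^ (n (j+1) - n i) := by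
    have h4 : 2^(j+2) * (2 * (Finset.univ.filter (fun ρ : BS (n i) (n (j+1)) =>
        ∃ σ : ℕ → Bool, (∀ x ∉ Set.Ico (n (i - 1)) (n j), σ x = false) ∧
          7 * Nat.card S <
            2 ^ (n j - n (i - 1)) *
              Nat.card {τ : ℕ → ℕ // τ ∈ S ∧
                (fun x => (Finset.Icc i j).sup fun r => F r (τ r) ρ.1 x) = σ})).card)
        ≤ 2 * ((2^(j+1) - 1) * 2 ^ (n (j+1) - n i)) := by
      calc 2^(j+2) * (2 * (Finset.univ.filter (fun ρ : BS (n i) (n (j+1)) =>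
            ∃ σ : ℕ → Bool, (∀ x ∉ Set.Ico (n (i - 1)) (n j), σ x = false) ∧
              7 * Nat.card S <
                2 ^ (n j - n (i - 1)) *
                  Nat.card {τ : ℕ → ℕ // τ ∈ S ∧
                    (fun x => (Finset.Icc i j).sup fun r => F r (τ r) ρ.1 x) = σ})).card)
          = 2 * (2^(j+2) * (Finset.univ.filter (fun ρ : BS (n i) (n (j+1)) =>
            ∃ σ : ℕ → Bool, (∀ x ∉ Set.Ico (n (i - 1)) (n j), σ x = false) ∧
              7 * Nat.card S <
                2 ^ (n j - n (i - 1)) *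
                  Nat.card {τ : ℕ → ℕ // τ ∈ S ∧
                    (fun x => (Finset.Icc i j).sup fun r => F r (τ r) ρ.1 x) = σ})).card) := by
            ring
        _ ≤ 2 * ((2^(j+1) - 1) * 2 ^ (n (j+1) - n i)) := Nat.mul_le_mul_left _ h2
    apply lt_of_le_of_lt h4
    rw [h5]
    exact Nat.mul_lt_mul_of_lt_of_le h8 le_rfl (Nat.two_pow_pos _)
  exact Nat.lt_of_mul_lt_mul_left h3
end

section
/- Let f : ω → ω satisfy f(n) ≥ 2 for all n and Σ_n 1/f(n) < ∞. Equip X = ∏_n ℤ/f(n)ℤ with coordinatewise addition and with the product of the uniform probability measures on the factors. Then the set G = {x ∈ X : x(n) = 0 for infinitely many n} has measure zero, and for every F ⊆ X such that for each η ∈ X there is x ∈ F with x(n) = η(n) for infinitely many n, one has F + G = X. (In particular, a family F witnessing 𝔡(R^∃_f) can be translated by a single null set to cover X, so F is not strongly meager in X.) -/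
open MeasureTheory Set Filter

/-- The space `X = ∏_n ℤ/f(n)ℤ` is coded as `{x : ℕ → ℕ | ∀ n, x n < f n}`
with coordinatewise addition modulo `f n`, and `μ` is the product of the uniform probability
measures on the factors, characterized by its values on cylinders.  If `f n ≥ 2` and
`Σ_n 1/f(n) < ∞`, then `G = {x ∈ X : x n = 0 for infinitely many n}` is `μ`-null, and for
every `F ⊆ X` such that every `η ∈ X` agrees infinitely often with some member of `F`,
one has `F + G = X`. -/
theorem null_G_and_F_add_G_eq_X
    (f : ℕ → ℕ) (hf : ∀ n, 2 ≤ f n)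
    (hsum : Summable fun n => (1 : ℝ) / f n)
    (μ : Measure (ℕ → ℕ))
    (hcyl : ∀ (s : Finset ℕ) (a : ℕ → ℕ), (∀ k ∈ s, a k < f k) →
      μ {x | (∀ n, x n < f n) ∧ ∀ k ∈ s, x k = a k} = ∏ k ∈ s, (f k : ENNReal)⁻¹)
    (F : Set (ℕ → ℕ)) (hF : ∀ x ∈ F, ∀ n, x n < f n)
    (hdom : ∀ η : ℕ → ℕ, (∀ n, η n < f n) → ∃ x ∈ F, {n | x n = η n}.Infinite) :
    μ {x | (∀ n, x n < f n) ∧ {n | x n = 0}.Infinite} = 0 ∧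
    {z : ℕ → ℕ | ∃ x ∈ F, ∃ y : ℕ → ℕ, ((∀ n, y n < f n) ∧ {n | y n = 0}.Infinite) ∧
      ∀ n, z n = (x n + y n) % f n} = {x : ℕ → ℕ | ∀ n, x n < f n} := by
  have hfpos : ∀ n, 0 < f n := fun n => lt_of_lt_of_le (by norm_num) (hf n)
  constructor
  · -- measure zero part
    have hsingle : ∀ k, μ {x | (∀ n, x n < f n) ∧ x k = 0} = (f k : ENNReal)⁻¹ := by
      intro k
      have := hcyl {k} (fun _ => 0) (by intro j hj; exact hfpos j)
      simpa using this
    -- the ENNReal sum is finite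
    have htop : ∑' k, (f k : ENNReal)⁻¹ ≠ ⊤ := by
      have heq : ∀ k, (f k : ENNReal)⁻¹ = ENNReal.ofReal ((1 : ℝ) / f k) := by
        intro k
        rw [one_div, ← ENNReal.ofReal_natCast (f k),
          ← ENNReal.ofReal_inv_of_pos (by exact_mod_cast hfpos k)]
      simp_rw [heq]
      rw [← ENNReal.ofReal_tsum_of_nonneg (fun n => by positivity) hsum]
      exact ENNReal.ofReal_ne_top
    have htend := ENNReal.tendsto_tsum_compl_atTop_zero (f := fun k => (f k : ENNReal)⁻¹) htop
    refine le_antisymm ?_ (zero_le (a := _))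
    refine ge_of_tendsto htend (Filter.Eventually.of_forall fun s => ?_)
    -- G is covered by the union of A_k for k ∉ s
    have hsub : {x : ℕ → ℕ | (∀ n, x n < f n) ∧ {n | x n = 0}.Infinite} ⊆
        ⋃ k : {k : ℕ // k ∉ s}, {x | (∀ n, x n < f n) ∧ x (k : ℕ) = 0} := by
      rintro x ⟨hx, hinf⟩
      obtain ⟨k, hk, hks⟩ := hinf.exists_notMem_finset s
      exact Set.mem_iUnion.2 ⟨⟨k, hks⟩, hx, hk⟩
    calc μ {x : ℕ → ℕ | (∀ n, x n < f n) ∧ {n | x n = 0}.Infinite}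
        ≤ μ (⋃ k : {k : ℕ // k ∉ s}, {x | (∀ n, x n < f n) ∧ x (k : ℕ) = 0}) :=
          measure_mono hsub
      _ ≤ ∑' k : {k : ℕ // k ∉ s}, μ {x | (∀ n, x n < f n) ∧ x (k : ℕ) = 0} :=
          measure_iUnion_le _
      _ = ∑' k : {k : ℕ // k ∉ s}, (f (k : ℕ) : ENNReal)⁻¹ := by
          simp_rw [hsingle]
  · -- translation part
    ext z
    constructor
    · rintro ⟨x, hxF, y, ⟨hy, _⟩, hz⟩
      intro n
      rw [hz n]
      exact Nat.mod_lt _ (hfpos n)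
    · intro hz
      obtain ⟨x, hxF, hinf⟩ := hdom z hz
      refine ⟨x, hxF, fun n => (z n + f n - x n) % f n, ⟨⟨fun n => Nat.mod_lt _ (hfpos n), ?_⟩, ?_⟩⟩
      · refine hinf.mono ?_
        intro n hn
        simp only [Set.mem_setOf_eq] at hn ⊢
        have : z n + f n - x n = f n := by omega
        rw [this, Nat.mod_self]
      · intro n
        have hx := hF x hxF n
        have h1 : x n + (z n + f n - x n) = z n + f n := by omega
        rw [Nat.add_mod_mod, h1, Nat.add_mod_right, Nat.mod_eq_of_lt (hz n)]
end
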